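/- arXiv:2004.12871 — 9 statements merged into one kernel-verified Lean document; each statement's English description precedes it below -/
import Mathlib

section
/- For all integers L ≥ 3, s ≥ 1, r ≥ 0 and k₁ > k₂ ≥ 1, the formal power series H*(q) = (q^r(1 − q^{k₁}) − (1 − q^{k₂})) / (q^s;q)_{L+1} in ℤ[[q]] is eventually positive; that is, there exists an integer M ≥ 0 such that the coefficient of q^n in H*(q) is positive for all n > M. -/
/-!
Write the numerator as `(1 - q) N(q)` with `N(1) = k₁ - k₂ > 0`, and let
`G = ∏_{i=2}^{L} 1/(1 - q^{s+i})`. Counting representations `n = s a + (s+1) b` shows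
`s(s+1)/((1 - q^s)(1 - q^{s+1})) = 1/(1 - q)² + E` with `E` of bounded coefficients, so
`s(s+1) H = N(q) G/(1 - q) + N(q) E (1 - q) G`.
The coefficients of `G/(1 - q)` grow like `n^{L-1}`. Everything else is `O(n^{L-2})`: `G` has only
`L - 1` factors, replacing `N(q)` by `N(1)` costs a polynomial multiple of `(1 - q)`, and
`(1 - q) G` is again a bounded series times `L - 3` factors, by the same count for `s + 2, s + 3`.
-/

open PowerSeries Finset
open scoped Polynomial

namespace QSeries

noncomputable def invOneSubXPow (a : ℕ) : ℤ⟦X⟧ :=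
  mk fun n => if a ∣ n then 1 else 0

theorem coeff_invOneSubXPow (a n : ℕ) :
    coeff n (invOneSubXPow a) = if a ∣ n then 1 else 0 :=
  coeff_mk _ _

theorem one_sub_X_pow_mul_invOneSubXPow {a : ℕ} (ha : 0 < a) :
    (1 - X ^ a) * invOneSubXPow a = 1 := by
  ext n
  rw [sub_mul, one_mul, map_sub, coeff_X_pow_mul', coeff_one, coeff_invOneSubXPow]
  by_cases han : a ≤ n
  · simp only [if_pos han, coeff_invOneSubXPow, Nat.dvd_sub_iff_left han dvd_rfl, sub_self]
    rw [if_neg (by omega)]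
  · rw [if_neg han, sub_zero]
    rcases n.eq_zero_or_pos with rfl | hn
    · simp
    · rw [if_neg (fun h => han (Nat.le_of_dvd hn h)), if_neg hn.ne']

theorem coeff_invOneSubXPow_mul {a : ℕ} (ha : 0 < a) (F : ℤ⟦X⟧) (n : ℕ) :
    coeff n (invOneSubXPow a * F) = ∑ t ∈ range (n / a + 1), coeff (n - a * t) F := by
  have himage : (range (n / a + 1)).image (a * ·) = (range (n + 1)).filter (a ∣ ·) := by
    ext i
    simp only [mem_image, mem_filter, mem_range, Nat.lt_succ_iff, Nat.le_div_iff_mul_le ha]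
    constructor
    · rintro ⟨t, ht, rfl⟩
      exact ⟨by linarith, dvd_mul_right a t⟩
    · rintro ⟨hi, t, rfl⟩
      exact ⟨t, by linarith, rfl⟩
  rw [coeff_mul, Nat.sum_antidiagonal_eq_sum_range_succ_mk,
    ← sum_image (fun _ _ _ _ h => Nat.eq_of_mul_eq_mul_left ha h) (f := fun i => coeff (n - i) F),
    himage, sum_filter]
  simp only [coeff_invOneSubXPow, ite_mul, one_mul, zero_mul]

theorem prod_invOneSubXPow_range_add_two (a m : ℕ) :
    ∏ i ∈ range (m + 2), invOneSubXPow (a + i) =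
      invOneSubXPow a * invOneSubXPow (a + 1) * ∏ i ∈ range m, invOneSubXPow (a + 2 + i) := by
  rw [prod_range_succ', prod_range_succ']
  ring_nf

theorem eq_mul_prod_invOneSubXPow {ι : Type*} {t : Finset ι} {f : ι → ℕ} (hf : ∀ i ∈ t, 0 < f i)
    {H N : ℤ⟦X⟧} (h : H * ∏ i ∈ t, (1 - X ^ f i) = N) :
    H = N * ∏ i ∈ t, invOneSubXPow (f i) := by
  rw [← h, mul_assoc, ← prod_mul_distrib,
    prod_eq_one fun i hi => one_sub_X_pow_mul_invOneSubXPow (hf i hi), mul_one]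

theorem one_sub_X_mul_invOneSubXPow_one : (1 - X) * invOneSubXPow 1 = 1 := by
  simpa using one_sub_X_pow_mul_invOneSubXPow one_pos

theorem coeff_invOneSubXPow_nonneg (a n : ℕ) : 0 ≤ coeff n (invOneSubXPow a) := by
  rw [coeff_invOneSubXPow]; split_ifs <;> norm_num

theorem coeff_mul_nonneg {F G : ℤ⟦X⟧} (hF : ∀ n, 0 ≤ coeff n F)
    (hG : ∀ n, 0 ≤ coeff n G) (n : ℕ) : 0 ≤ coeff n (F * G) := by
  rw [coeff_mul]
  exact sum_nonneg fun p _ => mul_nonneg (hF _) (hG _)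

theorem coeff_prod_invOneSubXPow_nonneg {ι : Type*} (t : Finset ι) (f : ι → ℕ) (n : ℕ) :
    0 ≤ coeff n (∏ i ∈ t, invOneSubXPow (f i)) := by
  revert n
  refine prod_induction _ (fun F => ∀ n, 0 ≤ coeff n F) (fun F G => coeff_mul_nonneg)
    (fun n => ?_) (fun i _ => coeff_invOneSubXPow_nonneg _)
  rw [coeff_one]; split_ifs <;> norm_num

def CoeffIsBigO (F : ℤ⟦X⟧) (d : ℕ) : Prop :=
  ∃ K : ℤ, ∀ n : ℕ, |coeff n F| ≤ K * ((n : ℤ) + 1) ^ d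

theorem coeffIsBigO_invOneSubXPow (a : ℕ) : CoeffIsBigO (invOneSubXPow a) 0 :=
  ⟨1, fun n => by rw [coeff_invOneSubXPow]; split_ifs <;> simp⟩

namespace CoeffIsBigO

variable {F G : ℤ⟦X⟧} {d e : ℕ}

theorem const_nonneg {K : ℤ} (h : ∀ n : ℕ, |coeff n F| ≤ K * ((n : ℤ) + 1) ^ d) : 0 ≤ K := by
  simpa using (abs_nonneg _).trans (h 0)

theorem add (hF : CoeffIsBigO F d) (hG : CoeffIsBigO G d) : CoeffIsBigO (F + G) d := by
  obtain ⟨K₁, h₁⟩ := hF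
  obtain ⟨K₂, h₂⟩ := hG
  refine ⟨K₁ + K₂, fun n => ?_⟩
  rw [map_add, add_mul]
  exact (abs_add_le _ _).trans (add_le_add (h₁ n) (h₂ n))

theorem monomial_mul (hF : CoeffIsBigO F d) (i : ℕ) (c : ℤ) :
    CoeffIsBigO (monomial i c * F) d := by
  obtain ⟨K, h⟩ := hF
  refine ⟨|c| * K, fun n => ?_⟩
  have hmon : monomial i c = C c * X ^ i := by
    ext m; rw [coeff_C_mul_X_pow, coeff_monomial]
  rw [hmon, mul_assoc, coeff_C_mul, coeff_X_pow_mul', abs_mul, mul_assoc]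
  gcongr
  split_ifs with hi
  · calc |coeff (n - i) F| ≤ K * (((n - i : ℕ) : ℤ) + 1) ^ d := h _
      _ ≤ K * ((n : ℤ) + 1) ^ d := by
        have := const_nonneg h
        gcongr
        exact_mod_cast Nat.sub_le n i
  · simpa using mul_nonneg (const_nonneg h) (by positivity : (0 : ℤ) ≤ ((n : ℤ) + 1) ^ d)

theorem coe_mul (hF : CoeffIsBigO F d) (p : ℤ[X]) : CoeffIsBigO (p * F) d := by
  induction p using Polynomial.induction_on' with
  | add p q hp hq => rw [Polynomial.coe_add, add_mul]; exact hp.add hq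
  | monomial i c => rw [Polynomial.coe_monomial]; exact hF.monomial_mul i c

theorem mul (hF : CoeffIsBigO F d) (hG : CoeffIsBigO G e) : CoeffIsBigO (F * G) (d + e + 1) := by
  obtain ⟨K₁, h₁⟩ := hF
  obtain ⟨K₂, h₂⟩ := hG
  have hK₁ := const_nonneg h₁
  have hK₂ := const_nonneg h₂
  refine ⟨K₁ * K₂, fun n => ?_⟩
  have hterm : ∀ p ∈ antidiagonal n,
      |coeff p.1 F * coeff p.2 G| ≤ K₁ * K₂ * ((n : ℤ) + 1) ^ (d + e) := fun p hp => by
    have hp12 := mem_antidiagonal.1 hp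
    have hp1 : (p.1 : ℤ) ≤ n := by omega
    have hp2 : (p.2 : ℤ) ≤ n := by omega
    calc |coeff p.1 F * coeff p.2 G|
        ≤ (K₁ * ((p.1 : ℤ) + 1) ^ d) * (K₂ * ((p.2 : ℤ) + 1) ^ e) := by
          rw [abs_mul]; exact mul_le_mul (h₁ _) (h₂ _) (abs_nonneg _) (by positivity)
      _ ≤ (K₁ * ((n : ℤ) + 1) ^ d) * (K₂ * ((n : ℤ) + 1) ^ e) := by gcongr
      _ = K₁ * K₂ * ((n : ℤ) + 1) ^ (d + e) := by ring
  rw [coeff_mul]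
  calc |∑ p ∈ antidiagonal n, coeff p.1 F * coeff p.2 G|
      ≤ ∑ p ∈ antidiagonal n, |coeff p.1 F * coeff p.2 G| := abs_sum_le_sum_abs _ _
    _ ≤ ∑ _p ∈ antidiagonal n, K₁ * K₂ * ((n : ℤ) + 1) ^ (d + e) := sum_le_sum hterm
    _ = K₁ * K₂ * ((n : ℤ) + 1) ^ (d + e + 1) := by
      rw [sum_const, Nat.card_antidiagonal, nsmul_eq_mul]; push_cast; ring

theorem mul_prod_invOneSubXPow (hF : CoeffIsBigO F d) {ι : Type*} (t : Finset ι) (f : ι → ℕ) :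
    CoeffIsBigO (F * ∏ i ∈ t, invOneSubXPow (f i)) (d + #t) := by
  classical
  induction t using Finset.induction_on with
  | empty => simpa using hF
  | insert j t hj ih =>
    rw [prod_insert hj, mul_left_comm, mul_comm, card_insert_of_notMem hj]
    exact ih.mul (coeffIsBigO_invOneSubXPow _)

theorem of_C_mul {c : ℤ} (hc : c ≠ 0) (h : CoeffIsBigO (C c * F) d) :
    CoeffIsBigO F d := by
  obtain ⟨K, hK⟩ := h
  refine ⟨K, fun n => le_trans ?_ (hK n)⟩
  rw [coeff_C_mul, abs_mul]
  exact le_mul_of_one_le_left (abs_nonneg _) (Int.one_le_abs hc)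

theorem coe_mul_sub_C_eval_mul (h : CoeffIsBigO ((1 - X) * F) d) (p : ℤ[X]) :
    CoeffIsBigO (p * F - C (p.eval 1) * F) d := by
  obtain ⟨q, hq⟩ := Polynomial.X_sub_C_dvd_sub_C_eval (a := (1 : ℤ)) (p := p)
  have hq' := congrArg (fun p : ℤ[X] => (p : ℤ⟦X⟧)) hq
  simp only [Polynomial.coe_sub, Polynomial.coe_mul, Polynomial.coe_X, Polynomial.coe_C,
    map_one, Polynomial.coe_one] at hq'
  have : (p : ℤ⟦X⟧) * F - C (p.eval 1) * F
      = ((-q : ℤ[X]) : ℤ⟦X⟧) * ((1 - X) * F) := by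
    rw [Polynomial.coe_neg, ← sub_mul, hq']; ring
  rw [this]
  exact h.coe_mul _

end CoeffIsBigO

/-- Writing `n = (a + 1) t + a b`, the coefficient counts the `t ≤ n / (a + 1)` with
`t ≡ n [MOD a]`. -/
theorem coeff_invOneSubXPow_mul_succ {a : ℕ} (ha : 0 < a) (n : ℕ) :
    coeff n (invOneSubXPow a * invOneSubXPow (a + 1)) =
      ((n / (a + 1) + 1) / a + if n % a < (n / (a + 1) + 1) % a then 1 else 0 : ℕ) := by
  rw [mul_comm, coeff_invOneSubXPow_mul a.succ_pos, ← Nat.count_modEq_card _ ha,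
    Nat.count_eq_card_filter_range, card_eq_sum_ones, Nat.cast_sum, sum_filter]
  refine sum_congr rfl fun t ht => ?_
  have hle : (a + 1) * t ≤ n := by
    rw [mem_range, Nat.lt_succ_iff, Nat.le_div_iff_mul_le a.succ_pos] at ht
    linarith
  have hmod : (a + 1) * t ≡ t [MOD a] := by
    simp [Nat.ModEq, add_mul, Nat.add_mod]
  have hiff : a ∣ n - (a + 1) * t ↔ t ≡ n [MOD a] :=
    (Nat.modEq_iff_dvd' hle).symm.trans ⟨hmod.symm.trans, hmod.trans⟩
  simp only [coeff_invOneSubXPow, Nat.succ_eq_add_one, hiff, Nat.cast_one]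

theorem coeff_invOneSubXPow_one_mul_self (n : ℕ) :
    coeff n (invOneSubXPow 1 * invOneSubXPow 1) = n + 1 := by
  simp [coeff_invOneSubXPow_mul one_pos, coeff_invOneSubXPow]

theorem coeffIsBigO_C_mul_invOneSubXPow_mul_succ_sub {a : ℕ} (ha : 0 < a) :
    CoeffIsBigO (C ((a : ℤ) * (a + 1)) * (invOneSubXPow a * invOneSubXPow (a + 1))
      - invOneSubXPow 1 * invOneSubXPow 1) 0 := by
  refine ⟨(a + 1) ^ 2, fun n => ?_⟩
  rw [map_sub, coeff_C_mul, coeff_invOneSubXPow_mul_succ ha, coeff_invOneSubXPow_one_mul_self,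
    pow_zero, mul_one]
  have hu := Nat.div_add_mod (n / (a + 1) + 1) a
  have hu' := Nat.mod_lt (n / (a + 1) + 1) ha
  have hn := Nat.div_add_mod n (a + 1)
  have hn' := Nat.mod_lt n a.succ_pos
  set Q := (n / (a + 1) + 1) / a
  set R := (n / (a + 1) + 1) % a
  set T := n / (a + 1)
  set R' := n % (a + 1)
  rw [abs_le]
  have hQ : (a : ℤ) * Q + R = T + 1 := by exact_mod_cast hu
  have hT : ((a : ℤ) + 1) * T + R' = n := by exact_mod_cast hn
  have hR : (R : ℤ) < a := by exact_mod_cast hu'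
  have hR' : (R' : ℤ) < a + 1 := by exact_mod_cast hn'
  split_ifs <;> push_cast <;> constructor <;> nlinarith

theorem coeffIsBigO_one_sub_X_mul_invOneSubXPow_mul_succ {a : ℕ} (ha : 0 < a) :
    CoeffIsBigO ((1 - X) * (invOneSubXPow a * invOneSubXPow (a + 1))) 0 := by
  refine CoeffIsBigO.of_C_mul (c := (a : ℤ) * (a + 1)) (by positivity) ?_
  have h : C ((a : ℤ) * (a + 1)) * ((1 - X) * (invOneSubXPow a * invOneSubXPow (a + 1)))
      = ((1 - Polynomial.X : ℤ[X]) : ℤ⟦X⟧) *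
          (C ((a : ℤ) * (a + 1)) * (invOneSubXPow a * invOneSubXPow (a + 1))
            - invOneSubXPow 1 * invOneSubXPow 1) + invOneSubXPow 1 := by
    rw [Polynomial.coe_sub, Polynomial.coe_one, Polynomial.coe_X]
    linear_combination invOneSubXPow 1 * one_sub_X_mul_invOneSubXPow_one
  rw [h]
  exact ((coeffIsBigO_C_mul_invOneSubXPow_mul_succ_sub ha).coe_mul _).add
    (coeffIsBigO_invOneSubXPow 1)

theorem coeffIsBigO_prod_range_invOneSubXPow (a m : ℕ) :
    CoeffIsBigO (∏ i ∈ range (m + 2), invOneSubXPow (a + i)) (m + 1) := by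
  simpa [prod_invOneSubXPow_range_add_two, add_comm] using
    ((coeffIsBigO_invOneSubXPow a).mul (coeffIsBigO_invOneSubXPow (a + 1))).mul_prod_invOneSubXPow
      (range m) (fun i => a + 2 + i)

theorem coeffIsBigO_one_sub_X_mul_prod_range_invOneSubXPow {a : ℕ} (ha : 0 < a) (m : ℕ) :
    CoeffIsBigO ((1 - X) * ∏ i ∈ range (m + 2), invOneSubXPow (a + i)) m := by
  simpa [prod_invOneSubXPow_range_add_two, mul_assoc] using
    (coeffIsBigO_one_sub_X_mul_invOneSubXPow_mul_succ ha).mul_prod_invOneSubXPow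
      (range m) (fun i => a + 2 + i)

theorem pow_succ_le_mul_coeff_invOneSubXPow_mul {a m : ℕ} {B : ℤ} {F : ℤ⟦X⟧}
    (ha : 0 < a) (hF₀ : ∀ n, 0 ≤ coeff n F) (hF : ∀ n : ℕ, (n : ℤ) ^ m ≤ B * coeff n F)
    (n : ℕ) : (n : ℤ) ^ (m + 1) ≤ 2 ^ (m + 1) * a * B * coeff n (invOneSubXPow a * F) := by
  have hB : 0 ≤ B := by
    have h1 := hF 1
    rw [Nat.cast_one, one_pow] at h1
    nlinarith [hF₀ 1]
  set T := n / (2 * a)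
  have hT : n < 2 * a * (T + 1) := Nat.lt_mul_div_succ n (by omega)
  have hTn : 2 * a * T ≤ n := Nat.mul_div_le n (2 * a)
  have hterm : ∀ t ∈ range (T + 1), (n : ℤ) ^ m ≤ 2 ^ m * B * coeff (n - a * t) F := by
    intro t ht
    have ht' : 2 * a * t ≤ 2 * a * T := Nat.mul_le_mul_left _ (Nat.lt_succ_iff.1 (mem_range.1 ht))
    have h2 : n ≤ 2 * (n - a * t) := by
      rw [Nat.mul_sub, ← mul_assoc]; omega
    calc (n : ℤ) ^ m ≤ (2 * ((n - a * t : ℕ) : ℤ)) ^ m := by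
          gcongr; exact_mod_cast h2
      _ = 2 ^ m * ((n - a * t : ℕ) : ℤ) ^ m := mul_pow _ _ _
      _ ≤ 2 ^ m * (B * coeff (n - a * t) F) := by gcongr; exact hF _
      _ = 2 ^ m * B * coeff (n - a * t) F := by ring
  have hsub : range (T + 1) ⊆ range (n / a + 1) :=
    range_subset_range.2 (Nat.succ_le_succ (Nat.div_le_div_left (by omega) ha))
  calc (n : ℤ) ^ (m + 1) = n * n ^ m := by ring
    _ ≤ ((2 * a * (T + 1) : ℕ) : ℤ) * n ^ m := by gcongr
    _ = 2 * a * ∑ _t ∈ range (T + 1), (n : ℤ) ^ m := by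
      rw [sum_const, card_range, nsmul_eq_mul]; push_cast; ring
    _ ≤ 2 * a * ∑ t ∈ range (T + 1), 2 ^ m * B * coeff (n - a * t) F :=
      mul_le_mul_of_nonneg_left (sum_le_sum hterm) (by positivity)
    _ ≤ 2 * a * ∑ t ∈ range (n / a + 1), 2 ^ m * B * coeff (n - a * t) F :=
      mul_le_mul_of_nonneg_left (sum_le_sum_of_subset_of_nonneg hsub fun t _ _ =>
        mul_nonneg (by positivity) (hF₀ _)) (by positivity)
    _ = 2 ^ (m + 1) * a * B * coeff n (invOneSubXPow a * F) := by
      rw [coeff_invOneSubXPow_mul ha, ← mul_sum]; ring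

theorem exists_pow_card_le_mul_coeff_invOneSubXPow_one_mul_prod {ι : Type*} (t : Finset ι)
    (f : ι → ℕ) (hf : ∀ i ∈ t, 0 < f i) :
    ∃ B : ℤ, 0 < B ∧ ∀ n : ℕ,
      (n : ℤ) ^ #t ≤ B * coeff n (invOneSubXPow 1 * ∏ i ∈ t, invOneSubXPow (f i)) := by
  classical
  induction t using Finset.induction_on with
  | empty => exact ⟨1, one_pos, fun n => by simp [coeff_invOneSubXPow]⟩
  | insert j t hj ih =>
    obtain ⟨B, hB, h⟩ := ih fun i hi => hf i (mem_insert_of_mem hi)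
    have hj' := hf j (mem_insert_self j t)
    refine ⟨2 ^ (#t + 1) * f j * B, mul_pos (mul_pos (by positivity) (by exact_mod_cast hj')) hB,
      fun n => ?_⟩
    rw [card_insert_of_notMem hj, prod_insert hj, mul_left_comm]
    exact pow_succ_le_mul_coeff_invOneSubXPow_mul hj'
      (coeff_mul_nonneg (coeff_invOneSubXPow_nonneg 1) (coeff_prod_invOneSubXPow_nonneg t f)) h n

theorem exists_forall_lt_coeff_C_mul_add_pos {F E : ℤ⟦X⟧} {d : ℕ} {κ B : ℤ} (hκ : 0 < κ)
    (hB : 0 < B) (hF : ∀ n : ℕ, (n : ℤ) ^ (d + 1) ≤ B * coeff n F) (hE : CoeffIsBigO E d) :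
    ∃ N : ℕ, ∀ n, N < n → 0 < coeff n (C κ * F + E) := by
  obtain ⟨K, hK⟩ := hE
  have hK₀ := CoeffIsBigO.const_nonneg hK
  refine ⟨(B * K * 2 ^ d).toNat, fun n hn => ?_⟩
  have hn : B * K * 2 ^ d < n := by have := Int.self_le_toNat (B * K * 2 ^ d); omega
  have hpow : ((n : ℤ) + 1) ^ d ≤ 2 ^ d * n ^ d := by
    rw [← mul_pow]; gcongr; omega
  have h₁ : (n : ℤ) ^ (d + 1) ≤ κ * (B * coeff n F) :=
    (hF n).trans (le_mul_of_one_le_left ((pow_nonneg (by positivity) _).trans (hF n)) hκ)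
  have h₂ : -(B * (K * ((n : ℤ) + 1) ^ d)) ≤ B * coeff n E := by
    rw [← mul_neg]; exact mul_le_mul_of_nonneg_left (abs_le.1 (hK n)).1 hB.le
  have h₃ : B * (K * ((n : ℤ) + 1) ^ d) ≤ B * K * 2 ^ d * n ^ d := by
    rw [← mul_assoc, mul_assoc _ (2 ^ d)]; gcongr
  have h₄ : B * K * 2 ^ d * n ^ d < n ^ (d + 1) := by
    have := pow_pos (by omega : (0 : ℤ) < n) d
    rw [pow_succ]
    nlinarith
  rw [map_add, coeff_C_mul]
  exact pos_of_mul_pos_right (a := B) (by linarith) hB.le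

theorem exists_eval_one_eq_and_eq_one_sub_X_mul (r k₁ k₂ : ℕ) :
    ∃ N : ℤ[X], N.eval 1 = k₁ - k₂ ∧
      X ^ r * (1 - X ^ k₁) - (1 - X ^ k₂) = (1 - X) * (N : ℤ⟦X⟧) := by
  refine ⟨Polynomial.X ^ r * ∑ j ∈ range k₁, Polynomial.X ^ j - ∑ j ∈ range k₂, Polynomial.X ^ j,
    by simp, ?_⟩
  have := congrArg (fun p : ℤ[X] => (p : ℤ⟦X⟧))
    (show (1 - Polynomial.X) * (Polynomial.X ^ r * ∑ j ∈ range k₁, Polynomial.X ^ j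
        - ∑ j ∈ range k₂, Polynomial.X ^ j)
      = Polynomial.X ^ r * (1 - Polynomial.X ^ k₁) - (1 - Polynomial.X ^ k₂) by
      simp only [mul_sub, mul_left_comm, mul_neg_geom_sum])
  simpa only [Polynomial.coe_mul, Polynomial.coe_sub, Polynomial.coe_one, Polynomial.coe_pow,
    Polynomial.coe_X] using this.symm

theorem exists_forall_lt_coeff_one_sub_X_mul_mul_prod_pos {s : ℕ} (hs : 0 < s) (l : ℕ)
    {N : ℤ[X]} (hN : 0 < N.eval 1) :
    ∃ M : ℕ, ∀ n, M < n →
      0 < coeff n ((1 - X) * (N : ℤ⟦X⟧) * ∏ i ∈ range (l + 4), invOneSubXPow (s + i)) := by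
  set G := ∏ i ∈ range (l + 2), invOneSubXPow (s + 2 + i)
  set E := C ((s : ℤ) * (s + 1)) * (invOneSubXPow s * invOneSubXPow (s + 1))
    - invOneSubXPow 1 * invOneSubXPow 1
  have key : C ((s : ℤ) * (s + 1))
        * ((1 - X) * (N : ℤ⟦X⟧) * ∏ i ∈ range (l + 4), invOneSubXPow (s + i))
      = C (N.eval 1) * (invOneSubXPow 1 * G)
        + (((N : ℤ⟦X⟧) * (invOneSubXPow 1 * G)
            - C (N.eval 1) * (invOneSubXPow 1 * G))
          + (N : ℤ⟦X⟧) * (E * ((1 - X) * G))) := by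
    rw [prod_invOneSubXPow_range_add_two]
    linear_combination (N * G * invOneSubXPow 1 : ℤ⟦X⟧) * one_sub_X_mul_invOneSubXPow_one
  have hErr : CoeffIsBigO (((N : ℤ⟦X⟧) * (invOneSubXPow 1 * G)
      - C (N.eval 1) * (invOneSubXPow 1 * G))
        + (N : ℤ⟦X⟧) * (E * ((1 - X) * G))) (l + 1) := by
    refine .add (.coe_mul_sub_C_eval_mul ?_ N) (.coe_mul ?_ N)
    · rw [← mul_assoc, one_sub_X_mul_invOneSubXPow_one, one_mul]
      exact coeffIsBigO_prod_range_invOneSubXPow (s + 2) l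
    · have h := (coeffIsBigO_C_mul_invOneSubXPow_mul_succ_sub hs).mul
        (coeffIsBigO_one_sub_X_mul_prod_range_invOneSubXPow (by omega : 0 < s + 2) l)
      rw [zero_add] at h
      exact h
  obtain ⟨B, hB, hlow⟩ := exists_pow_card_le_mul_coeff_invOneSubXPow_one_mul_prod (range (l + 2))
    (fun i => s + 2 + i) (fun _ _ => by omega)
  rw [card_range] at hlow
  obtain ⟨M, hM⟩ := exists_forall_lt_coeff_C_mul_add_pos hN hB hlow hErr
  refine ⟨M, fun n hn => pos_of_mul_pos_right ?_ (by positivity : (0 : ℤ) ≤ s * (s + 1))⟩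
  rw [← coeff_C_mul, key]
  exact hM n hn

end QSeries

open QSeries

theorem stmt_1_general (L s r k₁ k₂ : ℕ) (hL : 3 ≤ L) (hs : 1 ≤ s)
    (hk : k₂ < k₁)
    (H : PowerSeries ℤ)
    -- `H` is the quotient `(q^r(1 - q^{k₁}) - (1 - q^{k₂})) / (q^s;q)_{L+1}`,
    -- characterized by multiplying through by `(q^s;q)_{L+1} = ∏_{i=0}^{L} (1 - q^{s+i})`,
    -- which has constant term 1 and hence is invertible in ℤ[[q]].
    (hH : H * ∏ i ∈ Finset.range (L + 1), (1 - (X : PowerSeries ℤ) ^ (s + i))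
        = X ^ r * (1 - X ^ k₁) - (1 - X ^ k₂)) :
    ∃ M : ℕ, ∀ n : ℕ, M < n → 0 < coeff n H := by
  obtain ⟨l, rfl⟩ : ∃ l, L = l + 3 := ⟨L - 3, by omega⟩
  obtain ⟨N, hN₁, hN⟩ := exists_eval_one_eq_and_eq_one_sub_X_mul r k₁ k₂
  rw [eq_mul_prod_invOneSubXPow (fun i _ => by omega) hH, hN]
  exact exists_forall_lt_coeff_one_sub_X_mul_mul_prod_pos hs l (by omega)

theorem stmt_1 (L s r k₁ k₂ : ℕ) (hL : 3 ≤ L) (hs : 1 ≤ s)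
    (hk₂ : 1 ≤ k₂) (hk : k₂ < k₁)
    (H : PowerSeries ℤ)
    -- `H` is the quotient `(q^r(1 - q^{k₁}) - (1 - q^{k₂})) / (q^s;q)_{L+1}`,
    -- characterized by multiplying through by `(q^s;q)_{L+1} = ∏_{i=0}^{L} (1 - q^{s+i})`,
    -- which has constant term 1 and hence is invertible in ℤ[[q]].
    (hH : H * ∏ i ∈ Finset.range (L + 1), (1 - (X : PowerSeries ℤ) ^ (s + i))
        = X ^ r * (1 - X ^ k₁) - (1 - X ^ k₂)) :
    ∃ M : ℕ, ∀ n : ℕ, M < n → 0 < coeff n H :=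
  stmt_1_general L s r k₁ k₂ hL hs hk H hH
end

section
/- For all integers L ≥ 3, s ≥ 1 and k > s, the formal power series (q^s(1 − q^k) − (1 − q^s)) / (q^s;q)_{L+1} in ℤ[[q]] is eventually positive; that is, there exists an integer M ≥ 0 such that its coefficient of q^n is positive for all n > M. -/
/-!
Write `N = q^s(1 - q^k) - (1 - q^s)`. If `F (1 - q^p)` is eventually positive, the coefficients of
`F` eventually grow by at least one every `p` steps, so `F` is eventually positive too; dividing
by the factors `1 - q^{s+i}` with `i ≥ 4` one at a time, it suffices to treat `L = 3`.

Since `s` and `s + 1` are coprime, `n` has `n / (s(s+1)) + O(1)` representations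
`n = s a + (s + 1) b`, i.e. `s(s+1) / ((1 - q^s)(1 - q^{s+1})) = 1/(1 - q)^2 + O(1)`
coefficientwise, and likewise for `s + 2, s + 3`. As `N = (1 - q)((k - s) + (1 - q) Q)` for a
polynomial `Q`, expanding gives `s(s+1)(s+2)(s+3) N / (q^s;q)_4 = (k - s)/(1 - q)^3 + O(n)`,
whose main coefficient `(k - s) binom(n+2, 2)` is positive and quadratic in `n`.
-/

open PowerSeries Finset Filter

namespace PowerSeries

def coeffBigO (d : ℕ) : AddSubgroup ℤ⟦X⟧ where
  carrier := {F | ∃ C : ℕ, ∀ n, |coeff n F| ≤ C * ((n : ℤ) + 1) ^ d}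
  zero_mem' := ⟨0, by simp⟩
  add_mem' := by
    rintro F G ⟨C, hF⟩ ⟨D, hG⟩
    refine ⟨C + D, fun n => ?_⟩
    rw [map_add, Nat.cast_add, add_mul]
    exact (abs_add_le _ _).trans (add_le_add (hF n) (hG n))
  neg_mem' := by
    rintro F ⟨C, hF⟩
    exact ⟨C, fun n => by simpa using hF n⟩

lemma one_mem_coeffBigO : (1 : ℤ⟦X⟧) ∈ coeffBigO 0 :=
  ⟨1, fun n => by rw [coeff_one]; split_ifs <;> simp⟩

lemma mk_one_mem_coeffBigO : (mk 1 : ℤ⟦X⟧) ∈ coeffBigO 0 := ⟨1, fun n => by simp⟩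

lemma mul_mem_coeffBigO {d e : ℕ} {F G : ℤ⟦X⟧} (hF : F ∈ coeffBigO d) (hG : G ∈ coeffBigO e) :
    F * G ∈ coeffBigO (d + e + 1) := by
  obtain ⟨C, hC⟩ := hF
  obtain ⟨D, hD⟩ := hG
  refine ⟨C * D, fun n => ?_⟩
  have hterm : ∀ x ∈ antidiagonal n,
      |coeff x.1 F * coeff x.2 G| ≤ C * D * ((n : ℤ) + 1) ^ (d + e) := by
    intro x hx
    have hx' := mem_antidiagonal.mp hx
    have h1 : (x.1 : ℤ) + 1 ≤ n + 1 := by omega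
    have h2 : (x.2 : ℤ) + 1 ≤ n + 1 := by omega
    rw [abs_mul, pow_add]
    calc |coeff x.1 F| * |coeff x.2 G| ≤ (C * ((x.1 : ℤ) + 1) ^ d) * (D * ((x.2 : ℤ) + 1) ^ e) :=
          mul_le_mul (hC _) (hD _) (abs_nonneg _) (by positivity)
      _ ≤ (C * ((n : ℤ) + 1) ^ d) * (D * ((n : ℤ) + 1) ^ e) := by gcongr
      _ = _ := by ring
  calc |coeff n (F * G)| ≤ ∑ x ∈ antidiagonal n, |coeff x.1 F * coeff x.2 G| := by
        rw [coeff_mul]; exact abs_sum_le_sum_abs _ _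
    _ ≤ ∑ x ∈ antidiagonal n, (C * D * ((n : ℤ) + 1) ^ (d + e) : ℤ) := sum_le_sum hterm
    _ = _ := by rw [sum_const, Nat.card_antidiagonal, nsmul_eq_mul]; push_cast; ring

lemma C_mul_X_pow_mul_mem_coeffBigO {d : ℕ} {F : ℤ⟦X⟧} (a : ℤ) (l : ℕ) (hF : F ∈ coeffBigO d) :
    C a * X ^ l * F ∈ coeffBigO d := by
  obtain ⟨D, hD⟩ := hF
  refine ⟨a.natAbs * D, fun n => ?_⟩
  rw [mul_assoc, coeff_C_mul, coeff_X_pow_mul', abs_mul, Nat.cast_mul, Int.natCast_natAbs,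
    mul_assoc]
  refine mul_le_mul_of_nonneg_left ?_ (abs_nonneg a)
  split_ifs with hl
  · calc |coeff (n - l) F| ≤ D * (((n - l : ℕ) : ℤ) + 1) ^ d := hD _
      _ ≤ D * ((n : ℤ) + 1) ^ d := by gcongr; omega
  · simp only [abs_zero]; positivity

lemma polynomial_mul_mem_coeffBigO {d : ℕ} {F : ℤ⟦X⟧} (P : Polynomial ℤ) (hF : F ∈ coeffBigO d) :
    (P : ℤ⟦X⟧) * F ∈ coeffBigO d := by
  induction P using Polynomial.induction_on' with
  | add P Q hP hQ => rw [Polynomial.coe_add, add_mul]; exact add_mem hP hQ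
  | monomial l a =>
    rw [← Polynomial.C_mul_X_pow_eq_monomial, Polynomial.coe_mul, Polynomial.coe_C,
      Polynomial.coe_pow, Polynomial.coe_X]
    exact C_mul_X_pow_mul_mem_coeffBigO a l hF


lemma polynomial_mem_coeffBigO (P : Polynomial ℤ) : (P : ℤ⟦X⟧) ∈ coeffBigO 0 := by
  simpa using polynomial_mul_mem_coeffBigO P one_mem_coeffBigO

def invOneSubXPow (p : ℕ) : ℤ⟦X⟧ := mk fun n => if p ∣ n then 1 else 0

lemma coeff_invOneSubXPow (p n : ℕ) : coeff n (invOneSubXPow p) = if p ∣ n then 1 else 0 :=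
  coeff_mk _ _

lemma one_sub_X_pow_mul_invOneSubXPow {p : ℕ} (hp : 0 < p) : (1 - X ^ p) * invOneSubXPow p = 1 := by
  ext n
  simp only [sub_mul, one_mul, map_sub, coeff_X_pow_mul', coeff_one, coeff_invOneSubXPow]
  by_cases hpn : p ≤ n
  · obtain ⟨m, rfl⟩ := Nat.exists_eq_add_of_le hpn
    simp [hp.ne', Nat.dvd_add_self_left]
  · have : p ∣ n ↔ n = 0 :=
      ⟨fun h => Nat.eq_zero_of_dvd_of_lt h (not_le.1 hpn), by rintro rfl; simp⟩
    simp [hpn, this]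

lemma coeff_invOneSubXPow_mul_succ (p n : ℕ) :
    coeff n (invOneSubXPow p * invOneSubXPow (p + 1)) =
      Nat.count (· ≡ n [MOD p]) (n / (p + 1) + 1) := by
  -- `(i, (p + 1) m)` with `p ∣ i` lies on the antidiagonal of `n` iff `m ≡ n [MOD p]`
  have hmod : p + 1 ≡ 1 [MOD p] := by simp [Nat.ModEq]
  simp only [coeff_mul, coeff_invOneSubXPow, ite_zero_mul_ite_zero, one_mul, sum_boole,
    Nat.count_eq_card_filter_range]
  congr 1
  refine card_nbij' (fun x => x.2 / (p + 1)) (fun m => (n - (p + 1) * m, (p + 1) * m)) ?_ ?_ ?_ ?_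
  · rintro ⟨i, j⟩ hx
    simp only [mem_coe, mem_filter, HasAntidiagonal.mem_antidiagonal, mem_range] at hx ⊢
    obtain ⟨rfl, hi, m, rfl⟩ := hx
    rw [Nat.mul_div_cancel_left _ (Nat.succ_pos p)]
    refine ⟨Nat.lt_succ_of_le ((Nat.le_div_iff_mul_le (Nat.succ_pos p)).2 (by linarith)), ?_⟩
    have := (Nat.modEq_zero_iff_dvd.2 hi).add (hmod.mul_right m)
    rw [zero_add, one_mul] at this
    exact this.symm
  · intro m hm
    simp only [mem_coe, mem_filter, HasAntidiagonal.mem_antidiagonal, mem_range] at hm ⊢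
    have hle : (p + 1) * m ≤ n := by
      have := (Nat.le_div_iff_mul_le (Nat.succ_pos p)).1 (Nat.le_of_lt_succ hm.1); linarith
    refine ⟨Nat.sub_add_cancel hle, Nat.modEq_zero_iff_dvd.1 ?_, dvd_mul_right _ _⟩
    refine Nat.ModEq.add_right_cancel' ((p + 1) * m) ?_
    rw [Nat.sub_add_cancel hle, zero_add]
    simpa using hm.2.symm.trans (by simpa using (hmod.mul_right m).symm)
  · rintro ⟨i, j⟩ hx
    simp only [mem_coe, mem_filter, HasAntidiagonal.mem_antidiagonal] at hx
    obtain ⟨rfl, -, m, rfl⟩ := hx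
    simp [Nat.mul_div_cancel_left _ (Nat.succ_pos p)]
  · intro m _
    simp [Nat.mul_div_cancel_left _ (Nat.succ_pos p)]

lemma mk_one_sq : (mk 1 : ℤ⟦X⟧) ^ 2 = mk fun n => (n : ℤ) + 1 := by
  rw [mk_one_pow_eq_mk_choose_add ℤ 1]
  ext n; simp [add_comm]

lemma C_mul_invOneSubXPow_mul_succ_sub_mem_coeffBigO {p : ℕ} (hp : 0 < p) :
    C ((p * (p + 1) : ℕ) : ℤ) * (invOneSubXPow p * invOneSubXPow (p + 1)) - (mk 1) ^ 2 ∈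
      coeffBigO 0 := by
  refine ⟨(p + 1) ^ 2, fun n => ?_⟩
  rw [map_sub, coeff_C_mul, coeff_invOneSubXPow_mul_succ, Nat.count_modEq_card _ hp, mk_one_sq,
    coeff_mk, pow_zero, mul_one]
  generalize hc : (n / (p + 1) + 1) / p + _ = c
  have hc₁ : (n / (p + 1) + 1) / p ≤ c := hc ▸ le_self_add
  have hc₂ : c ≤ (n / (p + 1) + 1) / p + 1 := by rw [← hc]; split_ifs <;> simp
  have h₁ := Nat.div_add_mod n (p + 1)
  have h₂ := Nat.mod_lt n (Nat.succ_pos p)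
  have h₃ := Nat.div_add_mod (n / (p + 1) + 1) p
  have h₄ := Nat.mod_lt (n / (p + 1) + 1) hp
  generalize n / (p + 1) = q at *
  generalize (q + 1) / p = t at *
  generalize n % (p + 1) = r₁ at *
  generalize (q + 1) % p = r₂ at *
  have hpp : 0 ≤ p * (p + 1) := Nat.zero_le _
  zify at *
  rw [abs_le]
  constructor <;> nlinarith [mul_le_mul_of_nonneg_left hc₁ hpp, mul_le_mul_of_nonneg_left hc₂ hpp]

lemma one_sub_pow_eq_mul {R : Type*} [CommRing R] (x : R) (j : ℕ) :
    1 - x ^ j = (1 - x) * (j - (1 - x) * ∑ i ∈ range j, ∑ l ∈ range i, x ^ l) := by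
  induction j with
  | zero => simp
  | succ j ih =>
    rw [sum_range_succ, Nat.cast_succ]
    linear_combination ih + (1 - x) * mul_neg_geom_sum x j

lemma exists_X_pow_mul_one_sub_X_pow_sub_eq (s k : ℕ) :
    ∃ Q : Polynomial ℤ, (X : ℤ⟦X⟧) ^ s * (1 - X ^ k) - (1 - X ^ s) =
      (1 - X) * (C ((k : ℤ) - s) + (1 - X) * (Q : ℤ⟦X⟧)) := by
  set S : ℕ → Polynomial ℤ := fun j => ∑ i ∈ range j, ∑ l ∈ range i, Polynomial.X ^ l
  refine ⟨S s + S s - S (s + k), ?_⟩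
  have hS : ∀ j, ((S j : Polynomial ℤ) : ℤ⟦X⟧) = ∑ i ∈ range j, ∑ l ∈ range i, X ^ l := by
    intro j
    simp only [S, ← Polynomial.coeToPowerSeries.ringHom_apply, map_sum, map_pow]
    simp
  have h₁ := one_sub_pow_eq_mul (X : ℤ⟦X⟧) (s + k)
  rw [Nat.cast_add] at h₁
  rw [Polynomial.coe_sub, Polynomial.coe_add, hS, hS, map_sub, map_natCast, map_natCast]
  linear_combination h₁ - 2 * one_sub_pow_eq_mul (X : ℤ⟦X⟧) s

lemma mul_mul_sub_eq_of_eq_one_sub_mul {R : Type*} [CommRing R] {x N U V G Q a c m : R}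
    (hN : N = (1 - x) * (m + (1 - x) * Q)) (hG : (1 - x) * G = 1) :
    a * c * (N * U * V) - m * G ^ 3 =
      Q * G ^ 2 + (m * G + Q) * ((a * U - G ^ 2) + (c * V - G ^ 2)) +
        N * ((a * U - G ^ 2) * (c * V - G ^ 2)) := by
  linear_combination (a * U + c * V - G ^ 2) * (G ^ 2 * hN + ((m + (1 - x) * Q) * G + Q) * hG)

lemma C_mul_mul_sub_mem_coeffBigO {N U V : ℤ⟦X⟧} {Q : Polynomial ℤ} {a c m : ℤ}
    (hN : N = (1 - X) * (C m + (1 - X) * (Q : ℤ⟦X⟧)))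
    (hU : C a * U - (mk 1) ^ 2 ∈ coeffBigO 0) (hV : C c * V - (mk 1) ^ 2 ∈ coeffBigO 0) :
    C (a * c) * (N * U * V) - C m * (mk 1) ^ 3 ∈ coeffBigO 1 := by
  have hNpoly :
      N = ((1 - Polynomial.X) * (Polynomial.C m + (1 - Polynomial.X) * Q) : Polynomial ℤ) := by
    rw [hN, Polynomial.coe_mul, Polynomial.coe_sub, Polynomial.coe_one, Polynomial.coe_X,
      Polynomial.coe_add, Polynomial.coe_C, Polynomial.coe_mul, Polynomial.coe_sub,
      Polynomial.coe_one, Polynomial.coe_X]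
  have hG2 : (mk 1 : ℤ⟦X⟧) ^ 2 ∈ coeffBigO 1 := by
    simpa [sq] using mul_mem_coeffBigO (d := 0) (e := 0) mk_one_mem_coeffBigO mk_one_mem_coeffBigO
  have hmG : C m * mk 1 + (Q : ℤ⟦X⟧) ∈ coeffBigO 0 := by
    rw [← Polynomial.coe_C]
    exact add_mem (polynomial_mul_mem_coeffBigO _ mk_one_mem_coeffBigO) (polynomial_mem_coeffBigO Q)
  have hW : N * ((C a * U - (mk 1) ^ 2) * (C c * V - (mk 1) ^ 2)) ∈ coeffBigO 1 := by
    rw [hNpoly]; exact polynomial_mul_mem_coeffBigO _ (mul_mem_coeffBigO hU hV)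
  have hG : (1 - X : ℤ⟦X⟧) * mk 1 = 1 := by rw [mul_comm]; exact mk_one_mul_one_sub_eq_one ℤ
  rw [map_mul, mul_mul_sub_eq_of_eq_one_sub_mul hN hG]
  exact add_mem (add_mem (polynomial_mul_mem_coeffBigO Q hG2)
    (mul_mem_coeffBigO (d := 0) (e := 0) hmG (add_mem hU hV))) hW

lemma eventually_pos_of_C_mul_sub_mem_coeffBigO {B : ℤ⟦X⟧} {K m : ℤ} (hK : 0 < K) (hm : 0 < m)
    (h : C K * B - C m * (mk 1) ^ 3 ∈ coeffBigO 1) : ∀ᶠ n in atTop, 0 < coeff n B := by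
  obtain ⟨D, hD⟩ := h
  filter_upwards [eventually_ge_atTop (2 * D)] with n hn
  have hchoose : 2 * (n + 2).choose 2 = (n + 2) * (n + 1) := by
    have := Nat.add_one_mul_choose_eq (n + 1) 1
    rw [Nat.choose_one_right] at this
    linarith
  have hbound := (abs_le.1 (hD n)).1
  rw [map_sub, coeff_C_mul, coeff_C_mul, mk_one_pow_eq_mk_choose_add, coeff_mk, add_comm 2 n,
    pow_one] at hbound
  have hn' : (2 * D : ℤ) ≤ n := by exact_mod_cast hn
  have hchoose' : 2 * ((n + 2).choose 2 : ℤ) = (n + 2) * (n + 1) := by exact_mod_cast hchoose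
  refine pos_of_mul_pos_right (a := K) ?_ hK.le
  nlinarith

lemma eventually_pos_of_eventually_add_le {g : ℕ → ℤ} {p : ℕ} (hp : 0 < p)
    (h : ∀ᶠ n in atTop, g n + 1 ≤ g (n + p)) : ∀ᶠ n in atTop, 0 < g n := by
  obtain ⟨M, hM⟩ := eventually_atTop.1 h
  have hstep : ∀ r j : ℕ, g (M + r) + j ≤ g (M + r + p * j) := by
    intro r j
    induction j with
    | zero => simp
    | succ j ih =>
      have := hM (M + r + p * j) (by omega)
      rw [mul_add, mul_one, ← add_assoc]
      push_cast
      linarith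
  set C := ∑ r ∈ range p, (g (M + r)).natAbs
  filter_upwards [eventually_ge_atTop (M + p * (C + 1))] with n hn
  have hn' : M + (n - M) % p + p * ((n - M) / p) = n := by
    have := Nat.mod_add_div (n - M) p; omega
  set r := (n - M) % p
  set j := (n - M) / p
  have hgn : g (M + r) + j ≤ g n := hn' ▸ hstep r j
  have hj : (C : ℤ) + 1 ≤ j := by
    exact_mod_cast (Nat.le_div_iff_mul_le hp).2 (by rw [mul_comm]; omega)
  have hr : -(C : ℤ) ≤ g (M + r) := by
    have : (g (M + r)).natAbs ≤ C :=
      single_le_sum (f := fun r => (g (M + r)).natAbs) (fun _ _ => Nat.zero_le _)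
        (mem_range.2 (Nat.mod_lt _ hp))
    have := neg_abs_le (g (M + r))
    rw [Int.abs_eq_natAbs] at this
    omega
  linarith

lemma eventually_pos_of_mul_one_sub_X_pow {F : ℤ⟦X⟧} {p : ℕ} (hp : 0 < p)
    (h : ∀ᶠ n in atTop, 0 < coeff n (F * (1 - X ^ p))) : ∀ᶠ n in atTop, 0 < coeff n F := by
  refine eventually_pos_of_eventually_add_le hp ?_
  filter_upwards [(tendsto_add_atTop_nat p).eventually h] with n hn
  rw [mul_sub, mul_one, map_sub, coeff_mul_X_pow] at hn
  omega

lemma eventually_pos_of_mul_prod {F : ℤ⟦X⟧} {ι : Type*} {t : Finset ι} {e : ι → ℕ}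
    (he : ∀ i ∈ t, 0 < e i) (h : ∀ᶠ n in atTop, 0 < coeff n (F * ∏ i ∈ t, (1 - X ^ e i))) :
    ∀ᶠ n in atTop, 0 < coeff n F := by
  classical
  induction t using Finset.induction_on generalizing F with
  | empty => simpa using h
  | insert a t ha ih =>
    rw [prod_insert ha, mul_comm (1 - X ^ e a), ← mul_assoc] at h
    exact ih (fun i hi => he i (mem_insert_of_mem hi))
      (eventually_pos_of_mul_one_sub_X_pow (he a (mem_insert_self a t)) h)

lemma eventually_pos_of_mul_prod_range_four {s k : ℕ} (hs : 1 ≤ s) (hk : s < k) {B : ℤ⟦X⟧}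
    (hB : B * ∏ i ∈ range 4, (1 - X ^ (s + i)) = X ^ s * (1 - X ^ k) - (1 - X ^ s)) :
    ∀ᶠ n in atTop, 0 < coeff n B := by
  set U := invOneSubXPow s * invOneSubXPow (s + 1)
  set V := invOneSubXPow (s + 2) * invOneSubXPow (s + 3)
  have hinv : (∏ i ∈ range 4, (1 - X ^ (s + i))) * (U * V) = 1 := by
    have h : ∀ i, (1 - X ^ (s + i)) * invOneSubXPow (s + i) = 1 :=
      fun i => one_sub_X_pow_mul_invOneSubXPow (by omega)
    have hUV : U * V = ∏ i ∈ range 4, invOneSubXPow (s + i) := by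
      simp only [prod_range_succ, prod_range_zero, one_mul, add_zero, U, V]; ring
    rw [hUV, ← prod_mul_distrib, prod_congr rfl fun i _ => h i, prod_const_one]
  have hBUV : B = (X ^ s * (1 - X ^ k) - (1 - X ^ s)) * U * V := by
    rw [← hB, mul_assoc, mul_assoc, hinv, mul_one]
  obtain ⟨Q, hQ⟩ := exists_X_pow_mul_one_sub_X_pow_sub_eq s k
  have key := C_mul_mul_sub_mem_coeffBigO hQ
    (C_mul_invOneSubXPow_mul_succ_sub_mem_coeffBigO (p := s) (by omega))
    (C_mul_invOneSubXPow_mul_succ_sub_mem_coeffBigO (p := s + 2) (by omega))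
  rw [← hBUV] at key
  exact eventually_pos_of_C_mul_sub_mem_coeffBigO (by positivity) (by omega) key

end PowerSeries

theorem stmt_2 (L s k : ℕ) (hL : 3 ≤ L) (hs : 1 ≤ s) (hk : s < k)
    (H : PowerSeries ℤ)
    -- `H` is the quotient `(q^s(1 - q^k) - (1 - q^s)) / (q^s;q)_{L+1}`,
    -- characterized by multiplying through by `(q^s;q)_{L+1} = ∏_{i=0}^{L} (1 - q^{s+i})`,
    -- which has constant term 1 and hence is invertible in ℤ[[q]].
    (hH : H * ∏ i ∈ Finset.range (L + 1), (1 - (X : PowerSeries ℤ) ^ (s + i))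
        = X ^ s * (1 - X ^ k) - (1 - X ^ s)) :
    ∃ M : ℕ, ∀ n : ℕ, M < n → 0 < coeff n H := by
  have hsplit : ∏ i ∈ range (L + 1), (1 - (X : ℤ⟦X⟧) ^ (s + i)) =
      (∏ i ∈ range 4, (1 - X ^ (s + i))) * ∏ i ∈ range (L - 3), (1 - X ^ (s + (4 + i))) := by
    rw [show L + 1 = 4 + (L - 3) by omega, prod_range_add]
  have hB : ∀ᶠ n in atTop, 0 < coeff n (H * ∏ i ∈ range (L - 3), (1 - X ^ (s + (4 + i)))) :=
    eventually_pos_of_mul_prod_range_four hs hk (by rw [← hH, hsplit]; ring)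
  obtain ⟨M, hM⟩ := eventually_atTop.1 (eventually_pos_of_mul_prod (fun _ _ => by omega) hB)
  exact ⟨M, fun n hn => hM n hn.le⟩
end

section
/- Let s ≥ 1, L ≥ 2s³ + 5s² + 1 and L ≤ k ≤ s + L be integers, and write k = rs + t with 0 ≤ t ≤ s − 1. Then for every integer n ≥ 0, the number of partitions α in C¹_{L,s,2}(n) is at most the number of partitions β in F¹_{L,s,k}(n), where: C¹_{L,s,2}(n) is the set of partitions of n with all parts in {s+1, …, s+L}, with no part equal to k, and having at least one part equal to a·s for some integer a ≥ 2; and F¹_{L,s,k}(n) is the set of partitions of n with smallest part s, largest part at most s+L, no part equal to k, whose multiplicity g_s of the part s satisfies 2 ≤ g_s ≤ r+1, and which for every integer i with 2 ≤ i < g_s have no part equal to i·s. -/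
theorem stmt_11 (s L k r t : ℕ) (hs : 1 ≤ s)
    (hL : 2 * s ^ 3 + 5 * s ^ 2 + 1 ≤ L) (hkL : L ≤ k) (hk : k ≤ s + L)
    (hkrt : k = r * s + t) (ht : t ≤ s - 1) (n : ℕ) :
    -- `C¹_{L,s,2}(n)`: partitions of `n` with all parts in `{s+1,…,s+L}`, no part
    -- equal to `k`, and at least one part equal to `a·s` for some `a ≥ 2`.
    Nat.card {p : n.Partition //
        (∀ j ∈ p.parts, s + 1 ≤ j ∧ j ≤ s + L) ∧ k ∉ p.parts ∧
        ∃ a : ℕ, 2 ≤ a ∧ a * s ∈ p.parts}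
    -- `F¹_{L,s,k}(n)`: partitions of `n` with smallest part `s`, largest part at most
    -- `s+L`, no part equal to `k`, with `2 ≤ g_s ≤ r+1`, and no part `i·s` for `2 ≤ i < g_s`.
    ≤ Nat.card {p : n.Partition //
        (s ∈ p.parts ∧ ∀ j ∈ p.parts, s ≤ j ∧ j ≤ s + L) ∧ k ∉ p.parts ∧
        2 ≤ Multiset.count s p.parts ∧ Multiset.count s p.parts ≤ r + 1 ∧
        ∀ i : ℕ, 2 ≤ i → i < Multiset.count s p.parts → i * s ∉ p.parts} := by
  classical
  have hsk : s < k := lt_of_lt_of_le (lt_of_lt_of_le (by nlinarith) hL) hkL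
  have hts : t + 1 ≤ s := by omega
  -- the map
  refine Nat.card_le_card_of_injective (fun x => ?_) ?_
  · obtain ⟨p, hp⟩ := x
    have hex := hp.2.2
    set a := Nat.find hex with ha_def
    have haspec : 2 ≤ a ∧ a * s ∈ p.parts := Nat.find_spec hex
    have ha2 : 2 ≤ a := haspec.1
    have has : a * s ∈ p.parts := haspec.2
    have hamin : ∀ i, 2 ≤ i → i < a → i * s ∉ p.parts := fun i h2 hia hmem =>
      Nat.find_min hex hia ⟨h2, hmem⟩
    have hsnot : s ∉ p.parts := fun h => by
      have := (hp.1 s h).1; omega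
    refine ⟨⟨Multiset.replicate a s + p.parts.erase (a * s), ?_, ?_⟩, ?_⟩
    · intro j hj
      rcases Multiset.mem_add.mp hj with h | h
      · rw [Multiset.eq_of_mem_replicate h]; omega
      · exact p.parts_pos (Multiset.mem_of_mem_erase h)
    · have hc : a * s ::ₘ p.parts.erase (a * s) = p.parts := Multiset.cons_erase has
      have : (a * s ::ₘ p.parts.erase (a * s)).sum = n := by rw [hc]; exact p.parts_sum
      rw [Multiset.sum_cons] at this
      rw [Multiset.sum_add, Multiset.sum_replicate, smul_eq_mul]
      omega
    · -- membership in F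
      have hcount : Multiset.count s (Multiset.replicate a s + p.parts.erase (a * s)) = a := by
        rw [Multiset.count_add, Multiset.count_replicate_self,
          Multiset.count_eq_zero.mpr (fun h => hsnot (Multiset.mem_of_mem_erase h))]; omega
      have haub : a ≤ r + 1 := by
        have h1 : a * s ≤ s + L := (hp.1 _ has).2
        by_contra hcon
        push_neg at hcon
        have : (r + 2) * s ≤ a * s := Nat.mul_le_mul_right s (by omega)
        nlinarith
      refine ⟨⟨Multiset.mem_add.mpr (Or.inl (Multiset.mem_replicate.mpr ⟨by omega, rfl⟩)), ?_⟩,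
        ?_, ?_, ?_, ?_⟩
      · intro j hj
        rcases Multiset.mem_add.mp hj with h | h
        · rw [Multiset.eq_of_mem_replicate h]; omega
        · have := hp.1 j (Multiset.mem_of_mem_erase h); omega
      · intro hkmem
        rcases Multiset.mem_add.mp hkmem with h | h
        · have := Multiset.eq_of_mem_replicate h; omega
        · exact hp.2.1 (Multiset.mem_of_mem_erase h)
      · show 2 ≤ Multiset.count s (Multiset.replicate a s + p.parts.erase (a * s))
        omega
      · show Multiset.count s (Multiset.replicate a s + p.parts.erase (a * s)) ≤ r + 1
        omega
      · intro i h2 hia hmem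
        have hia' : i < a := by
          have h2' : i < Multiset.count s (Multiset.replicate a s + p.parts.erase (a * s)) := hia
          omega
        rcases Multiset.mem_add.mp hmem with h | h
        · have := Multiset.eq_of_mem_replicate h; nlinarith
        · exact hamin i h2 hia' (Multiset.mem_of_mem_erase h)
  · -- injectivity
    rintro ⟨p, hp⟩ ⟨q, hq⟩ heq
    simp only [Subtype.mk.injEq] at heq
    have heq' := congrArg Nat.Partition.parts heq
    simp only at heq'
    set ap := Nat.find hp.2.2 with hap
    set aq := Nat.find hq.2.2 with haq
    have hpsnot : s ∉ p.parts := fun h => by have := (hp.1 s h).1; omega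
    have hqsnot : s ∉ q.parts := fun h => by have := (hq.1 s h).1; omega
    have hpc : Multiset.count s (Multiset.replicate ap s + p.parts.erase (ap * s)) = ap := by
      rw [Multiset.count_add, Multiset.count_replicate_self,
        Multiset.count_eq_zero.mpr (fun h => hpsnot (Multiset.mem_of_mem_erase h))]; omega
    have hqc : Multiset.count s (Multiset.replicate aq s + q.parts.erase (aq * s)) = aq := by
      rw [Multiset.count_add, Multiset.count_replicate_self,
        Multiset.count_eq_zero.mpr (fun h => hqsnot (Multiset.mem_of_mem_erase h))]; omega
    have haa : ap = aq := by
      rw [← hpc, ← hqc, heq']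
    rw [haa] at heq'
    have herase : p.parts.erase (aq * s) = q.parts.erase (aq * s) :=
      add_left_cancel heq'
    have hps : aq * s ∈ p.parts := haa ▸ (Nat.find_spec hp.2.2).2
    have hqs : aq * s ∈ q.parts := (Nat.find_spec hq.2.2).2
    have : p.parts = q.parts := by
      rw [← Multiset.cons_erase hps, ← Multiset.cons_erase hqs, herase]
    exact Subtype.ext (Nat.Partition.ext this)
end

section
/- Let s ≥ 1, L ≥ 2s³ + 5s² + 1 and L ≤ k ≤ s + L be integers. Then for every integer n ≥ 0, the number of partitions in C²_{L,s,2}(n) is at most the number of partitions in F²_{L,s,k}(n), where: C²_{L,s,2}(n) is the set of partitions of n with all parts in {s+1, …, s+L}, with no part equal to k, with no part equal to a·s for any integer a ≥ 2, and having some part j with s+1 ≤ j ≤ 2s² + 5s − 1 occurring at least s times; and F²_{L,s,k}(n) is the set of partitions of n with smallest part s, largest part at most s+L, no part equal to k, in which the part s occurs exactly once, there exists an integer i ≥ 2 such that the part i·s occurs exactly once, and for every integer j ∉ {1, i} the part j·s does not occur. -/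
/-!
Remove `s` copies of a part `j` with `s + 1 ≤ j ≤ 2s² + 5s − 1` and insert the two parts `s`
and `(j − 1)·s`; the sum is unchanged since `s·j = s + (j − 1)·s`. The bound on `j` keeps
`(j − 1)·s` below `L ≤ k`, and since a partition in `C²` has no part `a·s` with `a ≥ 2`, the
new partition lies in `F²` with `i = j − 1`. The map is injective: `j − 1` is read off the image
as the unique `i ≥ 2` for which `i·s` is a part, and then the removed parts are known.
-/

open Multiset

def C2 (L s k n : ℕ) : Set n.Partition :=
  {p | (∀ j ∈ p.parts, s + 1 ≤ j ∧ j ≤ s + L) ∧ k ∉ p.parts ∧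
    (∀ a : ℕ, 2 ≤ a → a * s ∉ p.parts) ∧
    ∃ j : ℕ, s + 1 ≤ j ∧ j ≤ 2 * s ^ 2 + 5 * s - 1 ∧ s ≤ Multiset.count j p.parts}

def F2 (L s k n : ℕ) : Set n.Partition :=
  {p | (s ∈ p.parts ∧ ∀ j ∈ p.parts, s ≤ j ∧ j ≤ s + L) ∧ k ∉ p.parts ∧
    Multiset.count s p.parts = 1 ∧
    ∃ i : ℕ, 2 ≤ i ∧ Multiset.count (i * s) p.parts = 1 ∧
      ∀ j : ℕ, j ≠ 1 → j ≠ i → j * s ∉ p.parts}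

namespace Nat.Partition

variable {n : ℕ}

def replace (p : n.Partition) {q r : Multiset ℕ} (hq : q ≤ p.parts) (hr : ∀ i ∈ r, 0 < i)
    (hsum : r.sum = q.sum) : n.Partition where
  parts := r + (p.parts - q)
  parts_pos hi := (mem_add.mp hi).elim (hr _) fun h => p.parts_pos (mem_of_le tsub_le_self h)
  parts_sum := by rw [sum_add, hsum, ← sum_add, add_tsub_cancel_of_le hq, p.parts_sum]

theorem eq_of_replace_eq {p₁ p₂ : n.Partition} {q r : Multiset ℕ} {hq₁ : q ≤ p₁.parts}
    {hq₂ : q ≤ p₂.parts} {hr : ∀ i ∈ r, 0 < i} {hsum : r.sum = q.sum}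
    (h : p₁.replace hq₁ hr hsum = p₂.replace hq₂ hr hsum) : p₁ = p₂ := by
  have hrest : p₁.parts - q = p₂.parts - q := add_left_cancel (congrArg parts h)
  ext1
  rw [← tsub_add_cancel_of_le hq₁, ← tsub_add_cancel_of_le hq₂, hrest]

def trade (p : n.Partition) {s j : ℕ} (hs : 0 < s) (hj : 2 ≤ j)
    (hcount : s ≤ p.parts.count j) : n.Partition :=
  p.replace (q := replicate s j) (r := {s, (j - 1) * s}) (le_count_iff_replicate_le.mp hcount)
    (by
      simp only [insert_eq_cons, mem_cons, mem_singleton]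
      rintro i (rfl | rfl)
      exacts [hs, Nat.mul_pos (by omega) hs])
    (by
      obtain ⟨j, rfl⟩ : ∃ i, j = i + 1 := ⟨j - 1, by omega⟩
      simp only [insert_eq_cons, sum_cons, sum_singleton, sum_replicate, smul_eq_mul,
        Nat.add_sub_cancel]
      ring)

theorem three_le_of_le_count (p : n.Partition) {s j : ℕ} (hs : 0 < s) (hj : s + 1 ≤ j)
    (hcount : s ≤ p.parts.count j) (hmul : ∀ a : ℕ, 2 ≤ a → a * s ∉ p.parts) : 3 ≤ j := by
  by_contra h
  obtain rfl : j = 2 * s := by omega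
  exact hmul 2 le_rfl (count_pos.mp (by omega))

section trade

variable {p : n.Partition} {s j : ℕ} {hs : 0 < s} {hj : 2 ≤ j} {hcount : s ≤ p.parts.count j}

theorem parts_trade :
    (p.trade hs hj hcount).parts = s ::ₘ (j - 1) * s ::ₘ (p.parts - replicate s j) := by
  show {s, (j - 1) * s} + _ = _
  rw [insert_eq_cons, cons_add, singleton_add]

theorem mem_of_mem_trade {x : ℕ} (hx : x ∈ (p.trade hs hj hcount).parts) :
    x = s ∨ x = (j - 1) * s ∨ x ∈ p.parts := by
  rw [parts_trade, mem_cons, mem_cons] at hx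
  exact hx.imp_right (Or.imp_right (mem_of_le tsub_le_self))

theorem trade_mem_F2 {L k : ℕ} (hL : 2 * s ^ 3 + 5 * s ^ 2 + 1 ≤ L) (hkL : L ≤ k)
    (hp : p ∈ C2 L s k n) (hj₃ : 3 ≤ j) (hj₂ : j ≤ 2 * s ^ 2 + 5 * s - 1) :
    p.trade hs hj hcount ∈ F2 L s k n := by
  obtain ⟨hbd, hk, hmul, -⟩ := hp
  have hjL : (j - 1) * s < L :=
    calc (j - 1) * s < (2 * s ^ 2 + 5 * s) * s := Nat.mul_lt_mul_of_pos_right (by omega) hs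
      _ = 2 * s ^ 3 + 5 * s ^ 2 := by ring
      _ < L := by omega
  have hsj : s < (j - 1) * s := lt_mul_left hs (by omega)
  have hs_notMem : s ∉ p.parts - replicate s j :=
    fun h => by have := (hbd s (mem_of_le tsub_le_self h)).1; omega
  have hjs_notMem : (j - 1) * s ∉ p.parts - replicate s j :=
    fun h => hmul (j - 1) (by omega) (mem_of_le tsub_le_self h)
  refine ⟨⟨by simp [parts_trade], fun x hx => ?_⟩, fun hk' => ?_, ?_, j - 1, by omega, ?_,
    fun i hi₁ hij hi => ?_⟩
  · rcases mem_of_mem_trade hx with rfl | rfl | hx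
    · omega
    · omega
    · have := hbd x hx; omega
  · rcases mem_of_mem_trade hk' with rfl | rfl | hk'
    · omega
    · omega
    · exact hk hk'
  · rw [parts_trade, count_cons_self, count_cons_of_ne hsj.ne, count_eq_zero_of_notMem hs_notMem]
  · rw [parts_trade, count_cons_of_ne hsj.ne', count_cons_self,
      count_eq_zero_of_notMem hjs_notMem]
  · rcases mem_of_mem_trade hi with h | h | h
    · exact hi₁ (Nat.eq_of_mul_eq_mul_right hs (h.trans (one_mul s).symm))
    · exact hij (Nat.eq_of_mul_eq_mul_right hs h)
    · obtain _ | _ | i := i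
      · exact absurd (p.parts_pos h) (by simp)
      · exact hi₁ rfl
      · exact hmul (i + 2) (by omega) h

end trade

theorem eq_of_trade_eq {p₁ p₂ : n.Partition} {s j₁ j₂ : ℕ} {hs : 0 < s} {hj₁ : 2 ≤ j₁}
    {hj₂ : 2 ≤ j₂} {hc₁ : s ≤ p₁.parts.count j₁} {hc₂ : s ≤ p₂.parts.count j₂} (h3j₁ : 3 ≤ j₁)
    (hmul : ∀ a : ℕ, 2 ≤ a → a * s ∉ p₂.parts) (h : p₁.trade hs hj₁ hc₁ = p₂.trade hs hj₂ hc₂) :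
    p₁ = p₂ := by
  obtain rfl : j₁ = j₂ := by
    have hmem : (j₁ - 1) * s ∈ (p₂.trade hs hj₂ hc₂).parts := h ▸ by simp [parts_trade]
    rcases mem_of_mem_trade hmem with h' | h' | h'
    · have := Nat.eq_of_mul_eq_mul_right hs (h'.trans (one_mul s).symm); omega
    · have := Nat.eq_of_mul_eq_mul_right hs h'; omega
    · exact absurd h' (hmul _ (by omega))
  exact eq_of_replace_eq h

end Nat.Partition

open Nat.Partition in
theorem stmt_12_general (s L k : ℕ) (hs : 1 ≤ s)
    (hL : 2 * s ^ 3 + 5 * s ^ 2 + 1 ≤ L) (hkL : L ≤ k) (n : ℕ) :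
    -- `C²_{L,s,2}(n)`: partitions of `n` with all parts in `{s+1,…,s+L}`, no part equal
    -- to `k`, no part equal to `a·s` for any `a ≥ 2`, and some part `j` with
    -- `s+1 ≤ j ≤ 2s²+5s−1` occurring at least `s` times.
    Nat.card {p : n.Partition //
        (∀ j ∈ p.parts, s + 1 ≤ j ∧ j ≤ s + L) ∧ k ∉ p.parts ∧
        (∀ a : ℕ, 2 ≤ a → a * s ∉ p.parts) ∧
        ∃ j : ℕ, s + 1 ≤ j ∧ j ≤ 2 * s ^ 2 + 5 * s - 1 ∧ s ≤ Multiset.count j p.parts}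
    -- `F²_{L,s,k}(n)`: partitions of `n` with smallest part `s`, largest part at most
    -- `s+L`, no part equal to `k`, in which `s` occurs exactly once, some part `i·s` with
    -- `i ≥ 2` occurs exactly once, and `j·s` does not occur for any `j ∉ {1, i}`.
    ≤ Nat.card {p : n.Partition //
        (s ∈ p.parts ∧ ∀ j ∈ p.parts, s ≤ j ∧ j ≤ s + L) ∧ k ∉ p.parts ∧
        Multiset.count s p.parts = 1 ∧
        ∃ i : ℕ, 2 ≤ i ∧ Multiset.count (i * s) p.parts = 1 ∧
          ∀ j : ℕ, j ≠ 1 → j ≠ i → j * s ∉ p.parts} := by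
  change Nat.card (C2 L s k n) ≤ Nat.card (F2 L s k n)
  choose j hj₁ hj₂ hcount using fun p : C2 L s k n => p.2.2.2.2
  have hj : ∀ p, 3 ≤ j p := fun p => three_le_of_le_count p.1 hs (hj₁ p) (hcount p) p.2.2.2.1
  refine Nat.card_le_card_of_injective
    (fun p => ⟨p.1.trade hs (Nat.le_of_succ_le (hj p)) (hcount p),
      trade_mem_F2 hL hkL p.2 (hj p) (hj₂ p)⟩) fun p₁ p₂ h => ?_
  exact Subtype.ext (eq_of_trade_eq (hj p₁) p₂.2.2.2.1 (Subtype.mk.inj h))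

theorem stmt_12 (s L k : ℕ) (hs : 1 ≤ s)
    (hL : 2 * s ^ 3 + 5 * s ^ 2 + 1 ≤ L) (hkL : L ≤ k) (hk : k ≤ s + L) (n : ℕ) :
    -- `C²_{L,s,2}(n)`: partitions of `n` with all parts in `{s+1,…,s+L}`, no part equal
    -- to `k`, no part equal to `a·s` for any `a ≥ 2`, and some part `j` with
    -- `s+1 ≤ j ≤ 2s²+5s−1` occurring at least `s` times.
    Nat.card {p : n.Partition //
        (∀ j ∈ p.parts, s + 1 ≤ j ∧ j ≤ s + L) ∧ k ∉ p.parts ∧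
        (∀ a : ℕ, 2 ≤ a → a * s ∉ p.parts) ∧
        ∃ j : ℕ, s + 1 ≤ j ∧ j ≤ 2 * s ^ 2 + 5 * s - 1 ∧ s ≤ Multiset.count j p.parts}
    -- `F²_{L,s,k}(n)`: partitions of `n` with smallest part `s`, largest part at most
    -- `s+L`, no part equal to `k`, in which `s` occurs exactly once, some part `i·s` with
    -- `i ≥ 2` occurs exactly once, and `j·s` does not occur for any `j ∉ {1, i}`.
    ≤ Nat.card {p : n.Partition //
        (s ∈ p.parts ∧ ∀ j ∈ p.parts, s ≤ j ∧ j ≤ s + L) ∧ k ∉ p.parts ∧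
        Multiset.count s p.parts = 1 ∧
        ∃ i : ℕ, 2 ≤ i ∧ Multiset.count (i * s) p.parts = 1 ∧
          ∀ j : ℕ, j ≠ 1 → j ≠ i → j * s ∉ p.parts} :=
  stmt_12_general s L k hs hL hkL n
end

section
/- Let s ≥ 1, L ≥ 2s³ + 5s² + 1 and L ≤ k ≤ s + L be integers, and let n ≥ 2s⁵ + 8s⁴ + s³ − 14s² + 3s + 1. Then the number of partitions in C³_{L,s,2}(n) is at most the number of partitions in F³_{L,s,k}(n), where: C³_{L,s,2}(n) is the set of partitions of n with all parts in {s+1, …, s+L}, with no part equal to k, with no part equal to a·s for any integer a ≥ 2, and in which every part j with s+1 ≤ j ≤ 2s² + 5s − 1 occurs at most s − 1 times; and F³_{L,s,k}(n) is the set of partitions of n with smallest part s, largest part at most s+L, no part equal to k, in which the part s occurs exactly once and the multiplicities g_{2s} and g_{3s} of the parts 2s and 3s satisfy g_{2s} + g_{3s} ≥ 2. -/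
/-!
An injection from `C` to `F`. A partition in `C` has a part `j > (2s+5)s`: otherwise all
parts lie in `(s, (2s+5)s)` with multiplicity `< s`, so `n ≤ (s-1) · ∑_{s<i<(2s+5)s} i`,
which is one less than the bound on `n`. As `s ∤ j`, write `j = s + (2a+3b)s + (s+1)(s+ρ)`
with `0 < ρ < s` and `a + b ≥ 2`, and replace `j` by the parts `s`, `a × 2s`, `b × 3s`,
`(s+1) × (s+ρ)`. The image is in `F`, and it determines `a`, `b` (multiplicities of `2s`,
`3s`, absent from `C`) and `ρ` (the only part in `(s, 2s)` occurring more than `s` times),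
hence `j` and the original partition.
-/

open Multiset

def splitBlock (s a b ρ : ℕ) : Multiset ℕ :=
  s ::ₘ (replicate a (2 * s) + replicate b (3 * s) + replicate (s + 1) (s + ρ))

lemma eq_of_mem_splitBlock {s a b ρ x : ℕ} (h : x ∈ splitBlock s a b ρ) :
    x = s ∨ x = 2 * s ∨ x = 3 * s ∨ x = s + ρ := by
  simp only [splitBlock, mem_cons, mem_add, mem_replicate] at h
  tauto

lemma sum_splitBlock (s a b ρ : ℕ) :
    (splitBlock s a b ρ).sum = s + (2 * a + 3 * b) * s + (s + 1) * (s + ρ) := by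
  simp only [splitBlock, sum_cons, sum_add, sum_replicate, smul_eq_mul]
  ring

lemma count_splitBlock (s a b ρ x : ℕ) :
    count x (splitBlock s a b ρ) =
      (if x = s then 1 else 0) + (if x = 2 * s then a else 0) +
      (if x = 3 * s then b else 0) + (if x = s + ρ then s + 1 else 0) := by
  simp only [splitBlock, count_cons, count_add, count_replicate]
  split_ifs <;> omega

lemma exists_splitBlock_sum_eq {s j : ℕ} (hs : 0 < s) (hsj : ¬ s ∣ j)
    (hj : (2 * s + 5) * s ≤ j) :
    ∃ a b ρ, 0 < ρ ∧ ρ < s ∧ 2 ≤ a + b ∧ (splitBlock s a b ρ).sum = j := by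
  have hρ : 0 < j % s := Nat.pos_of_ne_zero fun h => hsj (Nat.dvd_of_mod_eq_zero h)
  have hρs : j % s < s := Nat.mod_lt j hs
  have hq : 2 * s + 5 ≤ j / s := (Nat.le_div_iff_mul_le hs).2 hj
  set t := j / s - (s + 2 + j % s)
  refine ⟨(t - 3 * (t % 2)) / 2, t % 2, j % s, hρ, hρs, by omega, ?_⟩
  have ht : 2 * ((t - 3 * (t % 2)) / 2) + 3 * (t % 2) = t := by omega
  rw [sum_splitBlock, ht]
  have hdiv := Nat.div_add_mod j s
  have : t + (s + 2 + j % s) = j / s := by omega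
  rw [← this] at hdiv
  linarith

lemma Multiset.sum_le_mul_sum_of_count_le {m : Multiset ℕ} {S : Finset ℕ} {c : ℕ}
    (hS : ∀ x ∈ m, x ∈ S) (hc : ∀ x ∈ m, count x m ≤ c) :
    m.sum ≤ c * ∑ x ∈ S, x := by
  classical
  rw [Finset.sum_multiset_count, Finset.mul_sum]
  calc ∑ x ∈ m.toFinset, count x m • x ≤ ∑ x ∈ m.toFinset, c * x :=
        Finset.sum_le_sum fun x hx =>
          Nat.mul_le_mul_right x (hc x (mem_toFinset.1 hx))
    _ ≤ ∑ x ∈ S, c * x :=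
        Finset.sum_le_sum_of_subset fun x hx => hS x (mem_toFinset.1 hx)

lemma Finset.sum_Ico_id_mul_two {a b : ℕ} (h : a ≤ b) :
    (∑ i ∈ Finset.Ico a b, i) * 2 + a * (a - 1) = b * (b - 1) := by
  rw [← Finset.sum_range_id_mul_two, ← Finset.sum_range_id_mul_two,
    ← Finset.sum_range_add_sum_Ico _ h]
  ring

lemma exists_large_mem {s : ℕ} {m : Multiset ℕ} (hs : 1 ≤ s)
    (hsum : 2 * s ^ 5 + 8 * s ^ 4 + s ^ 3 + 3 * s + 1 ≤ m.sum + 14 * s ^ 2)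
    (hlow : ∀ x ∈ m, s + 1 ≤ x) (hN : (2 * s + 5) * s ∉ m)
    (hcount : ∀ x, s + 1 ≤ x → x ≤ 2 * s ^ 2 + 5 * s - 1 → count x m ≤ s - 1) :
    ∃ x ∈ m, (2 * s + 5) * s < x := by
  by_contra! hsmall
  have hmem : ∀ x ∈ m, x ∈ Finset.Ico (s + 1) ((2 * s + 5) * s) := fun x hx =>
    Finset.mem_Ico.2 ⟨hlow x hx, lt_of_le_of_ne (hsmall x hx) (ne_of_mem_of_not_mem hx hN)⟩
  have hle := m.sum_le_mul_sum_of_count_le hmem fun x hx =>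
    hcount x (hlow x hx) (by
      have := (Finset.mem_Ico.1 (hmem x hx)).2
      have : (2 * s + 5) * s = 2 * s ^ 2 + 5 * s := by ring
      omega)
  have hgauss := Finset.sum_Ico_id_mul_two (a := s + 1) (b := (2 * s + 5) * s) (by nlinarith)
  obtain ⟨d, rfl⟩ : ∃ d, s = d + 1 := ⟨s - 1, by omega⟩
  simp only [Nat.add_sub_cancel] at hle hgauss
  have : (2 * (d + 1) + 5) * (d + 1) - 1 = 2 * d ^ 2 + 9 * d + 6 := by
    zify [show 1 ≤ (2 * (d + 1) + 5) * (d + 1) by nlinarith]; ring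
  rw [this] at hgauss
  nlinarith

def BlockFree (s : ℕ) (m : Multiset ℕ) : Prop :=
  2 * s ∉ m ∧ 3 * s ∉ m ∧ ∀ x, s < x → x < 2 * s → count x m ≤ s

lemma BlockFree.mono {s : ℕ} {m m' : Multiset ℕ} (h : BlockFree s m) (hle : m' ≤ m) :
    BlockFree s m' :=
  ⟨fun h2 => h.1 (mem_of_le hle h2), fun h3 => h.2.1 (mem_of_le hle h3),
    fun x hx hx' => (count_le_of_le x hle).trans (h.2.2 x hx hx')⟩

lemma splitBlock_params_eq_of_add_eq {s a b ρ a' b' ρ' : ℕ} {r r' : Multiset ℕ}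
    (hρ : 0 < ρ) (hρs : ρ < s) (hρ' : 0 < ρ') (hρs' : ρ' < s)
    (hr : BlockFree s r) (hr' : BlockFree s r')
    (h : r + splitBlock s a b ρ = r' + splitBlock s a' b' ρ') :
    a = a' ∧ b = b' ∧ ρ = ρ' := by
  have hcount x : count x r + count x (splitBlock s a b ρ) =
      count x r' + count x (splitBlock s a' b' ρ') := by
    rw [← count_add, ← count_add, h]
  have h2 := hcount (2 * s)
  have h3 := hcount (3 * s)
  rw [count_eq_zero.2 hr.1, count_eq_zero.2 hr'.1, count_splitBlock, count_splitBlock] at h2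
  rw [count_eq_zero.2 hr.2.1, count_eq_zero.2 hr'.2.1, count_splitBlock,
    count_splitBlock] at h3
  refine ⟨by split_ifs at h2 <;> omega, by split_ifs at h3 <;> omega, ?_⟩
  -- `s + ρ` occurs at least `s + 1` times on the left, at most `s` times in `r'`
  by_contra hne
  have hρ := hcount (s + ρ)
  have hr'ρ := hr'.2.2 (s + ρ) (by omega) (by omega)
  rw [count_splitBlock, count_splitBlock] at hρ
  split_ifs at hρ <;> omega

lemma eq_of_erase_add_splitBlock_eq {s a b ρ a' b' ρ' j j' : ℕ} {m m' : Multiset ℕ}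
    (hρ : 0 < ρ) (hρs : ρ < s) (hρ' : 0 < ρ') (hρs' : ρ' < s)
    (hm : BlockFree s m) (hm' : BlockFree s m') (hj : j ∈ m) (hj' : j' ∈ m')
    (hsum : (splitBlock s a b ρ).sum = j) (hsum' : (splitBlock s a' b' ρ').sum = j')
    (h : m.erase j + splitBlock s a b ρ = m'.erase j' + splitBlock s a' b' ρ') :
    m = m' := by
  obtain ⟨rfl, rfl, rfl⟩ := splitBlock_params_eq_of_add_eq hρ hρs hρ' hρs'
    (hm.mono (erase_le j m)) (hm'.mono (erase_le j' m')) h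
  obtain rfl : j = j' := hsum.symm.trans hsum'
  rw [← cons_erase hj, ← cons_erase hj', add_right_cancel h]

section Partitions

variable {s L k n : ℕ}

/-- `C³_{L,s,2}(n)`. -/
def IsCPartition (s L k : ℕ) (p : n.Partition) : Prop :=
  (∀ j ∈ p.parts, s + 1 ≤ j ∧ j ≤ s + L) ∧ k ∉ p.parts ∧
    (∀ a : ℕ, 2 ≤ a → a * s ∉ p.parts) ∧
    ∀ j : ℕ, s + 1 ≤ j → j ≤ 2 * s ^ 2 + 5 * s - 1 → count j p.parts ≤ s - 1

/-- `F³_{L,s,k}(n)`. -/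
def IsFPartition (s L k : ℕ) (p : n.Partition) : Prop :=
  (s ∈ p.parts ∧ ∀ j ∈ p.parts, s ≤ j ∧ j ≤ s + L) ∧ k ∉ p.parts ∧
    count s p.parts = 1 ∧ 2 ≤ count (2 * s) p.parts + count (3 * s) p.parts

lemma IsCPartition.blockFree {p : n.Partition} (hp : IsCPartition s L k p) :
    BlockFree s p.parts :=
  ⟨hp.2.2.1 2 le_rfl, hp.2.2.1 3 (by norm_num), fun x hx hx' =>
    (hp.2.2.2 x hx (by have := Nat.le_self_pow two_ne_zero s; omega)).trans
      (Nat.sub_le s 1)⟩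

lemma IsCPartition.exists_splitBlock (hs : 1 ≤ s)
    (hn : 2 * s ^ 5 + 8 * s ^ 4 + s ^ 3 + 3 * s + 1 ≤ n + 14 * s ^ 2)
    {p : n.Partition} (hp : IsCPartition s L k p) :
    ∃ j ∈ p.parts, ∃ a b ρ, 0 < ρ ∧ ρ < s ∧ 2 ≤ a + b ∧
      (splitBlock s a b ρ).sum = j := by
  obtain ⟨hbounds, -, hmul, hcount⟩ := hp
  obtain ⟨j, hj, hjlarge⟩ := exists_large_mem hs (by rwa [p.parts_sum])
    (fun x hx => (hbounds x hx).1) (hmul _ (by omega)) hcount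
  have hsj : ¬ s ∣ j := by
    rintro ⟨c, rfl⟩
    exact hmul c (by nlinarith) (by rwa [mul_comm] at hj)
  exact ⟨j, hj, exists_splitBlock_sum_eq hs hsj hjlarge.le⟩

lemma IsCPartition.isFPartition_of_parts_eq (hL : 2 * s ^ 3 + 5 * s ^ 2 + 1 ≤ L)
    (hkL : L ≤ k) {p q : n.Partition} (hp : IsCPartition s L k p) {j a b ρ : ℕ}
    (hρ : 0 < ρ) (hρs : ρ < s) (hab : 2 ≤ a + b)
    (hq : q.parts = p.parts.erase j + splitBlock s a b ρ) : IsFPartition s L k q := by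
  obtain ⟨hbounds, hk, hmul, -⟩ := hp
  have h3s : 3 * s < L := by nlinarith
  have hsp : count s (p.parts.erase j) = 0 :=
    count_eq_zero.2 fun h => by have := hbounds s (mem_of_mem_erase h); omega
  have h2p : count (2 * s) (p.parts.erase j) = 0 :=
    count_eq_zero.2 fun h => hmul 2 le_rfl (mem_of_mem_erase h)
  have h3p : count (3 * s) (p.parts.erase j) = 0 :=
    count_eq_zero.2 fun h => hmul 3 (by norm_num) (mem_of_mem_erase h)
  unfold IsFPartition
  rw [hq]
  refine ⟨⟨mem_add.2 (Or.inr (mem_cons_self _ _)), fun x hx => ?_⟩, fun hkq => ?_, ?_, ?_⟩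
  · rcases mem_add.1 hx with hx | hx
    · have := hbounds x (mem_of_mem_erase hx); omega
    · rcases eq_of_mem_splitBlock hx with rfl | rfl | rfl | rfl <;> omega
  · rcases mem_add.1 hkq with hkq | hkq
    · exact hk (mem_of_mem_erase hkq)
    · rcases eq_of_mem_splitBlock hkq with rfl | rfl | rfl | rfl <;> omega
  · rw [count_add, hsp, count_splitBlock]
    split_ifs <;> omega
  · rw [count_add, count_add, h2p, h3p, count_splitBlock, count_splitBlock]
    split_ifs <;> omega

lemma IsCPartition.exists_isFPartition (hs : 1 ≤ s) (hL : 2 * s ^ 3 + 5 * s ^ 2 + 1 ≤ L)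
    (hkL : L ≤ k) (hn : 2 * s ^ 5 + 8 * s ^ 4 + s ^ 3 + 3 * s + 1 ≤ n + 14 * s ^ 2)
    {p : n.Partition} (hp : IsCPartition s L k p) :
    ∃ q : n.Partition, IsFPartition s L k q ∧
      ∃ j ∈ p.parts, ∃ a b ρ, 0 < ρ ∧ ρ < s ∧ (splitBlock s a b ρ).sum = j ∧
        q.parts = p.parts.erase j + splitBlock s a b ρ := by
  obtain ⟨j, hj, a, b, ρ, hρ, hρs, hab, hsum⟩ := hp.exists_splitBlock hs hn
  have hpos {x : ℕ} (hx : x ∈ p.parts.erase j + splitBlock s a b ρ) : 0 < x := by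
    rcases mem_add.1 hx with hx | hx
    · exact p.parts_pos (mem_of_mem_erase hx)
    · rcases eq_of_mem_splitBlock hx with rfl | rfl | rfl | rfl <;> omega
  have hqsum : (p.parts.erase j + splitBlock s a b ρ).sum = n := by
    rw [sum_add, hsum, add_comm, ← sum_cons, cons_erase hj, p.parts_sum]
  let q : n.Partition := ⟨_, hpos, hqsum⟩
  exact ⟨q, hp.isFPartition_of_parts_eq hL hkL hρ hρs hab rfl,
    j, hj, a, b, ρ, hρ, hρs, hsum, rfl⟩

end Partitions

theorem stmt_13_general (s L k : ℕ) (hs : 1 ≤ s)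
    (hL : 2 * s ^ 3 + 5 * s ^ 2 + 1 ≤ L) (hkL : L ≤ k)
    (n : ℕ) (hn : 2 * s ^ 5 + 8 * s ^ 4 + s ^ 3 + 3 * s + 1 ≤ n + 14 * s ^ 2) :
    -- `C³_{L,s,2}(n)`: partitions of `n` with all parts in `{s+1,…,s+L}`, no part equal
    -- to `k`, no part equal to `a·s` for any `a ≥ 2`, and every part `j` with
    -- `s+1 ≤ j ≤ 2s²+5s−1` occurring at most `s−1` times.
    Nat.card {p : n.Partition //
        (∀ j ∈ p.parts, s + 1 ≤ j ∧ j ≤ s + L) ∧ k ∉ p.parts ∧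
        (∀ a : ℕ, 2 ≤ a → a * s ∉ p.parts) ∧
        ∀ j : ℕ, s + 1 ≤ j → j ≤ 2 * s ^ 2 + 5 * s - 1 →
          Multiset.count j p.parts ≤ s - 1}
    -- `F³_{L,s,k}(n)`: partitions of `n` with smallest part `s`, largest part at most
    -- `s+L`, no part equal to `k`, in which `s` occurs exactly once and
    -- `g_{2s} + g_{3s} ≥ 2`.
    ≤ Nat.card {p : n.Partition //
        (s ∈ p.parts ∧ ∀ j ∈ p.parts, s ≤ j ∧ j ≤ s + L) ∧ k ∉ p.parts ∧
        Multiset.count s p.parts = 1 ∧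
        2 ≤ Multiset.count (2 * s) p.parts + Multiset.count (3 * s) p.parts} := by
  change Nat.card {p : n.Partition // IsCPartition s L k p} ≤
    Nat.card {q : n.Partition // IsFPartition s L k q}
  choose q hq j hj a b ρ hρ hρs hsum hparts using
    fun p : {p : n.Partition // IsCPartition s L k p} => p.2.exists_isFPartition hs hL hkL hn
  refine Nat.card_le_card_of_injective (fun p => ⟨q p, hq p⟩) fun p p' h => ?_
  have hqq : (q p).parts = (q p').parts := congrArg (fun q => q.1.parts) h
  rw [hparts, hparts] at hqq
  exact Subtype.ext <| Nat.Partition.ext <|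
    eq_of_erase_add_splitBlock_eq (hρ p) (hρs p) (hρ p') (hρs p')
      p.2.blockFree p'.2.blockFree (hj p) (hj p') (hsum p) (hsum p') hqq

/-- The hypothesis `2s⁵ + 8s⁴ + s³ − 14s² + 3s + 1 ≤ n` is stated as
`2s⁵ + 8s⁴ + s³ + 3s + 1 ≤ n + 14s²` to avoid truncated subtraction in ℕ. -/
theorem stmt_13 (s L k : ℕ) (hs : 1 ≤ s)
    (hL : 2 * s ^ 3 + 5 * s ^ 2 + 1 ≤ L) (hkL : L ≤ k) (hk : k ≤ s + L)
    (n : ℕ) (hn : 2 * s ^ 5 + 8 * s ^ 4 + s ^ 3 + 3 * s + 1 ≤ n + 14 * s ^ 2) :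
    -- `C³_{L,s,2}(n)`: partitions of `n` with all parts in `{s+1,…,s+L}`, no part equal
    -- to `k`, no part equal to `a·s` for any `a ≥ 2`, and every part `j` with
    -- `s+1 ≤ j ≤ 2s²+5s−1` occurring at most `s−1` times.
    Nat.card {p : n.Partition //
        (∀ j ∈ p.parts, s + 1 ≤ j ∧ j ≤ s + L) ∧ k ∉ p.parts ∧
        (∀ a : ℕ, 2 ≤ a → a * s ∉ p.parts) ∧
        ∀ j : ℕ, s + 1 ≤ j → j ≤ 2 * s ^ 2 + 5 * s - 1 →
          Multiset.count j p.parts ≤ s - 1}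
    -- `F³_{L,s,k}(n)`: partitions of `n` with smallest part `s`, largest part at most
    -- `s+L`, no part equal to `k`, in which `s` occurs exactly once and
    -- `g_{2s} + g_{3s} ≥ 2`.
    ≤ Nat.card {p : n.Partition //
        (s ∈ p.parts ∧ ∀ j ∈ p.parts, s ≤ j ∧ j ≤ s + L) ∧ k ∉ p.parts ∧
        Multiset.count s p.parts = 1 ∧
        2 ≤ Multiset.count (2 * s) p.parts + Multiset.count (3 * s) p.parts} :=
  stmt_13_general s L k hs hL hkL n hn
end

section
/- Let s ≥ 1, L ≥ 2s³ + 5s² + 1 and L ≤ k ≤ s + L be integers, and write k = rs + t with 0 ≤ t ≤ s − 1. Then for every integer n ≥ 0, the number of partitions in C⁴_{L,s,2}(n) is at most the number of partitions in F⁴_{L,s,k}(n), where: C⁴_{L,s,2}(n) is the set of partitions of n with all parts in {s+1, …, s+L} in which the part k occurs at least twice; and F⁴_{L,s,k}(n) is the set of partitions of n with smallest part s, largest part at most s+L, no part equal to k, in which the part s occurs at least 2r − 4 times. -/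
theorem stmt_14 (s L k r t : ℕ) (hs : 1 ≤ s)
    (hL : 2 * s ^ 3 + 5 * s ^ 2 + 1 ≤ L) (hkL : L ≤ k) (hk : k ≤ s + L)
    (hkrt : k = r * s + t) (ht : t ≤ s - 1) (n : ℕ) :
    -- `C⁴_{L,s,2}(n)`: partitions of `n` with all parts in `{s+1,…,s+L}` in which the
    -- part `k` occurs at least twice.
    Nat.card {p : n.Partition //
        (∀ j ∈ p.parts, s + 1 ≤ j ∧ j ≤ s + L) ∧ 2 ≤ Multiset.count k p.parts}
    -- `F⁴_{L,s,k}(n)`: partitions of `n` with smallest part `s`, largest part at most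
    -- `s+L`, no part equal to `k`, in which the part `s` occurs at least `2r − 4` times
    -- (stated as `2r ≤ g_s + 4` to avoid truncated subtraction in ℕ).
    ≤ Nat.card {p : n.Partition //
        (s ∈ p.parts ∧ ∀ j ∈ p.parts, s ≤ j ∧ j ≤ s + L) ∧ k ∉ p.parts ∧
        2 * r ≤ Multiset.count s p.parts + 4} := by
  classical
  have hts : t + 1 ≤ s := by omega
  have hLk : 2 * s ^ 3 + 5 * s ^ 2 + 1 ≤ k := le_trans hL hkL
  have hks2 : 2 * s + 1 ≤ k := by nlinarith
  have hk5 : 5 * s + 2 * t + 1 ≤ k := by nlinarith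
  have h3L : 3 * s + 2 * t ≤ L := by nlinarith
  have hr3 : 3 ≤ r := by
    by_contra h
    push_neg at h
    have : r * s ≤ 2 * s := Nat.mul_le_mul_right s (by omega)
    nlinarith
  set Q : n.Partition → Multiset ℕ := fun p =>
    p.parts.filter (fun j => ¬ j = k)
      + Multiset.replicate (Multiset.count k p.parts - 2 + (2 * r - 4)) s
      + Multiset.replicate (Multiset.count k p.parts - 2) (k - s)
      + {4 * s + 2 * t} with hQdef
  have hcount : ∀ p : n.Partition, ∀ j, Multiset.count j (Q p) =
      (if j = k then 0 else Multiset.count j p.parts)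
      + (if j = s then Multiset.count k p.parts - 2 + (2 * r - 4) else 0)
      + (if j = k - s then Multiset.count k p.parts - 2 else 0)
      + (if j = 4 * s + 2 * t then 1 else 0) := by
    intro p j
    simp only [hQdef, Multiset.count_add, Multiset.count_filter,
      Multiset.count_replicate, Multiset.count_singleton]
    split_ifs <;> omega
  -- numeric inequalities for distinguishing the special parts
  have hne1 : ¬ (s = k) := by omega
  have hne2 : ¬ (s = k - s) := by omega
  have hne3 : ¬ (s = 4 * s + 2 * t) := by omega
  have hne4 : ¬ (k = k - s) := by omega
  have hne5 : ¬ (k = 4 * s + 2 * t) := by omega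
  -- count of s in p.parts is 0 for p in the source set
  have hxs : ∀ p : n.Partition, (∀ j ∈ p.parts, s + 1 ≤ j ∧ j ≤ s + L) →
      Multiset.count s p.parts = 0 := by
    intro p hp1
    refine Multiset.count_eq_zero.2 fun hmem => ?_
    have := hp1 s hmem
    omega
  have hcs : ∀ p : n.Partition, (∀ j ∈ p.parts, s + 1 ≤ j ∧ j ≤ s + L) →
      Multiset.count s (Q p) = Multiset.count k p.parts - 2 + (2 * r - 4) := by
    intro p hp1
    have h1 := hcount p s
    rw [if_neg hne1, if_pos rfl, if_neg hne2, if_neg hne3, hxs p hp1] at h1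
    omega
  have hsum' : ∀ p : n.Partition, 2 ≤ Multiset.count k p.parts → (Q p).sum = n := by
    intro p hp2
    have hsum0 : (p.parts.filter (fun j => ¬ j = k)).sum
        + Multiset.count k p.parts * k = n := by
      conv_rhs => rw [← p.parts_sum, ← Multiset.filter_add_not (fun j => j = k) p.parts]
      rw [Multiset.sum_add, Multiset.filter_eq', Multiset.sum_replicate, smul_eq_mul, add_comm]
    obtain ⟨a, ha⟩ : ∃ a, Multiset.count k p.parts = a + 2 := ⟨Multiset.count k p.parts - 2, by omega⟩
    obtain ⟨b, hb⟩ : ∃ b, r = b + 3 := ⟨r - 3, by omega⟩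
    have h1 : k = b * s + 3 * s + t := by rw [hkrt, hb]; ring
    have hkssub : k - s = b * s + 2 * s + t := by
      generalize hB : b * s = B at h1 ⊢; omega
    have key : (Multiset.count k p.parts - 2 + (2 * r - 4)) * s
        + (Multiset.count k p.parts - 2) * (k - s) + (4 * s + 2 * t)
        = Multiset.count k p.parts * k := by
      rw [ha, hb, hkssub]
      rw [show a + 2 - 2 + (2 * (b + 3) - 4) = a + (2 * b + 2) by omega,
        show a + 2 - 2 = a by omega]
      conv_rhs => rw [h1]
      ring
    simp only [hQdef, Multiset.sum_add, Multiset.sum_replicate, smul_eq_mul,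
      Multiset.sum_singleton]
    linarith [key, hsum0]
  have hpos : ∀ p : n.Partition, (∀ j ∈ p.parts, s + 1 ≤ j ∧ j ≤ s + L) →
      ∀ j ∈ Q p, 0 < j := by
    intro p hp1 j hj
    simp only [hQdef, Multiset.mem_add, Multiset.mem_filter, Multiset.mem_singleton,
      Multiset.mem_replicate] at hj
    rcases hj with (((⟨hj, -⟩ | ⟨-, rfl⟩) | ⟨-, rfl⟩) | rfl)
    · exact p.parts_pos hj
    · omega
    · omega
    · omega
  have hprop : ∀ p : n.Partition, (∀ j ∈ p.parts, s + 1 ≤ j ∧ j ≤ s + L) →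
      2 ≤ Multiset.count k p.parts →
      ((s ∈ Q p ∧ ∀ j ∈ Q p, s ≤ j ∧ j ≤ s + L) ∧ k ∉ Q p ∧
        2 * r ≤ Multiset.count s (Q p) + 4) := by
    intro p hp1 hp2
    refine ⟨⟨?_, ?_⟩, ?_, ?_⟩
    · rw [← Multiset.count_pos, hcs p hp1]; omega
    · intro j hj
      simp only [hQdef, Multiset.mem_add, Multiset.mem_filter, Multiset.mem_singleton,
        Multiset.mem_replicate] at hj
      rcases hj with (((⟨hj, -⟩ | ⟨-, rfl⟩) | ⟨-, rfl⟩) | rfl)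
      · have := hp1 j hj; omega
      · omega
      · omega
      · omega
    · rw [← Multiset.count_eq_zero]
      have h1 := hcount p k
      rw [if_pos rfl, if_neg (fun h => hne1 h.symm), if_neg hne4, if_neg hne5] at h1
      omega
    · rw [hcs p hp1]; omega
  refine Nat.card_le_card_of_injective
    (fun x => ⟨⟨Q x.1, fun {j} hj => hpos x.1 x.2.1 j hj, hsum' x.1 x.2.2⟩, hprop x.1 x.2.1 x.2.2⟩) ?_
  rintro ⟨p, hp1, hp2⟩ ⟨q, hq1, hq2⟩ h
  have hQ : Q p = Q q := congrArg (fun z => z.1.parts) h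
  have hm : Multiset.count k p.parts = Multiset.count k q.parts := by
    have h1 := hcs p hp1
    have h2 := hcs q hq1
    rw [hQ, h2] at h1
    omega
  have hpq : p.parts = q.parts := by
    ext j
    by_cases hj : j = k
    · subst hj; exact hm
    · have h1 := hcount p j
      have h2 := hcount q j
      rw [hQ, h2] at h1
      split_ifs at h1 <;> omega
  exact Subtype.ext (Nat.Partition.ext hpq)
end

section
/- Let s ≥ 1, L ≥ 2s³ + 5s² + 1 and L ≤ k ≤ s + L be integers, and write k = rs + t with 0 ≤ t ≤ s − 1. Then for every integer n ≥ 0, the number of partitions in C⁵_{L,s,2}(n) is at most the number of partitions in F⁵_{L,s,k}(n), where: C⁵_{L,s,2}(n) is the set of partitions of n with all parts in {s+1, …, s+L} in which the part k occurs exactly once; and F⁵_{L,s,k}(n) is the set of partitions of n with smallest part s, largest part at most s+L, no part equal to k, in which the part s occurs exactly r − 4 times and the part 2s occurs at least once. -/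
theorem stmt_15 (s L k r t : ℕ) (hs : 1 ≤ s)
    (hL : 2 * s ^ 3 + 5 * s ^ 2 + 1 ≤ L) (hkL : L ≤ k) (hk : k ≤ s + L)
    (hkrt : k = r * s + t) (ht : t ≤ s - 1) (n : ℕ) :
    Nat.card {p : n.Partition //
        (∀ j ∈ p.parts, s + 1 ≤ j ∧ j ≤ s + L) ∧ Multiset.count k p.parts = 1}
    ≤ Nat.card {p : n.Partition //
        (s ∈ p.parts ∧ ∀ j ∈ p.parts, s ≤ j ∧ j ≤ s + L) ∧ k ∉ p.parts ∧
        Multiset.count s p.parts + 4 = r ∧ 2 * s ∈ p.parts} := by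
  classical
  have ht' : t + 1 ≤ s := by omega
  have hr7 : 7 ≤ r := by nlinarith
  have hsk : s < k := by nlinarith
  have h2sk : 2 * s < k := by nlinarith
  have h2stk : 2 * s + t < k := by nlinarith
  have h2stL : 2 * s + t ≤ s + L := by nlinarith
  set A : Multiset ℕ := Multiset.replicate (r - 4) s + {2 * s, 2 * s + t} with hA
  have hAsum : A.sum = k := by
    rw [hA]
    simp [Multiset.sum_replicate, smul_eq_mul]
    have : (r - 4) * s + (2 * s + (2 * s + t)) = r * s + t := by
      have : r - 4 + 4 = r := by omega
      nlinarith [this]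
    omega
  have hAmem : ∀ j ∈ A, s ≤ j ∧ j ≤ s + L ∧ j ≠ k := by
    intro j hj
    rw [hA] at hj
    simp [Multiset.mem_replicate] at hj
    rcases hj with h | h | h <;> omega
  have hsA : s ∈ A := by
    rw [hA]
    exact Multiset.mem_add.2 (Or.inl (Multiset.mem_replicate.2 ⟨by omega, rfl⟩))
  have h2sA : 2 * s ∈ A := by rw [hA]; simp
  have hcountA : Multiset.count s A = r - 4 := by
    rw [hA]
    rw [Multiset.count_add, Multiset.count_replicate, if_pos rfl,
      show ({2 * s, 2 * s + t} : Multiset ℕ) = 2 * s ::ₘ {2 * s + t} from rfl,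
      Multiset.count_cons_of_ne (by omega), Multiset.count_singleton, if_neg (by omega)]
    omega
  have hkm : ∀ p : n.Partition, Multiset.count k p.parts = 1 → k ∈ p.parts := by
    intro p h
    rw [← Multiset.count_pos, h]; norm_num
  -- the injection
  refine Nat.card_le_card_of_injective (fun p =>
    ⟨⟨p.1.parts.erase k + A, ?_, ?_⟩, ?_, ?_, ?_, ?_⟩) ?_
  · intro i hi
    rcases Multiset.mem_add.1 hi with h | h
    · exact p.1.parts_pos (Multiset.mem_of_mem_erase h)
    · exact lt_of_lt_of_le hs (hAmem i h).1
  · have hck := hkm p.1 p.2.2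
    have := Multiset.cons_erase hck
    have hsum : p.1.parts.sum = k + (p.1.parts.erase k).sum := by
      conv_lhs => rw [← this]
      simp
    rw [Multiset.sum_add, hAsum]
    have := p.1.parts_sum
    omega
  · constructor
    · exact Multiset.mem_add.2 (Or.inr hsA)
    · intro j hj
      rcases Multiset.mem_add.1 hj with h | h
      · have := p.2.1 j (Multiset.mem_of_mem_erase h)
        omega
      · exact ⟨(hAmem j h).1, (hAmem j h).2.1⟩
  · intro hmem
    rcases Multiset.mem_add.1 hmem with h | h
    · have hc : Multiset.count k (p.1.parts.erase k) = 0 := by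
        rw [Multiset.count_erase_self, p.2.2]
      rw [← Multiset.count_pos, hc] at h
      omega
    · exact (hAmem k h).2.2 rfl
  · rw [Multiset.count_add, hcountA]
    have hc : Multiset.count s (p.1.parts.erase k) = 0 := by
      rw [Multiset.count_eq_zero]
      intro hmem
      have := p.2.1 s (Multiset.mem_of_mem_erase hmem)
      omega
    omega
  · exact Multiset.mem_add.2 (Or.inr h2sA)
  · intro p q hpq
    have hparts : p.1.parts.erase k + A = q.1.parts.erase k + A := by
      exact congrArg (fun x => x.1.parts) hpq
    have he : p.1.parts.erase k = q.1.parts.erase k := by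
      exact add_right_cancel hparts
    have hp := Multiset.cons_erase (hkm p.1 p.2.2)
    have hq := Multiset.cons_erase (hkm q.1 q.2.2)
    have : p.1.parts = q.1.parts := by rw [← hp, ← hq, he]
    exact Subtype.ext (Nat.Partition.ext this)
end

section
/- For all integers s ≥ 1 and L ≥ 3, the coefficients a_n defined by ∑_{n≥0} a_n q^n = (1 − q)/(q^s;q)_{L+1} in ℤ[[q]] satisfy a_n ~ n^{L−1} / ((L−1)!·s·(s+1)···(s+L)) as n → ∞; that is, a_n·(L−1)!·s·(s+1)···(s+L)/n^{L−1} tends to 1 as n → ∞. -/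
open PowerSeries Finset


theorem peel {α : Type*} [AddCommMonoid α] (f : ℕ → α) (m n : ℕ) (hm : 1 ≤ m) (h : m ≤ n) :
    ∑ j ∈ Finset.range (n / m + 1), f (n - j * m)
      = f n + ∑ j ∈ Finset.range ((n - m) / m + 1), f (n - m - j * m) := by
  rw [Nat.div_eq_sub_div hm h, Finset.sum_range_succ']
  simp only [Nat.zero_mul, Nat.sub_zero]
  rw [add_comm]
  congr 1
  apply Finset.sum_congr rfl
  intro j _
  rw [add_one_mul, ← Nat.sub_sub, Nat.sub_right_comm]

def rep : List ℕ → ℕ → ℕ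
  | [], n => if n = 0 then 1 else 0
  | m :: S, n => ∑ j ∈ Finset.range (n / m + 1), rep S (n - j * m)

theorem rep_cons (m : ℕ) (S : List ℕ) (n : ℕ) :
    rep (m :: S) n = ∑ j ∈ Finset.range (n / m + 1), rep S (n - j * m) := rfl

theorem rep_zero (S : List ℕ) : rep S 0 = 1 := by
  induction S with
  | nil => rfl
  | cons m S ih => simp [rep_cons, ih]

theorem rep_rec (m : ℕ) (S : List ℕ) (n : ℕ) (hm : 1 ≤ m) (h : m ≤ n) :
    rep (m :: S) n = rep S n + rep (m :: S) (n - m) := by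
  rw [rep_cons, rep_cons, peel _ m n hm h]

theorem rep_small (m : ℕ) (S : List ℕ) (n : ℕ) (h : n < m) :
    rep (m :: S) n = rep S n := by
  rw [rep_cons, Nat.div_eq_of_lt h]
  simp

theorem rep_mk_mul (m : ℕ) (S : List ℕ) (hm : 1 ≤ m) :
    (PowerSeries.mk fun n => (rep (m :: S) n : ℤ)) * (1 - X ^ m)
      = PowerSeries.mk fun n => (rep S n : ℤ) := by
  ext n
  rw [mul_sub, mul_one, map_sub, PowerSeries.coeff_mk, PowerSeries.coeff_mul_X_pow']
  by_cases h : m ≤ n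
  · rw [if_pos h, PowerSeries.coeff_mk, PowerSeries.coeff_mk, rep_rec m S n hm h]
    push_cast; ring
  · rw [if_neg h, PowerSeries.coeff_mk, rep_small m S n (by omega)]
    ring

theorem rep_mk_prod (S : List ℕ) (hS : ∀ x ∈ S, 1 ≤ x) :
    (PowerSeries.mk fun n => (rep S n : ℤ)) * (S.map (fun m => 1 - (X : PowerSeries ℤ) ^ m)).prod = 1 := by
  induction S with
  | nil =>
    simp only [List.map_nil, List.prod_nil, mul_one]
    ext n
    rw [PowerSeries.coeff_mk, PowerSeries.coeff_one]
    simp only [rep]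
    split <;> simp
  | cons m S ih =>
    have h1 : 1 ≤ m := hS m (List.mem_cons_self)
    rw [List.map_cons, List.prod_cons, ← mul_assoc, rep_mk_mul m S h1]
    exact ih (fun x hx => hS x (List.mem_cons_of_mem m hx))

theorem powA (k : ℕ) (a b : ℝ) (ha : 0 ≤ a) (hab : a ≤ b) :
    b ^ (k+1) - a ^ (k+1) ≤ (k+1) * (b - a) * b ^ k := by
  induction k with
  | zero => simp
  | succ k ih =>
    have hb : 0 ≤ b := ha.trans hab
    have h1 : a ^ (k+1) ≤ b ^ (k+1) := pow_le_pow_left₀ ha hab _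
    have : b ^ (k+2) - a ^ (k+2) = b * (b ^ (k+1) - a ^ (k+1)) + (b - a) * a ^ (k+1) := by
      ring
    rw [this]
    have h2 : b * (b ^ (k+1) - a ^ (k+1)) ≤ b * ((k+1) * (b - a) * b ^ k) :=
      mul_le_mul_of_nonneg_left ih hb
    have h3 : (b - a) * a ^ (k+1) ≤ (b - a) * b ^ (k+1) :=
      mul_le_mul_of_nonneg_left h1 (by linarith)
    have h4 : b * ((k+1:ℝ) * (b - a) * b ^ k) = (k+1:ℝ) * (b - a) * b ^ (k+1) := by ring
    have h5 : ((k+1:ℕ)+1:ℝ) * (b - a) * b ^ (k+1) = (k+1:ℝ) * (b - a) * b ^ (k+1) + (b - a) * b ^ (k+1) := by push_cast; ring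
    rw [h5]
    push_cast
    linarith

theorem powB (k : ℕ) (a b : ℝ) (ha : 0 ≤ a) (hab : a ≤ b) :
    (k+1) * (b - a) * a ^ k ≤ b ^ (k+1) - a ^ (k+1) := by
  induction k with
  | zero => simp
  | succ k ih =>
    have hb : 0 ≤ b := ha.trans hab
    have h1 : a ^ (k+1) ≤ b ^ (k+1) := pow_le_pow_left₀ ha hab _
    have : b ^ (k+2) - a ^ (k+2) = b * (b ^ (k+1) - a ^ (k+1)) + (b - a) * a ^ (k+1) := by
      ring
    rw [this]
    have h2 : b * ((k+1) * (b - a) * a ^ k) ≤ b * (b ^ (k+1) - a ^ (k+1)) :=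
      mul_le_mul_of_nonneg_left ih hb
    have hnn : 0 ≤ (k+1:ℝ)*(b-a)*a^k :=
      mul_nonneg (mul_nonneg (by positivity) (by linarith)) (pow_nonneg ha k)
    have h4' := mul_le_mul_of_nonneg_left hab hnn
    have h4 : (k+1:ℝ)*(b-a)*a^(k+1) ≤ b*((k+1:ℝ)*(b-a)*a^k) := by
      calc (k+1:ℝ)*(b-a)*a^(k+1) = ((k+1:ℝ)*(b-a)*a^k)*a := by ring
        _ ≤ ((k+1:ℝ)*(b-a)*a^k)*b := h4'
        _ = b*((k+1:ℝ)*(b-a)*a^k) := by ring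
    have h5 : ((k+1:ℕ)+1:ℝ) * (b - a) * a ^ (k+1) = (k+1:ℝ) * (b - a) * a ^ (k+1) + (b - a) * a ^ (k+1) := by push_cast; ring
    rw [h5]
    push_cast
    linarith

theorem sum_low (k m : ℕ) (hm : 1 ≤ m) :
    ∀ n : ℕ, (n:ℝ)^(k+1) ≤ (k+1) * m * ∑ j ∈ Finset.range (n / m + 1), ((n - j*m : ℕ):ℝ)^k := by
  intro n
  induction n using Nat.strong_induction_on with
  | _ n ih =>
    by_cases h : m ≤ n
    · rw [peel (fun x => ((x:ℕ):ℝ)^k) m n hm h]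
      have ihn := ih (n - m) (by omega)
      have key : (n:ℝ)^(k+1) - ((n - m : ℕ):ℝ)^(k+1) ≤ (k+1) * m * (n:ℝ)^k := by
        have := powA k ((n-m : ℕ):ℝ) (n:ℝ) (by positivity) (by exact_mod_cast Nat.sub_le n m)
        have hc : ((n:ℝ) - ((n-m:ℕ):ℝ)) = (m:ℝ) := by
          have : ((n - m : ℕ):ℝ) = (n:ℝ) - m := by
            push_cast [Nat.cast_sub h]; ring
          rw [this]; ring
        rw [hc] at this
        linarith [this]
      have expand : (k+1:ℝ) * m * ((n:ℝ)^k + ∑ j ∈ Finset.range ((n-m) / m + 1), (((n-m) - j*m : ℕ):ℝ)^k)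
          = (k+1) * m * (n:ℝ)^k + (k+1) * m * ∑ j ∈ Finset.range ((n-m) / m + 1), (((n-m) - j*m : ℕ):ℝ)^k := by
        ring
      rw [expand]
      linarith
    · have h0 : n / m = 0 := Nat.div_eq_of_lt (by omega)
      rw [h0]
      simp only [zero_add, Finset.range_one, Finset.sum_singleton, Nat.zero_mul, Nat.sub_zero]
      have : (n:ℝ)^(k+1) = (n:ℝ) * (n:ℝ)^k := by ring
      rw [this]
      have hk : (0:ℝ) ≤ (n:ℝ)^k := by positivity
      have : (n:ℝ) ≤ (k+1) * m := by
        have : (n:ℝ) ≤ m := by exact_mod_cast (by omega : n ≤ m)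
        nlinarith
      nlinarith

theorem sum_high (k m : ℕ) (hm : 1 ≤ m) :
    ∀ n : ℕ, (k+1) * m * ∑ j ∈ Finset.range (n / m + 1), ((n - j*m : ℕ):ℝ)^k ≤ ((n:ℝ)+m)^(k+1) := by
  intro n
  induction n using Nat.strong_induction_on with
  | _ n ih =>
    have hBn : (k+1:ℝ) * m * (n:ℝ)^k ≤ ((n:ℝ)+m)^(k+1) - (n:ℝ)^(k+1) := by
      have := powB k (n:ℝ) ((n:ℝ)+m) (by positivity) (le_add_of_nonneg_right (by positivity))
      have hc : ((n:ℝ)+m) - n = (m:ℝ) := by ring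
      rw [hc] at this
      linarith
    by_cases h : m ≤ n
    · rw [peel (fun x => ((x:ℕ):ℝ)^k) m n hm h]
      have ihn := ih (n - m) (by omega)
      have hnm : (((n-m:ℕ)):ℝ) + m = (n:ℝ) := by
        push_cast [Nat.cast_sub h]; ring
      rw [hnm] at ihn
      have expand : (k+1:ℝ) * m * ((n:ℝ)^k + ∑ j ∈ Finset.range ((n-m) / m + 1), (((n-m) - j*m : ℕ):ℝ)^k)
          = (k+1) * m * (n:ℝ)^k + (k+1) * m * ∑ j ∈ Finset.range ((n-m) / m + 1), (((n-m) - j*m : ℕ):ℝ)^k := by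
        ring
      rw [expand]
      linarith
    · have h0 : n / m = 0 := Nat.div_eq_of_lt (by omega)
      rw [h0]
      simp only [zero_add, Finset.range_one, Finset.sum_singleton, Nat.zero_mul, Nat.sub_zero]
      linarith [pow_nonneg (by positivity : (0:ℝ) ≤ (n:ℝ)) (k+1)]

theorem rep_single (m x : ℕ) (hm : 1 ≤ m) :
    rep [m] x = if x % m = 0 then 1 else 0 := by
  induction x using Nat.strong_induction_on with
  | _ x ih =>
    by_cases h : m ≤ x
    · rw [rep_rec m [] x hm h, ih (x - m) (by omega)]
      have h2 : (x - m) % m = x % m := by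
        conv_rhs => rw [show x = (x - m) + m by omega]
        rw [Nat.add_mod_right]
      rw [h2]
      have h3 : rep [] x = 0 := by simp [rep]; omega
      rw [h3, zero_add]
    · rw [rep_small m [] x (by omega)]
      show (if x = 0 then 1 else 0) = _
      rw [Nat.mod_eq_of_lt (by omega : x < m)]

theorem rep_pair_count (a n : ℕ) (ha : 1 ≤ a) :
    rep [a, a+1] n = ((Finset.range (n/a + 1)).filter (fun j => (a+1) ∣ (n + j))).card := by
  rw [rep_cons, Finset.card_filter]
  apply Finset.sum_congr rfl
  intro j hj
  rw [rep_single (a+1) _ (by omega)]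
  have hja : j * a ≤ n := by
    have h1 : j ≤ n / a := by simpa using Finset.mem_range_succ_iff.mp hj
    calc j * a ≤ (n/a) * a := Nat.mul_le_mul_right a h1
      _ ≤ n := Nat.div_mul_le_self n a
  have key : n + j = (n - j * a) + j * (a + 1) := by
    have : j * (a+1) = j * a + j := by ring
    omega
  have hiff : (n - j * a) % (a+1) = 0 ↔ (a+1) ∣ (n + j) := by
    rw [← Nat.dvd_iff_mod_eq_zero]
    constructor
    · intro h; rw [key]; exact Nat.dvd_add h (dvd_mul_left (a+1) j)
    · intro h
      have h2 : (a+1) ∣ j * (a+1) := dvd_mul_left (a+1) j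
      have := Nat.dvd_sub h h2
      rwa [key, Nat.add_sub_cancel] at this
  exact if_congr hiff rfl rfl

theorem count_dvd (d n N : ℕ) (hd : 1 ≤ d) (hn : 1 ≤ n) :
    ((Finset.range N).filter (fun j => d ∣ (n + j))).card
      = (n - 1 + N) / d - (n - 1) / d := by
  have himg : (((Finset.range N).filter (fun j => d ∣ (n + j))).image (fun j => n + j))
      = (Finset.Ioc (n-1) (n-1+N)).filter (fun x => d ∣ x) := by
    ext x
    simp only [Finset.mem_image, Finset.mem_filter, Finset.mem_range, Finset.mem_Ioc]
    constructor
    · rintro ⟨j, ⟨hj, hdvd⟩, hx⟩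
      have hx' : n + j = x := hx
      exact ⟨⟨by omega, by omega⟩, by rwa [← hx']⟩
    · rintro ⟨⟨h1, h2⟩, hdvd⟩
      exact ⟨x - n, ⟨by omega, by rw [show n + (x-n) = x by omega]; exact hdvd⟩, by show n + (x - n) = x; omega⟩
  have hinj : Function.Injective (fun j => n + j) := fun x y h => by
    have h' : n + x = n + y := h
    omega
  have hcard := Finset.card_image_of_injective
    ((Finset.range N).filter (fun j => d ∣ (n + j))) hinj
  rw [himg] at hcard
  rw [← hcard]
  -- now count multiples in Ioc (n-1) (n-1+N)
  have hsplit : Finset.Ioc 0 (n-1) ∪ Finset.Ioc (n-1) (n-1+N) = Finset.Ioc 0 (n-1+N) :=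
    Finset.Ioc_union_Ioc_eq_Ioc (by omega) (by omega)
  have hdisj : Disjoint (Finset.Ioc 0 (n-1)) (Finset.Ioc (n-1) (n-1+N)) := by
    rw [Finset.disjoint_left]
    intro x hx1 hx2
    rw [Finset.mem_Ioc] at hx1 hx2
    omega
  have h1 := Nat.Ioc_filter_dvd_card_eq_div (n-1) d
  have h2 := Nat.Ioc_filter_dvd_card_eq_div (n-1+N) d
  have : ((Finset.Ioc 0 (n-1)).filter (fun x => d ∣ x)).card
      + ((Finset.Ioc (n-1) (n-1+N)).filter (fun x => d ∣ x)).card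
      = ((Finset.Ioc 0 (n-1+N)).filter (fun x => d ∣ x)).card := by
    rw [← Finset.card_union_of_disjoint (Finset.disjoint_filter_filter hdisj),
      ← Finset.filter_union, hsplit]
  omega

def Dl (ℓ : List ℕ) : ℕ := (ℓ.length - 1).factorial * ℓ.prod

def Good (ℓ : List ℕ) : Prop := ∃ C : ℝ, ∀ n : ℕ,
  |(rep ℓ n : ℝ) * (Dl ℓ : ℝ) - (n:ℝ) ^ (ℓ.length - 1)| ≤ C * ((n:ℝ)+1) ^ (ℓ.length - 2)

theorem div_real_bounds (x d : ℕ) (hd : 1 ≤ d) :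
    (d:ℝ) * ↑(x/d) ≤ (x:ℝ) ∧ (x:ℝ) < (d:ℝ) * ↑(x/d) + d := by
  have h1 := Nat.div_add_mod x d
  have h2 := Nat.mod_lt x (show 0 < d by omega)
  have h1' : (d:ℝ) * ↑(x/d) + ↑(x % d) = (x:ℝ) := by exact_mod_cast congrArg (Nat.cast : ℕ → ℝ) h1
  have h2' : ((x % d : ℕ):ℝ) < (d:ℝ) := by exact_mod_cast h2
  have h3 : (0:ℝ) ≤ ((x % d : ℕ):ℝ) := by positivity
  constructor <;> linarith


theorem good_pair (a : ℕ) (ha : 1 ≤ a) : Good [a, a+1] := by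
  have hD : Dl [a, a+1] = a * (a+1) := by simp [Dl]
  refine ⟨2*(a:ℝ)*((a:ℝ)+1), fun n => ?_⟩
  have hlen : ([a, a+1].length - 1) = 1 := rfl
  have hlen2 : ([a, a+1].length - 2) = 0 := rfl
  rw [hD, hlen, hlen2, pow_zero, mul_one, pow_one]
  have ha' : (1:ℝ) ≤ (a:ℝ) := by exact_mod_cast ha
  by_cases hn : 1 ≤ n
  · rw [rep_pair_count a n ha, count_dvd (a+1) n (n/a + 1) (by omega) hn]
    have hq21 : (n-1) / (a+1) ≤ (n - 1 + (n/a + 1)) / (a+1) := Nat.div_le_div_right (Nat.le_add_right _ _)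
    obtain ⟨e1, e2⟩ := div_real_bounds (n - 1 + (n/a + 1)) (a+1) (by omega)
    obtain ⟨e3, e4⟩ := div_real_bounds (n-1) (a+1) (by omega)
    obtain ⟨e5, e6⟩ := div_real_bounds n a ha
    have hcast : ((n - 1 + (n/a + 1) : ℕ):ℝ) = (n:ℝ) + ((n/a:ℕ):ℝ) := by
      push_cast [Nat.cast_sub hn]; ring
    have hcast2 : ((n - 1 : ℕ):ℝ) = (n:ℝ) - 1 := by push_cast [Nat.cast_sub hn]; ring
    rw [hcast] at e1 e2
    rw [hcast2] at e3 e4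
    set q1 : ℝ := ((((n - 1 + (n/a + 1)) / (a+1)) : ℕ) : ℝ)
    set q2 : ℝ := ((((n-1) / (a+1)) : ℕ) : ℝ)
    set p : ℝ := ((n/a : ℕ) : ℝ)
    have hsub : (((n - 1 + (n/a + 1)) / (a+1) - (n-1) / (a+1) : ℕ) : ℝ) = q1 - q2 := by
      push_cast [Nat.cast_sub hq21]; ring
    rw [hsub]
    have hpa : (0:ℝ) < (a:ℝ) := by linarith
    have hdc : ((a+1:ℕ):ℝ) = (a:ℝ)+1 := by push_cast; ring
    rw [hdc] at e1 e2 e3 e4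
    have hadc : ((a*(a+1):ℕ):ℝ) = (a:ℝ)*((a:ℝ)+1) := by push_cast; ring
    rw [hadc]
    have g1 : (a:ℝ)*(((a:ℝ)+1) * q1) ≤ (a:ℝ)*((n:ℝ)+p) := mul_le_mul_of_nonneg_left e1 (by linarith)
    have g2 : (a:ℝ)*((n:ℝ) + p) < (a:ℝ)*(((a:ℝ)+1) * q1 + ((a:ℝ)+1)) := mul_lt_mul_of_pos_left e2 hpa
    have g3 : (a:ℝ)*(((a:ℝ)+1) * q2) ≤ (a:ℝ)*((n:ℝ)-1) := mul_le_mul_of_nonneg_left e3 (by linarith)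
    have g4 : (a:ℝ)*((n:ℝ)-1) < (a:ℝ)*(((a:ℝ)+1) * q2 + ((a:ℝ)+1)) := mul_lt_mul_of_pos_left e4 hpa
    rw [abs_le]
    constructor
    · nlinarith [g1, g4, e5, e6]
    · nlinarith [g2, g3, e5, e6]
  · have hn0 : n = 0 := by omega
    subst hn0
    rw [rep_zero]
    push_cast
    rw [show (1:ℝ) * ((a:ℝ)*((a:ℝ)+1)) - 0 = (a:ℝ)*((a:ℝ)+1) by ring]
    rw [abs_of_nonneg (by positivity)]
    nlinarith

theorem good_cons (m : ℕ) (S : List ℕ) (hm : 1 ≤ m) (hS : 2 ≤ S.length)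
    (h : Good S) : Good (m :: S) := by
  obtain ⟨C, hC⟩ := h
  have hC0 : 0 ≤ C := by
    have h0 := hC 0
    have h1 : (((0:ℕ):ℝ) + 1) ^ (S.length - 2) = 1 := by norm_num
    rw [h1, mul_one] at h0
    exact le_trans (abs_nonneg _) h0
  set k := S.length with hk
  set t := k - 1 with ht
  have htk : t + 1 = k := by omega
  have ht1 : 1 ≤ t := by omega
  have hDl : (Dl (m::S) : ℝ) = (k:ℝ) * ((m:ℝ) * (Dl S : ℝ)) := by
    have : Dl (m::S) = k * (m * Dl S) := by
      simp only [Dl, List.length_cons, List.prod_cons, Nat.add_sub_cancel]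
      have hfac : k.factorial = k * (k-1).factorial := by
        rw [show k = (k-1)+1 by omega, Nat.factorial_succ]
        congr 1 <;> omega
      rw [hfac]; ring
    rw [this]; push_cast; ring
  have hkt : k - 2 = t - 1 := by omega
  refine ⟨(k:ℝ)*m*C + (k:ℝ)*(m:ℝ)^k, fun n => ?_⟩
  have hexp1 : ((m::S).length - 1) = k := by simp only [List.length_cons]; omega
  have hexp2 : ((m::S).length - 2) = t := by simp only [List.length_cons]; omega
  rw [hexp1, hexp2]
  set N := n / m + 1 with hN
  set Sum1 : ℝ := ∑ j ∈ Finset.range N, ((rep S (n - j*m) : ℝ) * (Dl S : ℝ)) with hSum1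
  set Sum2 : ℝ := ∑ j ∈ Finset.range N, ((n - j*m : ℕ):ℝ)^t with hSum2
  have hrepD : (rep (m::S) n : ℝ) * (Dl (m::S) : ℝ) = (k:ℝ) * (m:ℝ) * Sum1 := by
    rw [rep_cons, hDl, hSum1]
    push_cast
    rw [Finset.sum_mul, Finset.mul_sum]
    exact Finset.sum_congr rfl (fun j _ => by ring)
  have key1 : |Sum1 - Sum2| ≤ (N:ℝ) * (C * ((n:ℝ)+1)^(t-1)) := by
    rw [hSum1, hSum2, ← Finset.sum_sub_distrib]
    refine (Finset.abs_sum_le_sum_abs _ _).trans ?_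
    have hbound : ∀ j ∈ Finset.range N, |(rep S (n - j*m) : ℝ) * (Dl S : ℝ) - ((n - j*m : ℕ):ℝ)^t|
        ≤ C * ((n:ℝ)+1)^(t-1) := by
      intro j _
      have hCj := hC (n - j*m)
      rw [hkt] at hCj
      have hle : ((n - j*m : ℕ):ℝ) ≤ (n:ℝ) := by
        exact_mod_cast Nat.sub_le n (j*m)
      refine hCj.trans ?_
      apply mul_le_mul_of_nonneg_left _ hC0
      exact pow_le_pow_left₀ (by positivity) (by linarith) _
    refine (Finset.sum_le_sum hbound).trans ?_
    rw [Finset.sum_const, Finset.card_range]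
    simp [nsmul_eq_mul]
  have key2 : |(k:ℝ) * (m:ℝ) * Sum2 - (n:ℝ)^k| ≤ (k:ℝ) * (m:ℝ)^k * ((n:ℝ)+1)^t := by
    have hlow := sum_low t m hm n
    have hhigh := sum_high t m hm n
    rw [← hN] at hlow hhigh
    have hcast : ((t:ℝ) + 1) = (k:ℝ) := by exact_mod_cast congrArg (Nat.cast : ℕ → ℝ) htk
    rw [hcast] at hlow hhigh
    rw [← hSum2] at hlow hhigh
    have hexp : ((n:ℝ)^(t+1)) = (n:ℝ)^k := by rw [htk]
    rw [hexp] at hlow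
    have hAA : ((n:ℝ)+m)^(t+1) - (n:ℝ)^(t+1) ≤ ((t:ℝ)+1) * (m:ℝ) * ((n:ℝ)+m)^t := by
      have := powA t (n:ℝ) ((n:ℝ)+m) (by positivity) (le_add_of_nonneg_right (by positivity))
      have h2 : ((n:ℝ)+m) - n = (m:ℝ) := by ring
      rw [h2] at this
      exact this
    rw [hexp] at hAA
    have hnm : ((n:ℝ)+m) ≤ (m:ℝ) * ((n:ℝ)+1) := by
      have hm' : (1:ℝ) ≤ m := by exact_mod_cast hm
      nlinarith [Nat.cast_nonneg (α := ℝ) n]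
    have hpow : ((n:ℝ)+m)^t ≤ ((m:ℝ) * ((n:ℝ)+1))^t :=
      pow_le_pow_left₀ (by positivity) hnm t
    have h3 : ((t:ℝ)+1) * (m:ℝ) * ((n:ℝ)+m)^t ≤ ((t:ℝ)+1) * (m:ℝ) * ((m:ℝ)*((n:ℝ)+1))^t :=
      mul_le_mul_of_nonneg_left hpow (by positivity)
    have hmpow : ((t:ℝ)+1) * (m:ℝ) * ((m:ℝ) * ((n:ℝ)+1))^t = ((t:ℝ)+1) * (m:ℝ)^(t+1) * ((n:ℝ)+1)^t := by
      rw [mul_pow]; ring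
    have h4 : ((t:ℝ)+1) * (m:ℝ)^(t+1) * ((n:ℝ)+1)^t = (k:ℝ) * (m:ℝ)^k * ((n:ℝ)+1)^t := by
      rw [htk, hcast]
    rw [abs_le]
    have hnn : (0:ℝ) ≤ (k:ℝ) * (m:ℝ)^k * ((n:ℝ)+1)^t := by positivity
    constructor
    · linarith
    · linarith
  -- combine
  have hNle : (N:ℝ) * (C * ((n:ℝ)+1)^(t-1)) * ((k:ℝ)*(m:ℝ)) ≤ (k:ℝ)*m*C*((n:ℝ)+1)^t := by
    have hdiv : ((n/m : ℕ):ℝ) ≤ (n:ℝ) := by exact_mod_cast Nat.div_le_self n m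
    have hNn : (N:ℝ) ≤ (n:ℝ) + 1 := by rw [hN]; push_cast; linarith
    have hpowt : ((n:ℝ)+1) * ((n:ℝ)+1)^(t-1) = ((n:ℝ)+1)^t := by
      rw [← pow_succ']
      congr 1
      omega
    have hx : (0:ℝ) ≤ C * ((n:ℝ)+1)^(t-1) := by positivity
    calc (N:ℝ) * (C * ((n:ℝ)+1)^(t-1)) * ((k:ℝ)*(m:ℝ))
        ≤ ((n:ℝ)+1) * (C * ((n:ℝ)+1)^(t-1)) * ((k:ℝ)*(m:ℝ)) := by
          apply mul_le_mul_of_nonneg_right (mul_le_mul_of_nonneg_right hNn hx) (by positivity)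
      _ = (k:ℝ)*m*C*(((n:ℝ)+1) * ((n:ℝ)+1)^(t-1)) := by ring
      _ = (k:ℝ)*m*C*((n:ℝ)+1)^t := by rw [hpowt]
  calc |(rep (m::S) n : ℝ) * (Dl (m::S) : ℝ) - (n:ℝ)^k|
      = |((k:ℝ)*(m:ℝ)*Sum1 - (k:ℝ)*(m:ℝ)*Sum2) + ((k:ℝ)*(m:ℝ)*Sum2 - (n:ℝ)^k)| := by
        rw [hrepD]; ring_nf
    _ ≤ |(k:ℝ)*(m:ℝ)*Sum1 - (k:ℝ)*(m:ℝ)*Sum2| + |(k:ℝ)*(m:ℝ)*Sum2 - (n:ℝ)^k| := abs_add_le _ _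
    _ ≤ (k:ℝ)*m*C*((n:ℝ)+1)^t + (k:ℝ)*(m:ℝ)^k*((n:ℝ)+1)^t := by
        apply add_le_add _ key2
        have : |(k:ℝ)*(m:ℝ)*Sum1 - (k:ℝ)*(m:ℝ)*Sum2| = (k:ℝ)*(m:ℝ)*|Sum1 - Sum2| := by
          rw [← mul_sub, abs_mul]
          congr 1
          rw [abs_of_nonneg (by positivity)]
        rw [this]
        calc (k:ℝ)*(m:ℝ)*|Sum1 - Sum2| ≤ (k:ℝ)*(m:ℝ)*((N:ℝ) * (C * ((n:ℝ)+1)^(t-1))) :=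
              mul_le_mul_of_nonneg_left key1 (by positivity)
          _ = (N:ℝ) * (C * ((n:ℝ)+1)^(t-1)) * ((k:ℝ)*(m:ℝ)) := by ring
          _ ≤ (k:ℝ)*m*C*((n:ℝ)+1)^t := hNle
    _ = ((k:ℝ)*m*C + (k:ℝ)*(m:ℝ)^k) * ((n:ℝ)+1)^t := by ring

def consec (a k : ℕ) : List ℕ := (List.range k).map (a + ·)

theorem consec_length (a k : ℕ) : (consec a k).length = k := by
  simp [consec]

theorem consec_succ (a k : ℕ) : consec a (k+1) = a :: consec (a+1) k := by
  simp only [consec, List.range_succ_eq_map, List.map_cons, List.map_map]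
  congr 1
  apply List.map_congr_left
  intro i _
  simp [Function.comp, Nat.succ_eq_add_one]
  omega

theorem good_consec : ∀ k a : ℕ, 1 ≤ a → Good (consec a (k+2))
  | 0, a, ha => by
    have : consec a 2 = [a, a+1] := by
      simp [consec, List.range_succ]
    rw [this]
    exact good_pair a ha
  | (k+1), a, ha => by
    rw [consec_succ]
    exact good_cons a _ ha (by rw [consec_length]; omega)
      (good_consec k (a+1) (by omega))

theorem consec_map_prod {M : Type*} [CommMonoid M] (f : ℕ → M) (a : ℕ) :
    ∀ k : ℕ, ((consec a k).map f).prod = ∏ i ∈ Finset.range k, f (a + i)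
  | 0 => by simp [consec]
  | (k+1) => by
    rw [Finset.prod_range_succ, ← consec_map_prod f a k]
    simp only [consec, List.range_succ, List.map_append, List.prod_append]
    simp

theorem consec_prod (a k : ℕ) : (consec a k).prod = ∏ i ∈ Finset.range k, (a + i) := by
  have := consec_map_prod (id : ℕ → ℕ) a k
  simpa [List.map_id] using this



/-- With `A = (1 − q)/(q^s;q)_{L+1}` in ℤ[[q]] (characterized by the hypothesis `hA`,
since `(q^s;q)_{L+1}` has constant term 1, hence is invertible), the coefficients
`a_n = coeff n A` satisfy `a_n ~ n^{L−1}/((L−1)!·s·(s+1)···(s+L))` as `n → ∞`, where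
`s·(s+1)···(s+L) = ∏_{i=0}^{L} (s+i)`. -/
theorem stmt_17 (s L : ℕ) (hs : 1 ≤ s) (hL : 3 ≤ L)
    (A : PowerSeries ℤ)
    (hA : A * ∏ i ∈ Finset.range (L + 1), (1 - (X : PowerSeries ℤ) ^ (s + i)) = 1 - X) :
    Filter.Tendsto
      (fun n : ℕ =>
        ((coeff n A : ℤ) : ℝ) *
          (((L - 1).factorial * ∏ i ∈ Finset.range (L + 1), (s + i) : ℕ) : ℝ) /
          (n : ℝ) ^ (L - 1))
      Filter.atTop (nhds 1) := by
  have hT : Good (consec (s+2) (L-1)) := by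
    have h := good_consec (L-3) (s+2) (by omega)
    rwa [show L-3+2 = L-1 by omega] at h
  set T : List ℕ := consec (s+2) (L-1) with hTdef
  have hlenT : T.length = L - 1 := consec_length _ _
  have hmemT : ∀ x ∈ T, 1 ≤ x := by
    intro x hx
    rw [hTdef] at hx
    simp only [consec, List.mem_map, List.mem_range] at hx
    obtain ⟨i, _, rfl⟩ := hx
    omega
  have hG1 : Good (s :: T) := good_cons s T hs (by omega) hT
  have hG2 : Good ((s+1) :: T) := good_cons (s+1) T (by omega) (by omega) hT
  -- power series identities
  have hprodT : (T.map (fun m => 1 - (X : PowerSeries ℤ)^m)).prod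
      = ∏ i ∈ Finset.range (L-1), (1 - (X : PowerSeries ℤ)^(s+2+i)) := by
    rw [hTdef, consec_map_prod]
  have hcong : ∀ (R : Type) [inst : CommRing R] (g : ℕ → R),
      ∏ i ∈ Finset.range (L-1), g (s+(2+i)) = ∏ i ∈ Finset.range (L-1), g (s+2+i) :=
    fun R _ g => Finset.prod_congr rfl (fun i _ => by rw [show s+(2+i) = s+2+i by omega])
  have hP : (∏ i ∈ Finset.range (L+1), (1 - (X:PowerSeries ℤ)^(s+i)))
      = (1 - X^s) * ((1 - X^(s+1)) * ∏ i ∈ Finset.range (L-1), (1 - (X : PowerSeries ℤ)^(s+2+i))) := by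
    rw [show L+1 = 2+(L-1) by omega, Finset.prod_range_add]
    rw [Finset.prod_range_succ, Finset.prod_range_one, add_zero, mul_assoc]
    congr 1
    congr 1
    exact Finset.prod_congr rfl (fun i _ => by rw [show s+(2+i) = s+2+i by omega])
  have h1 : (PowerSeries.mk fun n => (rep (s :: T) n : ℤ))
      * ((1 - X^s) * ∏ i ∈ Finset.range (L-1), (1 - (X : PowerSeries ℤ)^(s+2+i))) = 1 := by
    have h := rep_mk_prod (s :: T) (by
      intro x hx
      rcases List.mem_cons.mp hx with h | h
      · omega
      · exact hmemT x h)
    rwa [List.map_cons, List.prod_cons, hprodT] at h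
  have h2 : (PowerSeries.mk fun n => (rep ((s+1) :: T) n : ℤ))
      * ((1 - X^(s+1)) * ∏ i ∈ Finset.range (L-1), (1 - (X : PowerSeries ℤ)^(s+2+i))) = 1 := by
    have h := rep_mk_prod ((s+1) :: T) (by
      intro x hx
      rcases List.mem_cons.mp hx with h | h
      · omega
      · exact hmemT x h)
    rwa [List.map_cons, List.prod_cons, hprodT] at h
  have hA2 : ((PowerSeries.mk fun n => (rep (s :: T) n : ℤ))
        - X * PowerSeries.mk fun n => (rep ((s+1) :: T) n : ℤ))
      * ∏ i ∈ Finset.range (L+1), (1 - (X:PowerSeries ℤ)^(s+i)) = 1 - X := by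
    rw [hP]
    linear_combination (1 - (X:PowerSeries ℤ)^(s+1)) * h1 - (X:PowerSeries ℤ) * (1 - (X:PowerSeries ℤ)^s) * h2
  have hAeq : A = (PowerSeries.mk fun n => (rep (s :: T) n : ℤ))
      - X * PowerSeries.mk fun n => (rep ((s+1) :: T) n : ℤ) := by
    have hz : (A - ((PowerSeries.mk fun n => (rep (s :: T) n : ℤ))
        - X * PowerSeries.mk fun n => (rep ((s+1) :: T) n : ℤ)))
        * ∏ i ∈ Finset.range (L+1), (1 - (X:PowerSeries ℤ)^(s+i)) = 0 := by
      rw [sub_mul, hA, hA2, sub_self]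
    have hPne : (∏ i ∈ Finset.range (L+1), (1 - (X:PowerSeries ℤ)^(s+i))) ≠ 0 := by
      intro h0
      rw [h0, mul_zero] at hA
      have hc := congrArg (coeff 1) hA
      simp [PowerSeries.coeff_one] at hc
    rcases mul_eq_zero.mp hz with h | h
    · exact sub_eq_zero.mp h
    · exact absurd h hPne
  have hcoeffZ : ∀ n : ℕ, 1 ≤ n →
      coeff n A = (rep (s :: T) n : ℤ) - (rep ((s+1) :: T) (n-1) : ℤ) := by
    intro n hn
    rw [hAeq, map_sub, PowerSeries.coeff_mk]
    congr 1
    conv_lhs => rw [show n = (n-1)+1 by omega]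
    rw [PowerSeries.coeff_succ_X_mul, PowerSeries.coeff_mk]
  -- arithmetic identities for M
  have hlen1 : (s :: T).length = L := by simp [hlenT]; omega
  have hlen2 : ((s+1) :: T).length = L := by simp [hlenT]; omega
  have hTprod : T.prod = ∏ i ∈ Finset.range (L-1), (s+2+i) := by
    rw [hTdef, consec_prod]
  have hMsplit : ∏ i ∈ Finset.range (L+1), (s+i)
      = s * ((s+1) * ∏ i ∈ Finset.range (L-1), (s+2+i)) := by
    rw [show L+1 = 2+(L-1) by omega, Finset.prod_range_add]
    rw [Finset.prod_range_succ, Finset.prod_range_one, add_zero, mul_assoc]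
    congr 1
    congr 1
    exact Finset.prod_congr rfl (fun i _ => by rw [show s+(2+i) = s+2+i by omega])
  have hD1 : Dl (s :: T) = (L-1).factorial * (s * T.prod) := by
    rw [Dl, hlen1, List.prod_cons]
  have hD2 : Dl ((s+1) :: T) = (L-1).factorial * ((s+1) * T.prod) := by
    rw [Dl, hlen2, List.prod_cons]
  have hM1 : (L-1).factorial * ∏ i ∈ Finset.range (L+1), (s+i) = (s+1) * Dl (s :: T) := by
    rw [hMsplit, hD1, hTprod]; ring
  have hM2 : (L-1).factorial * ∏ i ∈ Finset.range (L+1), (s+i) = s * Dl ((s+1) :: T) := by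
    rw [hMsplit, hD2, hTprod]; ring
  -- analysis
  obtain ⟨C1, hC1⟩ := hG1
  obtain ⟨C2, hC2⟩ := hG2
  rw [show (s :: T).length - 1 = L - 1 by rw [hlen1], show (s :: T).length - 2 = L - 2 by rw [hlen1]] at hC1
  rw [show ((s+1) :: T).length - 1 = L - 1 by rw [hlen2], show ((s+1) :: T).length - 2 = L - 2 by rw [hlen2]] at hC2
  have hC10 : 0 ≤ C1 := by
    have h0 := hC1 0
    rw [Nat.cast_zero, zero_pow (by omega : L-1 ≠ 0), zero_add, one_pow, mul_one, sub_zero] at h0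
    exact le_trans (abs_nonneg _) h0
  have hC20 : 0 ≤ C2 := by
    have h0 := hC2 0
    rw [Nat.cast_zero, zero_pow (by omega : L-1 ≠ 0), zero_add, one_pow, mul_one, sub_zero] at h0
    exact le_trans (abs_nonneg _) h0
  set K : ℝ := ((s:ℝ)+1)*C1 + (s:ℝ)*C2 + (s:ℝ)*((L:ℝ)-1) with hK
  have hK0 : 0 ≤ K := by
    have hs' : (1:ℝ) ≤ (s:ℝ) := by exact_mod_cast hs
    have hL' : (3:ℝ) ≤ (L:ℝ) := by exact_mod_cast hL
    have : (0:ℝ) ≤ (s:ℝ)*((L:ℝ)-1) := by nlinarith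
    nlinarith
  set CC : ℝ := K * 2^(L-2) with hCC
  -- main bound
  have hmain : ∀ n : ℕ, 1 ≤ n →
      ‖((coeff n A : ℤ) : ℝ) *
          (((L - 1).factorial * ∏ i ∈ Finset.range (L + 1), (s + i) : ℕ) : ℝ) /
          (n : ℝ) ^ (L - 1) - 1‖ ≤ CC / n := by
    intro n hn
    have hn1 : (1:ℝ) ≤ (n:ℝ) := by exact_mod_cast hn
    have hnpos : (0:ℝ) < (n:ℝ)^(L-1) := by positivity
    have hcR : ((coeff n A : ℤ) : ℝ) = (rep (s :: T) n : ℝ) - (rep ((s+1) :: T) (n-1) : ℝ) := by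
      rw [hcoeffZ n hn]; push_cast; ring
    have hu := hC1 n
    have hw0 := hC2 (n-1)
    have hnm : ((n-1:ℕ):ℝ) = (n:ℝ) - 1 := by
      push_cast [Nat.cast_sub hn]; ring
    rw [hnm] at hw0
    rw [show (n:ℝ)-1+1 = (n:ℝ) by ring] at hw0
    have hw : |(rep ((s+1) :: T) (n-1) : ℝ) * (Dl ((s+1) :: T) : ℝ) - ((n:ℝ)-1)^(L-1)|
        ≤ C2 * ((n:ℝ)+1)^(L-2) := by
      refine hw0.trans ?_
      apply mul_le_mul_of_nonneg_left _ hC20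
      exact pow_le_pow_left₀ (by linarith) (by linarith) _
    -- v bound
    have hv : |(n:ℝ)^(L-1) - ((n:ℝ)-1)^(L-1)| ≤ ((L:ℝ)-1) * ((n:ℝ)+1)^(L-2) := by
      have hmono : ((n:ℝ)-1)^(L-1) ≤ (n:ℝ)^(L-1) :=
        pow_le_pow_left₀ (by linarith) (by linarith) _
      have hAA := powA (L-2) ((n:ℝ)-1) (n:ℝ) (by linarith) (by linarith)
      rw [show (n:ℝ) - ((n:ℝ)-1) = 1 by ring, mul_one] at hAA
      rw [show L-2+1 = L-1 by omega] at hAA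
      have hcast : ((L-2:ℕ):ℝ) + 1 = (L:ℝ) - 1 := by
        push_cast [Nat.cast_sub (by omega : 2 ≤ L)]; ring
      rw [hcast] at hAA
      rw [abs_of_nonneg (by linarith)]
      refine hAA.trans ?_
      apply mul_le_mul_of_nonneg_left _ (by
        have : (3:ℝ) ≤ (L:ℝ) := by exact_mod_cast hL
        linarith)
      exact pow_le_pow_left₀ (by linarith) (by linarith) _
    -- cast M
    have hMc1 : (((L - 1).factorial * ∏ i ∈ Finset.range (L + 1), (s + i) : ℕ) : ℝ)
        = ((s:ℝ)+1) * (Dl (s :: T) : ℝ) := by exact_mod_cast congrArg (Nat.cast : ℕ → ℝ) hM1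
    have hMc2 : (((L - 1).factorial * ∏ i ∈ Finset.range (L + 1), (s + i) : ℕ) : ℝ)
        = (s:ℝ) * (Dl ((s+1) :: T) : ℝ) := by exact_mod_cast congrArg (Nat.cast : ℕ → ℝ) hM2
    set r1 : ℝ := (rep (s :: T) n : ℝ)
    set r2 : ℝ := (rep ((s+1) :: T) (n-1) : ℝ)
    set D1 : ℝ := (Dl (s :: T) : ℝ)
    set D2 : ℝ := (Dl ((s+1) :: T) : ℝ)
    set MM : ℝ := (((L - 1).factorial * ∏ i ∈ Finset.range (L + 1), (s + i) : ℕ) : ℝ)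
    have hexpand : (r1 - r2) * MM - (n:ℝ)^(L-1)
        = ((s:ℝ)+1)*(r1*D1 - (n:ℝ)^(L-1)) - (s:ℝ)*(r2*D2 - ((n:ℝ)-1)^(L-1))
          + (s:ℝ)*((n:ℝ)^(L-1) - ((n:ℝ)-1)^(L-1)) := by
      have e1 : r1 * MM = ((s:ℝ)+1)*(r1*D1) := by rw [hMc1]; ring
      have e2 : r2 * MM = (s:ℝ)*(r2*D2) := by rw [hMc2]; ring
      linear_combination e1 - e2
    have hnum : |(r1 - r2) * MM - (n:ℝ)^(L-1)| ≤ K * ((n:ℝ)+1)^(L-2) := by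
      rw [hexpand]
      have t1 : |((s:ℝ)+1)*(r1*D1 - (n:ℝ)^(L-1))| ≤ ((s:ℝ)+1) * (C1 * ((n:ℝ)+1)^(L-2)) := by
        rw [abs_mul, abs_of_nonneg (by positivity : (0:ℝ) ≤ (s:ℝ)+1)]
        exact mul_le_mul_of_nonneg_left hu (by positivity)
      have t2 : |(s:ℝ)*(r2*D2 - ((n:ℝ)-1)^(L-1))| ≤ (s:ℝ) * (C2 * ((n:ℝ)+1)^(L-2)) := by
        rw [abs_mul, abs_of_nonneg (by positivity : (0:ℝ) ≤ (s:ℝ))]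
        exact mul_le_mul_of_nonneg_left hw (by positivity)
      have t3 : |(s:ℝ)*((n:ℝ)^(L-1) - ((n:ℝ)-1)^(L-1))| ≤ (s:ℝ) * (((L:ℝ)-1) * ((n:ℝ)+1)^(L-2)) := by
        rw [abs_mul, abs_of_nonneg (by positivity : (0:ℝ) ≤ (s:ℝ))]
        exact mul_le_mul_of_nonneg_left hv (by positivity)
      calc |((s:ℝ)+1)*(r1*D1 - (n:ℝ)^(L-1)) - (s:ℝ)*(r2*D2 - ((n:ℝ)-1)^(L-1))
          + (s:ℝ)*((n:ℝ)^(L-1) - ((n:ℝ)-1)^(L-1))|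
          ≤ |((s:ℝ)+1)*(r1*D1 - (n:ℝ)^(L-1)) - (s:ℝ)*(r2*D2 - ((n:ℝ)-1)^(L-1))|
            + |(s:ℝ)*((n:ℝ)^(L-1) - ((n:ℝ)-1)^(L-1))| := abs_add_le _ _
        _ ≤ (|((s:ℝ)+1)*(r1*D1 - (n:ℝ)^(L-1))| + |(s:ℝ)*(r2*D2 - ((n:ℝ)-1)^(L-1))|)
            + |(s:ℝ)*((n:ℝ)^(L-1) - ((n:ℝ)-1)^(L-1))| := by
              gcongr
              exact abs_sub _ _
        _ ≤ ((s:ℝ)+1) * (C1 * ((n:ℝ)+1)^(L-2)) + (s:ℝ) * (C2 * ((n:ℝ)+1)^(L-2))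
            + (s:ℝ) * (((L:ℝ)-1) * ((n:ℝ)+1)^(L-2)) := by linarith
        _ = K * ((n:ℝ)+1)^(L-2) := by rw [hK]; ring
    -- conclude
    have hdiv : ((coeff n A : ℤ) : ℝ) * MM / (n:ℝ)^(L-1) - 1
        = ((r1 - r2) * MM - (n:ℝ)^(L-1)) / (n:ℝ)^(L-1) := by
      rw [hcR]
      field_simp
    rw [Real.norm_eq_abs, hdiv, abs_div, abs_of_nonneg hnpos.le]
    have hnum2 : |(r1 - r2) * MM - (n:ℝ)^(L-1)| ≤ CC * (n:ℝ)^(L-2) := by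
      refine hnum.trans ?_
      have h2n : ((n:ℝ)+1)^(L-2) ≤ (2*(n:ℝ))^(L-2) :=
        pow_le_pow_left₀ (by linarith) (by linarith) _
      rw [mul_pow] at h2n
      calc K * ((n:ℝ)+1)^(L-2) ≤ K * (2^(L-2) * (n:ℝ)^(L-2)) :=
            mul_le_mul_of_nonneg_left h2n hK0
        _ = CC * (n:ℝ)^(L-2) := by rw [hCC]; ring
    have hpowsplit : (n:ℝ)^(L-1) = (n:ℝ)^(L-2) * (n:ℝ) := by
      rw [show L-1 = (L-2)+1 by omega, pow_succ]
    calc |(r1 - r2) * MM - (n:ℝ)^(L-1)| / (n:ℝ)^(L-1)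
        ≤ (CC * (n:ℝ)^(L-2)) / (n:ℝ)^(L-1) := by gcongr
      _ = CC / (n:ℝ) := by
          rw [hpowsplit]
          rw [mul_comm ((n:ℝ)^(L-2)) (n:ℝ), show CC * (n:ℝ)^(L-2) = (n:ℝ)^(L-2) * CC by ring]
          rw [mul_comm (n:ℝ) ((n:ℝ)^(L-2))]
          exact mul_div_mul_left CC (n:ℝ) (by positivity)
  -- tendsto
  have hz : Filter.Tendsto
      (fun n : ℕ =>
        ((coeff n A : ℤ) : ℝ) *
          (((L - 1).factorial * ∏ i ∈ Finset.range (L + 1), (s + i) : ℕ) : ℝ) /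
          (n : ℝ) ^ (L - 1) - 1)
      Filter.atTop (nhds 0) := by
    refine squeeze_zero_norm' ?_ (tendsto_const_div_atTop_nhds_zero_nat CC)
    filter_upwards [Filter.eventually_ge_atTop 1] with n hn
    exact hmain n hn
  have := hz.add_const 1
  simpa using this
end

section
/- For all integers s ≥ 1, L ≥ 3 and k ≥ 1, the coefficients d_k(n) defined by ∑_{n≥0} d_k(n) q^n = (1 − q^k)/(q^s;q)_{L+1} in ℤ[[q]] satisfy d_k(n) ~ k·n^{L−1} / ((L−1)!·s·(s+1)···(s+L)) as n → ∞; that is, d_k(n)·(L−1)!·s·(s+1)···(s+L)/(k·n^{L−1}) tends to 1 as n → ∞. -/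
set_option maxHeartbeats 1000000

open PowerSeries Filter



noncomputable def geomP (a n : ℕ) : Polynomial ℤ := ∑ t ∈ Finset.range n, (Polynomial.X ^ a) ^ t

lemma geomP_mul (a n : ℕ) : geomP a n * (Polynomial.X ^ a - 1) = Polynomial.X ^ (a * n) - 1 := by
  simpa [geomP, pow_mul] using geom_sum_mul (Polynomial.X ^ a : Polynomial ℤ) n

lemma geomP_eval_one (a n : ℕ) : (geomP a n).eval 1 = n := by
  simp [geomP, Polynomial.eval_finset_sum]

lemma pair_key {N a b : ℕ} (ha : a ∣ N) (hb : b ∣ N) (hab : Nat.Coprime a b)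
    (hb1 : 1 < b) :
    ∃ A : Polynomial ℤ, geomP a (N / a) * geomP b (N / b) = geomP 1 N * A := by
  set I : Ideal (Polynomial ℤ) := Ideal.span {(Polynomial.X : Polynomial ℤ) ^ N - 1}
  set π := Ideal.Quotient.mk I with hπ
  have hmem : ∀ f : Polynomial ℤ, ((Polynomial.X : Polynomial ℤ) ^ N - 1) ∣ f → π f = 0 := by
    intro f hf
    rw [Ideal.Quotient.eq_zero_iff_mem]
    exact Ideal.mem_span_singleton.2 hf
  -- shift invariance
  have hshift : ∀ c : ℕ, c ∣ N → π (Polynomial.X ^ c) * π (geomP c (N / c)) = π (geomP c (N / c)) := by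
    intro c hc
    have key : (Polynomial.X : Polynomial ℤ) ^ c * geomP c (N / c) - geomP c (N / c)
        = Polynomial.X ^ N - 1 := by
      have := geomP_mul c (N / c)
      rw [Nat.mul_div_cancel' hc] at this
      ring_nf
      ring_nf at this
      linear_combination this
    have : π ((Polynomial.X : Polynomial ℤ) ^ c * geomP c (N / c) - geomP c (N / c)) = 0 :=
      hmem _ (key ▸ dvd_refl _)
    rw [map_sub, sub_eq_zero] at this
    simpa [map_mul] using this
  have hshift' : ∀ (c : ℕ) (hc : c ∣ N) (t : ℕ),
      (π (Polynomial.X) ^ (c * t)) * π (geomP c (N / c)) = π (geomP c (N / c)) := by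
    intro c hc t
    induction t with
    | zero => simp
    | succ t ih =>
      have : (π (Polynomial.X) ^ (c * (t+1))) = π (Polynomial.X) ^ c * π (Polynomial.X) ^ (c * t) := by
        ring
      rw [this, mul_assoc, ih]
      simpa [map_pow] using hshift c hc
  -- Bezout
  obtain ⟨u, -, hu⟩ := Nat.exists_mul_mod_eq_one_of_coprime hab hb1
  have hbez : a * u = b * (a * u / b) + 1 := by
    conv_lhs => rw [← Nat.div_add_mod (a * u) b]
    rw [hu]
  -- x * (ga * gb) = ga * gb
  have hx : π Polynomial.X * (π (geomP a (N/a)) * π (geomP b (N/b)))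
      = π (geomP a (N/a)) * π (geomP b (N/b)) := by
    have h1 := hshift' a ha u
    have h2 := hshift' b hb (a * u / b)
    calc π Polynomial.X * (π (geomP a (N/a)) * π (geomP b (N/b)))
        = π Polynomial.X * ((π Polynomial.X ^ (b * (a*u/b)) * π (geomP b (N/b))) * π (geomP a (N/a))) := by
          rw [h2]; ring
      _ = (π Polynomial.X ^ (b * (a*u/b) + 1)) * π (geomP b (N/b)) * π (geomP a (N/a)) := by ring
      _ = (π Polynomial.X ^ (a * u)) * π (geomP a (N/a)) * π (geomP b (N/b)) := by rw [← hbez]; ring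
      _ = π (geomP a (N/a)) * π (geomP b (N/b)) := by rw [h1]
  have hdvd : ((Polynomial.X : Polynomial ℤ) ^ N - 1) ∣
      ((Polynomial.X - 1) * (geomP a (N/a) * geomP b (N/b))) := by
    rw [← Ideal.mem_span_singleton, ← Ideal.Quotient.eq_zero_iff_mem]
    have : π ((Polynomial.X - 1) * (geomP a (N/a) * geomP b (N/b)))
        = (π Polynomial.X - 1) * (π (geomP a (N/a)) * π (geomP b (N/b))) := by
      simp [map_mul, map_sub]
    rw [this, sub_mul, one_mul, hx, sub_self]
  obtain ⟨A, hA⟩ := hdvd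
  refine ⟨A, ?_⟩
  have hgN : geomP 1 N * (Polynomial.X - 1) = (Polynomial.X : Polynomial ℤ) ^ N - 1 := by
    simpa using geomP_mul 1 N
  have h2 : (Polynomial.X - 1) * (geomP a (N/a) * geomP b (N/b))
      = (Polynomial.X - 1) * (geomP 1 N * A) := by
    rw [hA, ← hgN]; ring
  have hX1 : (Polynomial.X - 1 : Polynomial ℤ) ≠ 0 := by
    simpa using Polynomial.X_sub_C_ne_zero (1 : ℤ)
  exact mul_left_cancel₀ hX1 h2

lemma prod_div_eq (s L N : ℕ) (hs : 1 ≤ s) (hN : N = ∏ i ∈ Finset.range (L+1), (s+i)) :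
    ∏ i ∈ Finset.range (L+1), (N/(s+i)) = N^L := by
  have hpos : 0 < N := by
    rw [hN]; exact Finset.prod_pos (fun i _ => by omega)
  have hdvd : ∀ i ∈ Finset.range (L+1), (s+i) ∣ N := by
    intro i hi; rw [hN]; exact Finset.dvd_prod_of_mem _ hi
  have key : (∏ i ∈ Finset.range (L+1), (N/(s+i))) * N = N^L * N := by
    calc (∏ i ∈ Finset.range (L+1), (N/(s+i))) * N
        = (∏ i ∈ Finset.range (L+1), (N/(s+i))) * ∏ i ∈ Finset.range (L+1), (s+i) := by rw [← hN]
      _ = ∏ i ∈ Finset.range (L+1), ((N/(s+i)) * (s+i)) := by rw [Finset.prod_mul_distrib]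
      _ = ∏ i ∈ Finset.range (L+1), N := by
          apply Finset.prod_congr rfl
          intro i hi
          exact Nat.div_mul_cancel (hdvd i hi)
      _ = N^(L+1) := by rw [Finset.prod_const, Finset.card_range]
      _ = N^L * N := by ring
  exact Nat.eq_of_mul_eq_mul_right hpos key

lemma master (s L k : ℕ) (hs : 1 ≤ s) (hL : 3 ≤ L) (hk : 1 ≤ k)
    (N : ℕ) (hN : N = ∏ i ∈ Finset.range (L+1), (s+i)) :
    ∃ W : Polynomial ℤ,
      (1 - Polynomial.X ^ k) * ∏ i ∈ Finset.range (L+1), geomP (s+i) (N/(s+i))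
      = (1 - Polynomial.X ^ N) *
        (Polynomial.C ((k : ℤ) * (N:ℤ)^(L-2)) * geomP 1 N + (Polynomial.X ^ N - 1) * W) := by
  have hpos : 0 < N := by
    rw [hN]; exact Finset.prod_pos (fun i _ => by omega)
  have hdvd : ∀ i, i ≤ L → (s+i) ∣ N := by
    intro i hi; rw [hN]
    exact Finset.dvd_prod_of_mem _ (Finset.mem_range.2 (by omega))
  -- the two coprime pairs
  have hcop1 : Nat.Coprime (s+0) (s+1) := by
    have : s + 1 = (s+0) + 1 := by omega
    rw [this]; simp
  have hcop2 : Nat.Coprime (s+2) (s+3) := by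
    have : s + 3 = (s+2) + 1 := by omega
    rw [this]; simp
  obtain ⟨A₁, hA1⟩ := pair_key (hdvd 0 (by omega)) (hdvd 1 (by omega)) hcop1 (by omega)
  obtain ⟨A₂, hA2⟩ := pair_key (hdvd 2 (by omega)) (hdvd 3 (by omega)) hcop2 (by omega)
  set G : ℕ → Polynomial ℤ := fun i => geomP (s+i) (N/(s+i)) with hG
  set Rest : Polynomial ℤ := ∏ i ∈ Finset.Ico 4 (L+1), G i with hRest
  have hsplit : ∏ i ∈ Finset.range (L+1), G i = G 0 * G 1 * G 2 * G 3 * Rest := by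
    rw [← Finset.prod_range_mul_prod_Ico G (show 4 ≤ L+1 by omega)]
    congr 1
    rw [Finset.prod_range_succ, Finset.prod_range_succ, Finset.prod_range_succ,
      Finset.prod_range_one]
  set W₀ : Polynomial ℤ := geomP 1 k * A₁ * A₂ * Rest with hW₀
  set c : ℤ := W₀.eval 1 with hc
  obtain ⟨W, hW⟩ := (Polynomial.X_sub_C_dvd_sub_C_eval (a := (1:ℤ)) (p := W₀))
  have hWeq : W₀ = Polynomial.C c + (Polynomial.X - 1) * W := by
    have := hW
    rw [map_one] at this
    linear_combination this
  -- geometric identities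
  have hgN : geomP 1 N * (Polynomial.X - 1) = (Polynomial.X : Polynomial ℤ)^N - 1 := by
    simpa using geomP_mul 1 N
  have hgk : geomP 1 k * (Polynomial.X - 1) = (Polynomial.X : Polynomial ℤ)^k - 1 := by
    simpa using geomP_mul 1 k
  -- main identity with c
  have hmain : (1 - Polynomial.X ^ k) * ∏ i ∈ Finset.range (L+1), G i
      = (1 - Polynomial.X ^ N) *
        (Polynomial.C c * geomP 1 N + (Polynomial.X ^ N - 1) * W) := by
    rw [hsplit]
    have e01 : G 0 * G 1 = geomP 1 N * A₁ := hA1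
    have e23 : G 2 * G 3 = geomP 1 N * A₂ := hA2
    calc (1 - Polynomial.X ^ k) * (G 0 * G 1 * G 2 * G 3 * Rest)
        = (1 - Polynomial.X ^ k) * ((G 0 * G 1) * (G 2 * G 3) * Rest) := by ring
      _ = (1 - Polynomial.X ^ k) * (geomP 1 N * A₁ * (geomP 1 N * A₂) * Rest) := by
          rw [e01, e23]
      _ = (1 - Polynomial.X ^ N) * (geomP 1 N * W₀) := by
          rw [hW₀]
          linear_combination (A₁ * A₂ * Rest * geomP 1 N * geomP 1 N) * hgk
            - (A₁ * A₂ * Rest * geomP 1 N * geomP 1 k) * hgN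
      _ = (1 - Polynomial.X ^ N) *
            (Polynomial.C c * geomP 1 N + (Polynomial.X ^ N - 1) * W) := by
          rw [hWeq]
          linear_combination (1 - Polynomial.X^N) * W * hgN
  -- compute c
  have hcval : c = (k : ℤ) * (N:ℤ)^(L-2) := by
    have hAe1 : ((N/(s+0) : ℕ) : ℤ) * ((N/(s+1) : ℕ) : ℤ) = (N : ℤ) * A₁.eval 1 := by
      have := congrArg (Polynomial.eval (1:ℤ)) hA1
      simpa [geomP_eval_one] using this
    have hAe2 : ((N/(s+2) : ℕ) : ℤ) * ((N/(s+3) : ℕ) : ℤ) = (N : ℤ) * A₂.eval 1 := by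
      have := congrArg (Polynomial.eval (1:ℤ)) hA2
      simpa [geomP_eval_one] using this
    have hRe : Rest.eval 1 = ∏ i ∈ Finset.Ico 4 (L+1), ((N/(s+i) : ℕ) : ℤ) := by
      rw [hRest, Polynomial.eval_prod]
      exact Finset.prod_congr rfl (fun i _ => geomP_eval_one _ _)
    have hce : c = (k:ℤ) * A₁.eval 1 * A₂.eval 1 * Rest.eval 1 := by
      rw [hc, hW₀]
      simp [geomP_eval_one]
    have hprod : (∏ i ∈ Finset.range (L+1), ((N/(s+i) : ℕ) : ℤ)) = ((N^L : ℕ) : ℤ) := by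
      rw [← Nat.cast_prod, prod_div_eq s L N hs hN]
    have hsplit2 : ∏ i ∈ Finset.range (L+1), ((N/(s+i) : ℕ) : ℤ)
        = ((N/(s+0) : ℕ) : ℤ) * ((N/(s+1) : ℕ) : ℤ) * ((N/(s+2) : ℕ) : ℤ) * ((N/(s+3) : ℕ) : ℤ)
          * ∏ i ∈ Finset.Ico 4 (L+1), ((N/(s+i) : ℕ) : ℤ) := by
      rw [← Finset.prod_range_mul_prod_Ico _ (show 4 ≤ L+1 by omega)]
      congr 1
      rw [Finset.prod_range_succ, Finset.prod_range_succ, Finset.prod_range_succ,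
        Finset.prod_range_one]
    have hN2 : (N:ℤ)^2 * c = (N:ℤ)^2 * ((k:ℤ) * (N:ℤ)^(L-2)) := by
      have h1 : (N:ℤ)^2 * c = (k:ℤ) * ((N:ℤ) * A₁.eval 1) * ((N:ℤ) * A₂.eval 1) * Rest.eval 1 := by
        rw [hce]; ring
      rw [← hAe1, ← hAe2, hRe] at h1
      have h2 : (N:ℤ)^2 * c = (k:ℤ) * ∏ i ∈ Finset.range (L+1), ((N/(s+i) : ℕ) : ℤ) := by
        rw [hsplit2]; rw [h1]; ring
      rw [hprod] at h2
      have hLpow : ((N^L : ℕ) : ℤ) = (N:ℤ)^2 * (N:ℤ)^(L-2) := by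
        push_cast
        rw [← pow_add]
        congr 1
        omega
      rw [h2, hLpow]; ring
    have hNne : ((N:ℤ)^2) ≠ 0 := by positivity
    exact mul_left_cancel₀ hNne hN2
  rw [← hcval]
  exact ⟨W, hmain⟩



noncomputable def rho (N m : ℕ) : PowerSeries ℤ :=
  PowerSeries.mk fun n => if N ∣ n then ((n/N + m).choose m : ℤ) else 0

noncomputable def sigma' (N m : ℕ) : PowerSeries ℤ :=
  PowerSeries.mk fun n => ((n/N + m).choose m : ℤ)

lemma rho_succ_mul (N : ℕ) (hN : 0 < N) (m : ℕ) :
    rho N (m+1) * (1 - (X : PowerSeries ℤ)^N) = rho N m := by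
  ext n
  rw [mul_sub, mul_one, map_sub, PowerSeries.coeff_mul_X_pow']
  simp only [rho, PowerSeries.coeff_mk]
  by_cases hdvd : N ∣ n
  · obtain ⟨t, rfl⟩ := hdvd
    rcases Nat.eq_zero_or_pos t with rfl | ht
    · rw [Nat.mul_zero]
      rw [if_pos (dvd_zero N), if_neg (show ¬ N ≤ 0 by omega), if_pos (dvd_zero N)]
      simp
    · obtain ⟨t', rfl⟩ : ∃ t', t = t'+1 := ⟨t-1, by omega⟩
      have h1 : N ≤ N * (t'+1) := by nlinarith
      rw [if_pos h1]
      have h2 : N * (t'+1) - N = N * t' := by simp [Nat.mul_succ]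
      have h3 : N ∣ N * (t'+1) - N := by rw [h2]; exact Nat.dvd_mul_right N t'
      rw [if_pos (Nat.dvd_mul_right N _), if_pos h3, if_pos (Nat.dvd_mul_right N (t'+1))]
      have h4 : N * (t'+1) / N = t'+1 := Nat.mul_div_cancel_left _ hN
      have h5 : (N * (t'+1) - N) / N = t' := by rw [h2, Nat.mul_div_cancel_left _ hN]
      rw [h4, h5]
      have hp : (t'+1 + (m+1)).choose (m+1)
          = (t' + (m+1)).choose m + (t'+(m+1)).choose (m+1) := by
        have : t'+1 + (m+1) = (t'+(m+1)) + 1 := by omega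
        rw [this]
        exact Nat.choose_succ_succ (t'+(m+1)) m
      rw [hp]
      have h6 : t' + (m+1) = t'+1+m := by omega
      rw [h6]
      push_cast
      ring
  · rw [if_neg hdvd, if_neg hdvd]
    by_cases hle : N ≤ n
    · rw [if_pos hle, if_neg (show ¬ N ∣ n - N from fun h => hdvd (by
        have : n = (n - N) + N := by omega
        rw [this]; exact dvd_add h (dvd_refl N)))]
      simp
    · rw [if_neg hle]; simp

lemma rho_zero_mul (N : ℕ) (hN : 0 < N) :
    rho N 0 * (1 - (X : PowerSeries ℤ)^N) = 1 := by
  ext n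
  rw [mul_sub, mul_one, map_sub, PowerSeries.coeff_mul_X_pow']
  simp only [rho, PowerSeries.coeff_mk, PowerSeries.coeff_one, Nat.choose_zero_right,
    Nat.cast_one]
  rcases Nat.eq_zero_or_pos n with rfl | hn
  · rw [if_pos (dvd_zero N), if_neg (show ¬ N ≤ 0 by omega), if_pos rfl]
    simp
  · rw [if_neg (show ¬ n = 0 by omega)]
    by_cases hdvd : N ∣ n
    · have hle : N ≤ n := Nat.le_of_dvd hn hdvd
      have hd2 : N ∣ n - N := Nat.dvd_sub hdvd (dvd_refl N)
      rw [if_pos hdvd, if_pos hle, if_pos hd2]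
      simp
    · rw [if_neg hdvd]
      by_cases hle : N ≤ n
      · rw [if_pos hle, if_neg (show ¬ N ∣ n - N from fun h => hdvd (by
          have : n = (n - N) + N := by omega
          rw [this]; exact dvd_add h (dvd_refl N)))]
        simp
      · rw [if_neg hle]; simp

lemma rho_pow (N : ℕ) (hN : 0 < N) (m : ℕ) : (rho N 0)^(m+1) = rho N m := by
  induction m with
  | zero => simp
  | succ m ih =>
    have h1 : rho N (m+1) = rho N m * rho N 0 := by
      calc rho N (m+1) = rho N (m+1) * ((1 - (X : PowerSeries ℤ)^N) * rho N 0) := by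
            rw [mul_comm (1 - (X : PowerSeries ℤ)^N), rho_zero_mul N hN, mul_one]
        _ = (rho N (m+1) * (1 - (X : PowerSeries ℤ)^N)) * rho N 0 := by ring
        _ = rho N m * rho N 0 := by rw [rho_succ_mul N hN]
    rw [h1, ← ih]
    ring

lemma gamma_mul : (PowerSeries.mk fun _ => (1:ℤ)) * (1 - X) = 1 := by
  ext n
  rw [mul_sub, mul_one, map_sub, show (X : PowerSeries ℤ) = X^1 from (pow_one _).symm,
    PowerSeries.coeff_mul_X_pow']
  simp only [PowerSeries.coeff_mk, PowerSeries.coeff_one]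
  rcases Nat.eq_zero_or_pos n with rfl | hn
  · rw [if_neg (show ¬ 1 ≤ 0 by omega), if_pos rfl]; simp
  · rw [if_pos (show (1:ℕ) ≤ n by omega), if_neg (show ¬ n = 0 by omega)]; simp

lemma sigma_mul (N : ℕ) (hN : 0 < N) (m : ℕ) :
    sigma' N (m+1) * (1 - (X : PowerSeries ℤ)) = rho N m := by
  ext n
  rw [mul_sub, mul_one, map_sub, show (X : PowerSeries ℤ) = X^1 from (pow_one _).symm,
    PowerSeries.coeff_mul_X_pow']
  simp only [sigma', rho, PowerSeries.coeff_mk]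
  rcases Nat.eq_zero_or_pos n with rfl | hn
  · rw [if_neg (show ¬ 1 ≤ 0 by omega), if_pos (dvd_zero N)]
    simp
  · obtain ⟨j, rfl⟩ : ∃ j, n = j + 1 := ⟨n-1, by omega⟩
    rw [if_pos (show 1 ≤ j+1 by omega)]
    have hsd := Nat.succ_div (a := j) (b := N)
    have h2 : j + 1 - 1 = j := by omega
    by_cases hdvd : N ∣ j + 1
    · rw [if_pos hdvd]
      have h1 : (j+1)/N = j/N + 1 := by rw [hsd, if_pos hdvd]
      rw [h1, h2]
      have hp : (j/N + 1 + (m+1)).choose (m+1)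
          = (j/N + (m+1)).choose m + (j/N + (m+1)).choose (m+1) := by
        have : j/N + 1 + (m+1) = (j/N + (m+1)) + 1 := by omega
        rw [this]
        exact Nat.choose_succ_succ _ m
      rw [hp]
      have h3 : j/N + 1 + m = j/N + (m+1) := by omega
      rw [h3]
      push_cast
      ring
    · rw [if_neg hdvd]
      have h1 : (j+1)/N = j/N := by simp [hsd, hdvd]
      rw [h1, h2]
      ring

lemma gamma_rho (N : ℕ) (hN : 0 < N) (m : ℕ) :
    (PowerSeries.mk fun _ => (1:ℤ)) * rho N m = sigma' N (m+1) := by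
  calc (PowerSeries.mk fun _ => (1:ℤ)) * rho N m
      = (PowerSeries.mk fun _ => (1:ℤ)) * (sigma' N (m+1) * (1 - X)) := by rw [sigma_mul N hN]
    _ = sigma' N (m+1) * ((PowerSeries.mk fun _ => (1:ℤ)) * (1 - X)) := by ring
    _ = sigma' N (m+1) := by rw [gamma_mul, mul_one]

lemma coeff_poly_mul_rho_bound (N m : ℕ) (Wp : Polynomial ℤ) (n : ℕ) :
    |PowerSeries.coeff n ((Wp : PowerSeries ℤ) * rho N m)|
      ≤ (∑ i ∈ Wp.support, |Wp.coeff i|) * ((n/N + m).choose m : ℤ) := by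
  set B : ℤ := ((n/N + m).choose m : ℤ) with hB
  have hB0 : 0 ≤ B := by positivity
  rw [PowerSeries.coeff_mul]
  refine le_trans (Finset.abs_sum_le_sum_abs _ _) ?_
  have step1 : ∀ p ∈ Finset.HasAntidiagonal.antidiagonal n,
      |PowerSeries.coeff p.1 (Wp : PowerSeries ℤ) * PowerSeries.coeff p.2 (rho N m)|
        ≤ |Wp.coeff p.1| * B := by
    intro p hp
    rw [abs_mul, Polynomial.coeff_coe]
    apply mul_le_mul_of_nonneg_left _ (abs_nonneg _)
    have hp2 : p.2 ≤ n := by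
      have := Finset.HasAntidiagonal.mem_antidiagonal.1 hp
      omega
    simp only [rho, PowerSeries.coeff_mk]
    by_cases hdvd : N ∣ p.2
    · rw [if_pos hdvd, abs_of_nonneg (by positivity)]
      rw [hB]
      exact_mod_cast Nat.choose_le_choose m (by
        have := Nat.div_le_div_right (c := N) hp2
        omega)
    · rw [if_neg hdvd]; simpa using hB0
  refine le_trans (Finset.sum_le_sum step1) ?_
  rw [← Finset.sum_mul]
  apply mul_le_mul_of_nonneg_right _ hB0
  have e1 : ∑ p ∈ Finset.HasAntidiagonal.antidiagonal n, |Wp.coeff p.1|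
      = ∑ i ∈ Finset.range (n+1), |Wp.coeff i| := by
    rw [Finset.Nat.sum_antidiagonal_eq_sum_range_succ (fun i j => |Wp.coeff i|)]
  rw [e1]
  have e2 : ∑ i ∈ Finset.range (n+1), |Wp.coeff i|
      = ∑ i ∈ (Finset.range (n+1)).filter (fun i => Wp.coeff i ≠ 0), |Wp.coeff i| := by
    symm
    apply Finset.sum_filter_of_ne
    intro i _ h hc
    exact h (by rw [hc]; simp)
  rw [e2]
  apply Finset.sum_le_sum_of_subset_of_nonneg
  · intro i hi
    rw [Finset.mem_filter] at hi
    exact Polynomial.mem_support_iff.2 hi.2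
  · intro i _ _
    exact abs_nonneg _




lemma asc_prod (t : ℕ) : ∀ m : ℕ, (t+1).ascFactorial m = ∏ i ∈ Finset.range m, (t+1+i)
  | 0 => by simp
  | (m+1) => by
    rw [Nat.ascFactorial_succ, Finset.prod_range_succ, asc_prod t m]
    ring

lemma fact_choose_prod (t m : ℕ) :
    m.factorial * (t + m).choose m = ∏ i ∈ Finset.range m, (t+1+i) := by
  rw [← asc_prod, Nat.ascFactorial_eq_factorial_mul_choose]

lemma factor_tendsto (N a : ℕ) (hN : 0 < N) (ha : 1 ≤ a) :
    Tendsto (fun n : ℕ => ((N : ℝ) * ((n/N : ℕ) + a)) / n) atTop (nhds 1) := by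
  apply tendsto_of_tendsto_of_tendsto_of_le_of_le' (g := fun _ : ℕ => (1:ℝ))
    (h := fun n : ℕ => 1 + ((N : ℝ) * a) / n)
  · exact tendsto_const_nhds
  · have h0 : Tendsto (fun n : ℕ => ((N : ℝ) * a) / n) atTop (nhds 0) :=
      tendsto_const_div_atTop_nhds_zero_nat _
    simpa using tendsto_const_nhds.add h0
  · filter_upwards [eventually_ge_atTop 1] with n hn
    have hn' : (0:ℝ) < n := by exact_mod_cast hn
    rw [le_div_iff₀ hn', one_mul]
    have h1 : (N:ℝ) * ((n/N : ℕ) : ℝ) + ((n % N : ℕ) : ℝ) = n := by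
      exact_mod_cast Nat.div_add_mod n N
    have h2 : ((n % N : ℕ) : ℝ) < N := by exact_mod_cast Nat.mod_lt n hN
    have ha' : (1:ℝ) ≤ (a:ℝ) := by exact_mod_cast ha
    have expand : (N:ℝ) * (((n/N : ℕ) : ℝ) + a) = (N:ℝ) * ((n/N : ℕ) : ℝ) + (N:ℝ)*a := by ring
    have hNa : (1:ℝ) ≤ (N:ℝ) := by exact_mod_cast hN
    have hNle : (N:ℝ) ≤ (N:ℝ) * a := by nlinarith
    linarith
  · filter_upwards [eventually_ge_atTop 1] with n hn
    have hn' : (0:ℝ) < n := by exact_mod_cast hn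
    have key : (n/N) * N ≤ n := Nat.div_mul_le_self n N
    have h1 : ((n/N : ℕ) : ℝ) * N ≤ n := by exact_mod_cast key
    have expand : (N:ℝ) * (((n/N : ℕ) : ℝ) + a) = ((n/N : ℕ) : ℝ) * N + (N:ℝ)*a := by ring
    have step : ((N : ℝ) * ((n/N : ℕ) + a)) / n ≤ ((n:ℝ) + (N:ℝ)*a)/n := by
      gcongr
      linarith
    have heq : ((n:ℝ) + (N:ℝ)*a)/n = 1 + ((N:ℝ)*a)/n := by
      rw [add_div, div_self hn'.ne']
    exact le_trans step (le_of_eq heq)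

lemma main_tendsto (N m : ℕ) (hN : 0 < N) :
    Tendsto (fun n : ℕ =>
      ((m.factorial : ℝ) * ((n/N + m).choose m) * (N:ℝ)^m) / (n:ℝ)^m) atTop (nhds 1) := by
  have key : ∀ n : ℕ, 1 ≤ n →
      ((m.factorial : ℝ) * ((n/N + m).choose m) * (N:ℝ)^m) / (n:ℝ)^m
        = ∏ i ∈ Finset.range m, ((N : ℝ) * ((n/N : ℕ) + (1+i))) / n := by
    intro n hn
    have hnum : (m.factorial : ℝ) * ((n/N + m).choose m)
        = ∏ i ∈ Finset.range m, (((n/N : ℕ) : ℝ) + (1+i)) := by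
      calc (m.factorial : ℝ) * ((n/N + m).choose m)
          = ((m.factorial * (n/N + m).choose m : ℕ) : ℝ) := by push_cast; ring
        _ = ((∏ i ∈ Finset.range m, (n/N+1+i) : ℕ) : ℝ) := by rw [fact_choose_prod]
        _ = ∏ i ∈ Finset.range m, (((n/N : ℕ) : ℝ) + (1+i)) := by
            push_cast
            exact Finset.prod_congr rfl (fun i _ => by ring)
    rw [Finset.prod_div_distrib, Finset.prod_const, Finset.card_range,
      Finset.prod_mul_distrib, Finset.prod_const, Finset.card_range, hnum]
    ring
  have hprod : ∀ M : ℕ, Tendsto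
      (fun n : ℕ => ∏ i ∈ Finset.range M, ((N : ℝ) * ((n/N : ℕ) + (1+i))) / n)
      atTop (nhds 1) := by
    intro M
    induction M with
    | zero => simpa using tendsto_const_nhds
    | succ M ih =>
      simp only [Finset.prod_range_succ]
      simpa using ih.mul (factor_tendsto N (1+M) hN (by omega))
  have hprod := hprod m
  apply hprod.congr'
  filter_upwards [eventually_ge_atTop 1] with n hn
  exact (key n hn).symm

lemma err_tendsto (N m : ℕ) (hN : 0 < N) (C : ℝ) :
    Tendsto (fun n : ℕ => C * ((n/N + m).choose m : ℝ) / (n:ℝ)^(m+1)) atTop (nhds 0) := by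
  apply squeeze_zero_norm' (a := fun n : ℕ => |C| * ((n:ℝ) + m)^m / (n:ℝ)^(m+1))
  · filter_upwards [eventually_ge_atTop 1] with n hn
    have hn' : (0:ℝ) < n := by exact_mod_cast hn
    rw [Real.norm_eq_abs, abs_div, abs_mul]
    rw [abs_of_nonneg (by positivity : (0:ℝ) ≤ ((n/N + m).choose m : ℝ)),
      abs_of_nonneg (by positivity : (0:ℝ) ≤ (n:ℝ)^(m+1))]
    gcongr
    have h1 : (n/N + m).choose m ≤ (n/N + m)^m := Nat.choose_le_pow _ _
    have h2 : ((n/N + m : ℕ) : ℝ) ≤ (n:ℝ) + m := by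
      have : n/N ≤ n := Nat.div_le_self n N
      push_cast
      have : ((n/N : ℕ) : ℝ) ≤ n := by exact_mod_cast this
      linarith
    calc ((n/N + m).choose m : ℝ) ≤ (((n/N + m)^m : ℕ) : ℝ) := by exact_mod_cast h1
      _ = (((n/N + m : ℕ) : ℝ))^m := by push_cast; ring
      _ ≤ ((n:ℝ) + m)^m := by
          apply pow_le_pow_left₀ (by positivity) h2
  · have heq : ∀ n : ℕ, 1 ≤ n →
        |C| * ((n:ℝ) + m)^m / (n:ℝ)^(m+1) = |C| * (((n:ℝ) + m)/n)^m * (1/n) := by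
      intro n hn
      have hn' : (0:ℝ) < n := by exact_mod_cast hn
      rw [div_pow, pow_succ, one_div]
      field_simp
    have h1 : Tendsto (fun n : ℕ => (((n:ℝ) + m)/n)^m) atTop (nhds 1) := by
      have hb : Tendsto (fun n : ℕ => ((n:ℝ) + m)/n) atTop (nhds 1) := by
        have : ∀ n : ℕ, 1 ≤ n → ((n:ℝ) + m)/n = 1 + (m:ℝ)/n := by
          intro n hn
          have hn' : (0:ℝ) < n := by exact_mod_cast hn
          field_simp
        have h0 : Tendsto (fun n : ℕ => 1 + (m:ℝ)/n) atTop (nhds 1) := by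
          have := tendsto_const_div_atTop_nhds_zero_nat (m:ℝ)
          simpa using tendsto_const_nhds.add this
        apply h0.congr'
        filter_upwards [eventually_ge_atTop 1] with n hn
        exact (this n hn).symm
      simpa using hb.pow m
    have h2 : Tendsto (fun n : ℕ => |C| * (((n:ℝ) + m)/n)^m * (1/n)) atTop (nhds 0) := by
      have hc : Tendsto (fun n : ℕ => (1:ℝ)/n) atTop (nhds 0) :=
        tendsto_const_div_atTop_nhds_zero_nat 1
      have := ((tendsto_const_nhds (x := |C|) (f := atTop)).mul h1).mul hc
      simpa using this
    apply h2.congr'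
    filter_upwards [eventually_ge_atTop 1] with n hn
    exact (heq n hn).symm

/-- With `D = (1 − q^k)/(q^s;q)_{L+1}` in ℤ[[q]] (characterized by the hypothesis `hD`,
since `(q^s;q)_{L+1}` has constant term 1, hence is invertible), the coefficients
`d_k(n) = coeff n D` satisfy `d_k(n) ~ k·n^{L−1}/((L−1)!·s·(s+1)···(s+L))` as `n → ∞`,
where `s·(s+1)···(s+L) = ∏_{i=0}^{L} (s+i)`. -/
theorem stmt_18 (s L k : ℕ) (hs : 1 ≤ s) (hL : 3 ≤ L) (hk : 1 ≤ k)
    (D : PowerSeries ℤ)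
    (hD : D * ∏ i ∈ Finset.range (L + 1), (1 - (X : PowerSeries ℤ) ^ (s + i))
        = 1 - X ^ k) :
    Filter.Tendsto
      (fun n : ℕ =>
        ((coeff n D : ℤ) : ℝ) *
          (((L - 1).factorial * ∏ i ∈ Finset.range (L + 1), (s + i) : ℕ) : ℝ) /
          ((k : ℝ) * (n : ℝ) ^ (L - 1)))
      Filter.atTop (nhds 1) := by
  obtain ⟨j, rfl⟩ : ∃ j, L = j + 3 := ⟨L - 3, by omega⟩
  have hL1 : j + 3 - 1 = j + 2 := by omega
  simp only [hL1]
  set N := ∏ i ∈ Finset.range (j+3+1), (s+i) with hNdef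
  have hNpos : 0 < N := Finset.prod_pos (fun i _ => by omega)
  have hkpos : (0:ℝ) < k := by exact_mod_cast hk
  have hdvd : ∀ i ∈ Finset.range (j+3+1), (s+i) ∣ N := fun i hi =>
    hNdef ▸ Finset.dvd_prod_of_mem _ hi
  obtain ⟨W, hW⟩ := master s (j+3) k hs (by omega) hk N hNdef
  simp only [show j+3-2 = j+1 from by omega] at hW
  set c : ℤ := (k : ℤ) * (N:ℤ)^(j+1) with hcdef
  -- cast helper
  have hcast1 : ∀ M : ℕ, ((1 - Polynomial.X^M : Polynomial ℤ) : PowerSeries ℤ)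
      = 1 - (X : PowerSeries ℤ)^M := by
    intro M
    rw [← Polynomial.coeToPowerSeries.ringHom_apply, map_sub, map_one, map_pow,
      Polynomial.coeToPowerSeries.ringHom_apply, Polynomial.coe_X]
  have hcast2 : ∀ M : ℕ, ((Polynomial.X^M - 1 : Polynomial ℤ) : PowerSeries ℤ)
      = (X : PowerSeries ℤ)^M - 1 := by
    intro M
    rw [← Polynomial.coeToPowerSeries.ringHom_apply, map_sub, map_one, map_pow,
      Polynomial.coeToPowerSeries.ringHom_apply, Polynomial.coe_X]
  have hfac : ∀ i ∈ Finset.range (j+3+1),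
      (1 - (X : PowerSeries ℤ)^(s+i)) * ((geomP (s+i) (N/(s+i)) : Polynomial ℤ) : PowerSeries ℤ)
        = 1 - (X : PowerSeries ℤ)^N := by
    intro i hi
    have hpoly : (1 - Polynomial.X^(s+i)) * geomP (s+i) (N/(s+i))
        = (1 - Polynomial.X^N : Polynomial ℤ) := by
      have h := geomP_mul (s+i) (N/(s+i))
      rw [Nat.mul_div_cancel' (hdvd i hi)] at h
      linear_combination -h
    rw [← hcast1 (s+i), ← Polynomial.coe_mul, hpoly, hcast1]
  -- power series master identity
  have hE : D * (1 - (X : PowerSeries ℤ)^N)^(j+3+1)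
      = (1 - (X : PowerSeries ℤ)^N) *
        (PowerSeries.C c * ((geomP 1 N : Polynomial ℤ) : PowerSeries ℤ)
          + ((X : PowerSeries ℤ)^N - 1) * ((W : Polynomial ℤ) : PowerSeries ℤ)) := by
    have hprodfac : (1 - (X : PowerSeries ℤ)^N)^(j+3+1)
        = (∏ i ∈ Finset.range (j+3+1), (1 - (X : PowerSeries ℤ)^(s+i)))
          * ∏ i ∈ Finset.range (j+3+1), ((geomP (s+i) (N/(s+i)) : Polynomial ℤ) : PowerSeries ℤ) := by
      rw [← Finset.prod_mul_distrib]
      rw [Finset.prod_congr rfl hfac, Finset.prod_const, Finset.card_range]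
    have hcoeprod : ((∏ i ∈ Finset.range (j+3+1), geomP (s+i) (N/(s+i)) : Polynomial ℤ) : PowerSeries ℤ)
        = ∏ i ∈ Finset.range (j+3+1), ((geomP (s+i) (N/(s+i)) : Polynomial ℤ) : PowerSeries ℤ) := by
      rw [← Polynomial.coeToPowerSeries.ringHom_apply, map_prod]
      simp only [Polynomial.coeToPowerSeries.ringHom_apply]
    calc D * (1 - (X : PowerSeries ℤ)^N)^(j+3+1)
        = (D * ∏ i ∈ Finset.range (j+3+1), (1 - (X : PowerSeries ℤ)^(s+i)))
            * ∏ i ∈ Finset.range (j+3+1), ((geomP (s+i) (N/(s+i)) : Polynomial ℤ) : PowerSeries ℤ) := by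
          rw [hprodfac]; ring
      _ = (1 - (X : PowerSeries ℤ)^k)
            * ∏ i ∈ Finset.range (j+3+1), ((geomP (s+i) (N/(s+i)) : Polynomial ℤ) : PowerSeries ℤ) := by
          rw [hD]
      _ = (((1 - Polynomial.X^k) * ∏ i ∈ Finset.range (j+3+1), geomP (s+i) (N/(s+i)) : Polynomial ℤ) : PowerSeries ℤ) := by
          rw [Polynomial.coe_mul, hcast1, hcoeprod]
      _ = (((1 - Polynomial.X ^ N) *
          (Polynomial.C c * geomP 1 N + (Polynomial.X ^ N - 1) * W) : Polynomial ℤ) : PowerSeries ℤ) := by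
          rw [hW]
      _ = (1 - (X : PowerSeries ℤ)^N) *
          (PowerSeries.C c * ((geomP 1 N : Polynomial ℤ) : PowerSeries ℤ)
            + ((X : PowerSeries ℤ)^N - 1) * ((W : Polynomial ℤ) : PowerSeries ℤ)) := by
          rw [Polynomial.coe_mul, hcast1, Polynomial.coe_add, Polynomial.coe_mul,
            Polynomial.coe_mul, hcast2, Polynomial.coe_C]
  -- invert (1 - X^N)
  have hβ := rho_zero_mul N hNpos
  have hb1 : (1 - (X : PowerSeries ℤ)^N) * (rho N 0)^(j+3+1) = (rho N 0)^(j+3) := by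
    calc (1 - (X : PowerSeries ℤ)^N) * (rho N 0)^(j+3+1)
        = (rho N 0 * (1 - (X : PowerSeries ℤ)^N)) * (rho N 0)^(j+3) := by ring
      _ = (rho N 0)^(j+3) := by rw [hβ, one_mul]
  have hb2 : (1 - (X : PowerSeries ℤ)^N)^2 * (rho N 0)^(j+3+1) = (rho N 0)^(j+2) := by
    calc (1 - (X : PowerSeries ℤ)^N)^2 * (rho N 0)^(j+3+1)
        = (rho N 0 * (1 - (X : PowerSeries ℤ)^N))^2 * (rho N 0)^(j+2) := by ring
      _ = (rho N 0)^(j+2) := by rw [hβ]; ring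
  have h1X : (1 - (X : PowerSeries ℤ)) ≠ 0 := by
    intro h
    have := congrArg (PowerSeries.constantCoeff) h
    simp at this
  have hgb : ((geomP 1 N : Polynomial ℤ) : PowerSeries ℤ) * rho N 0
      = PowerSeries.mk (fun _ => (1:ℤ)) := by
    apply mul_right_cancel₀ h1X
    have hpoly1N : (1 - (X : PowerSeries ℤ)) * ((geomP 1 N : Polynomial ℤ) : PowerSeries ℤ)
        = 1 - (X : PowerSeries ℤ)^N := by
      have h := geomP_mul 1 N
      rw [pow_one] at h
      have hpoly : (1 - Polynomial.X) * geomP 1 N = (1 - Polynomial.X^(1*N) : Polynomial ℤ) := by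
        linear_combination -h
      rw [one_mul] at hpoly
      calc (1 - (X : PowerSeries ℤ)) * ((geomP 1 N : Polynomial ℤ) : PowerSeries ℤ)
          = (((1 - Polynomial.X) * geomP 1 N : Polynomial ℤ) : PowerSeries ℤ) := by
            rw [Polynomial.coe_mul, show ((1 - Polynomial.X : Polynomial ℤ) : PowerSeries ℤ) = 1 - (X : PowerSeries ℤ) from by simpa using hcast1 1]
        _ = 1 - (X : PowerSeries ℤ)^N := by rw [hpoly, hcast1]
    calc ((geomP 1 N : Polynomial ℤ) : PowerSeries ℤ) * rho N 0 * (1 - (X : PowerSeries ℤ))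
        = ((1 - (X : PowerSeries ℤ)) * ((geomP 1 N : Polynomial ℤ) : PowerSeries ℤ)) * rho N 0 := by
          ring
      _ = (1 - (X : PowerSeries ℤ)^N) * rho N 0 := by rw [hpoly1N]
      _ = 1 := by rw [mul_comm, hβ]
      _ = PowerSeries.mk (fun _ => (1:ℤ)) * (1 - (X : PowerSeries ℤ)) := gamma_mul.symm
  have hDeq : D = PowerSeries.C c * sigma' N (j+2) - ((W : Polynomial ℤ) : PowerSeries ℤ) * rho N (j+1) := by
    have hBinv : (1 - (X : PowerSeries ℤ)^N)^(j+3+1) * (rho N 0)^(j+3+1) = 1 := by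
      rw [← mul_pow, mul_comm (1 - (X : PowerSeries ℤ)^N), hβ, one_pow]
    calc D = D * ((1 - (X : PowerSeries ℤ)^N)^(j+3+1) * (rho N 0)^(j+3+1)) := by
          rw [hBinv, mul_one]
      _ = (D * (1 - (X : PowerSeries ℤ)^N)^(j+3+1)) * (rho N 0)^(j+3+1) := by ring
      _ = ((1 - (X : PowerSeries ℤ)^N) *
            (PowerSeries.C c * ((geomP 1 N : Polynomial ℤ) : PowerSeries ℤ)
              + ((X : PowerSeries ℤ)^N - 1) * ((W : Polynomial ℤ) : PowerSeries ℤ)))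
            * (rho N 0)^(j+3+1) := by rw [hE]
      _ = PowerSeries.C c * ((geomP 1 N : Polynomial ℤ) : PowerSeries ℤ)
            * ((1 - (X : PowerSeries ℤ)^N) * (rho N 0)^(j+3+1))
          - ((W : Polynomial ℤ) : PowerSeries ℤ)
            * ((1 - (X : PowerSeries ℤ)^N)^2 * (rho N 0)^(j+3+1)) := by ring
      _ = PowerSeries.C c * ((geomP 1 N : Polynomial ℤ) : PowerSeries ℤ) * (rho N 0)^(j+3)
          - ((W : Polynomial ℤ) : PowerSeries ℤ) * (rho N 0)^(j+2) := by rw [hb1, hb2]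
      _ = PowerSeries.C c * (((geomP 1 N : Polynomial ℤ) : PowerSeries ℤ) * rho N 0) * (rho N 0)^(j+2)
          - ((W : Polynomial ℤ) : PowerSeries ℤ) * (rho N 0)^(j+2) := by ring
      _ = PowerSeries.C c * sigma' N (j+2) - ((W : Polynomial ℤ) : PowerSeries ℤ) * rho N (j+1) := by
          rw [hgb, show (j+2) = (j+1)+1 from rfl, rho_pow N hNpos (j+1), mul_assoc, gamma_rho N hNpos (j+1)]
  have hcoeff : ∀ n : ℕ, PowerSeries.coeff n D
      = c * ((n/N + (j+2)).choose (j+2) : ℤ)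
        - PowerSeries.coeff n (((W : Polynomial ℤ) : PowerSeries ℤ) * rho N (j+1)) := by
    intro n
    rw [hDeq, map_sub, PowerSeries.coeff_C_mul]
    simp only [sigma', PowerSeries.coeff_mk]
  -- analysis
  set Kc : ℤ := ∑ i ∈ W.support, |W.coeff i| with hKc
  set A : ℝ := (((j+2).factorial * N : ℕ) : ℝ) with hA
  have hA0 : 0 ≤ A := by positivity
  set R : ℕ → ℤ := fun n => PowerSeries.coeff n (((W : Polynomial ℤ) : PowerSeries ℤ) * rho N (j+1)) with hR
  have hKc0 : (0:ℤ) ≤ Kc := Finset.sum_nonneg (fun i _ => abs_nonneg _)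
  have hmain := main_tendsto N (j+2) hNpos
  have herr : Tendsto (fun n : ℕ => (R n : ℝ) * A / ((k:ℝ) * (n:ℝ)^(j+2))) atTop (nhds 0) := by
    apply squeeze_zero_norm' (a := fun n : ℕ =>
      ((Kc:ℝ) * A / k) * ((n/N + (j+1)).choose (j+1) : ℝ) / (n:ℝ)^((j+1)+1))
    · filter_upwards [eventually_ge_atTop 1] with n hn
      have hn' : (0:ℝ) < n := by exact_mod_cast hn
      have hb := coeff_poly_mul_rho_bound N (j+1) W n
      have hbR : |(R n : ℝ)| ≤ (Kc:ℝ) * ((n/N + (j+1)).choose (j+1) : ℝ) := by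
        rw [← Int.cast_abs]
        have : ((|R n| : ℤ) : ℝ) ≤ ((Kc * ((n/N + (j+1)).choose (j+1) : ℤ) : ℤ) : ℝ) := by
          exact_mod_cast hb
        calc ((|R n| : ℤ) : ℝ) ≤ ((Kc * ((n/N + (j+1)).choose (j+1) : ℤ) : ℤ) : ℝ) := this
          _ = (Kc:ℝ) * ((n/N + (j+1)).choose (j+1) : ℝ) := by push_cast; ring
      rw [Real.norm_eq_abs, abs_div, abs_mul]
      rw [abs_of_nonneg hA0, abs_of_nonneg (by positivity : (0:ℝ) ≤ (k:ℝ) * (n:ℝ)^(j+2))]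
      have step1 : |(R n : ℝ)| * A / ((k:ℝ) * (n:ℝ)^(j+2))
          ≤ ((Kc:ℝ) * ((n/N + (j+1)).choose (j+1) : ℝ)) * A / ((k:ℝ) * (n:ℝ)^(j+2)) := by
        gcongr
      refine step1.trans (le_of_eq ?_)
      have hkne : (k:ℝ) ≠ 0 := ne_of_gt hkpos
      have hnne : (n:ℝ) ≠ 0 := ne_of_gt hn'
      field_simp
    · exact err_tendsto N (j+1) hNpos ((Kc:ℝ) * A / k)
  have hfinal := hmain.sub herr
  rw [sub_zero] at hfinal
  apply hfinal.congr'
  filter_upwards [eventually_ge_atTop 1] with n hn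
  have hn' : (0:ℝ) < n := by exact_mod_cast hn
  have hkne : (k:ℝ) ≠ 0 := ne_of_gt hkpos
  have hnne : (n:ℝ) ≠ 0 := ne_of_gt hn'
  rw [hcoeff n]
  have hcastc : ((c * ((n/N + (j+2)).choose (j+2) : ℤ) - R n : ℤ) : ℝ)
      = (k:ℝ) * (N:ℝ)^(j+1) * ((n/N + (j+2)).choose (j+2) : ℝ) - (R n : ℝ) := by
    rw [hcdef]; push_cast; ring
  rw [hcastc, hA]
  push_cast
  field_simp
  ring
end
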